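/- arXiv:1610.05988 — 8 statements merged into one kernel-verified Lean document; each statement's English description precedes it below -/
import Mathlib

section
/- Let m, n ≥ 1, κ₁ ≥ 1 and κ₂ ≥ 1 be integers and let K(λ) be a κ₁m × (κ₂+1)n matrix pencil over ℝ satisfying K(λ)·(Λ_{κ₂}(λ) ⊗ I_n) = 0_{κ₁m × n}. Then there exists a constant matrix C ∈ ℝ^{κ₁m × κ₂n} such that K(λ) = C·(L_{κ₂}(λ) ⊗ I_n). -/
open Matrix Polynomial
open scoped Kronecker

noncomputable section

/-- `Λ_j(λ)` as a `(j+1) × 1` matrix of real polynomials, with `i`-th entry `λ^{j-i}`. -/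
def Lam (j : ℕ) : Matrix (Fin (j + 1)) (Fin 1) (Polynomial ℝ) :=
  Matrix.of fun i _ => X ^ (j - (i : ℕ))

/-- `L_κ(λ)`, the `κ × (κ+1)` pencil with `-1` on the diagonal and `λ` on the superdiagonal. -/
def Lk (κ : ℕ) : Matrix (Fin κ) (Fin (κ + 1)) (Polynomial ℝ) :=
  Matrix.of fun i j => if (j : ℕ) = (i : ℕ) then -1 else if (j : ℕ) = (i : ℕ) + 1 then X else 0

/-- The matrix pencil `λ·A + B` as a matrix of real polynomials. -/
def pencilM {ρ γ : Type*} (A B : Matrix ρ γ ℝ) : Matrix ρ γ (Polynomial ℝ) :=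
  Matrix.of fun i j => X * C (A i j) + C (B i j)

/-- The matrix polynomial `Σ_{i=0}^k Pc i · λ^i` as a matrix of real polynomials. -/
def polyOf (m n k : ℕ) (Pc : ℕ → Matrix (Fin m) (Fin n) ℝ) :
    Matrix (Fin m) (Fin n) (Polynomial ℝ) :=
  Matrix.of fun i j => ∑ t ∈ Finset.range (k + 1), X ^ t * C (Pc t i j)

lemma sum_ite_single' {N : ℕ} {β : Type*} [AddCommMonoid β] (f : Fin N → β)
    (P : Fin N → Prop) [DecidablePred P] (t : Fin N)
    (h : ∀ j, P j ↔ j = t) : ∑ j, (if P j then f j else 0) = f t := by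
  rw [Finset.sum_congr rfl fun j _ => if_congr (h j) rfl rfl]
  simp

lemma sum_ite_none' {N : ℕ} {β : Type*} [AddCommMonoid β] (f : Fin N → β)
    (P : Fin N → Prop) [DecidablePred P]
    (h : ∀ j, ¬ P j) : ∑ j, (if P j then f j else 0) = 0 := by
  rw [Finset.sum_congr rfl fun j _ => if_neg (h j)]
  simp

theorem stmt0 (m n κ₁ κ₂ : ℕ) (hm : 1 ≤ m) (hn : 1 ≤ n) (hκ₁ : 1 ≤ κ₁) (hκ₂ : 1 ≤ κ₂)
    (Kx Ky : Matrix (Fin κ₁ × Fin m) (Fin (κ₂ + 1) × Fin n) ℝ)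
    (hK : pencilM Kx Ky * (Lam κ₂ ⊗ₖ (1 : Matrix (Fin n) (Fin n) (Polynomial ℝ))) = 0) :
    ∃ M : Matrix (Fin κ₁ × Fin m) (Fin κ₂ × Fin n) ℝ,
      pencilM Kx Ky = M.map C * (Lk κ₂ ⊗ₖ (1 : Matrix (Fin n) (Fin n) (Polynomial ℝ))) := by
  classical
  have key : ∀ (r : Fin κ₁ × Fin m) (c : Fin n),
      ∑ j : Fin (κ₂ + 1), (X * C (Kx r (j, c)) + C (Ky r (j, c))) * X ^ (κ₂ - (j : ℕ)) = 0 := by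
    intro r c
    have h := congrFun (congrFun hK r) (⟨0, Nat.one_pos⟩, c)
    simp only [Matrix.mul_apply, Fintype.sum_prod_type, pencilM, Lam, Matrix.kroneckerMap_apply,
      Matrix.one_apply, Matrix.of_apply, mul_ite, mul_one, mul_zero, Finset.sum_ite_eq',
      Finset.mem_univ, if_true, Matrix.zero_apply] at h
    exact h
  have coef : ∀ (r : Fin κ₁ × Fin m) (c : Fin n) (d : ℕ),
      ∑ j : Fin (κ₂ + 1), ((if d = κ₂ - (j : ℕ) + 1 then Kx r (j, c) else 0)
        + (if d = κ₂ - (j : ℕ) then Ky r (j, c) else 0)) = 0 := by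
    intro r c d
    have h := congrArg (fun p => Polynomial.coeff p d) (key r c)
    simp only [Polynomial.finset_sum_coeff, add_mul, Polynomial.coeff_add, Polynomial.coeff_zero,
      mul_assoc, mul_comm X, ← pow_succ, coeff_C_mul, coeff_X_pow, mul_ite, mul_one,
      mul_zero] at h
    exact h
  -- split the coefficient sums
  have coef2 : ∀ (r : Fin κ₁ × Fin m) (c : Fin n) (d : ℕ),
      (∑ j : Fin (κ₂ + 1), if d = κ₂ - (j : ℕ) + 1 then Kx r (j, c) else 0)
        + (∑ j : Fin (κ₂ + 1), if d = κ₂ - (j : ℕ) then Ky r (j, c) else 0) = 0 := by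
    intro r c d
    rw [← Finset.sum_add_distrib]
    exact coef r c d
  have h0 : ∀ (r : Fin κ₁ × Fin m) (c : Fin n), Kx r (0, c) = 0 := by
    intro r c
    have h := coef2 r c (κ₂ + 1)
    rw [sum_ite_single' _ _ (0 : Fin (κ₂ + 1))
        (fun j => by have := j.isLt; simp only [Fin.ext_iff, Fin.val_zero]; omega),
      sum_ite_none' _ _ (fun j => by have := j.isLt; omega), add_zero] at h
    exact h
  have hlast : ∀ (r : Fin κ₁ × Fin m) (c : Fin n), Ky r (⟨κ₂, by omega⟩, c) = 0 := by
    intro r c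
    have h := coef2 r c 0
    rw [sum_ite_none' _ _ (fun j => by have := j.isLt; omega),
      sum_ite_single' _ _ (⟨κ₂, by omega⟩ : Fin (κ₂ + 1))
        (fun j => by have := j.isLt; simp only [Fin.ext_iff]; omega), zero_add] at h
    exact h
  have hstep : ∀ (r : Fin κ₁ × Fin m) (c : Fin n) (i : Fin κ₂),
      Kx r (i.succ, c) + Ky r (i.castSucc, c) = 0 := by
    intro r c i
    have hi := i.isLt
    have h := coef2 r c (κ₂ - (i : ℕ))
    rw [sum_ite_single' _ _ (i.succ)
        (fun j => by have := j.isLt; simp only [Fin.ext_iff, Fin.val_succ]; omega),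
      sum_ite_single' _ _ (i.castSucc)
        (fun j => by have := j.isLt; simp only [Fin.ext_iff, Fin.coe_castSucc]; omega)] at h
    exact h
  refine ⟨Matrix.of fun r p => Kx r (p.1.succ, p.2), ?_⟩
  refine Matrix.ext fun r p => ?_
  obtain ⟨j, c⟩ := p
  have hRHS : (Matrix.map (Matrix.of fun r (p : Fin κ₂ × Fin n) => Kx r (p.1.succ, p.2)) C
      * (Lk κ₂ ⊗ₖ (1 : Matrix (Fin n) (Fin n) (Polynomial ℝ)))) r (j, c)
      = ∑ i : Fin κ₂, ((if (j : ℕ) = (i : ℕ) then -C (Kx r (i.succ, c)) else 0)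
        + (if (j : ℕ) = (i : ℕ) + 1 then X * C (Kx r (i.succ, c)) else 0)) := by
    simp only [Matrix.mul_apply, Fintype.sum_prod_type, Matrix.map_apply, Matrix.of_apply,
      Lk, Matrix.kroneckerMap_apply, Matrix.one_apply, mul_ite, mul_one, mul_zero,
      Finset.sum_ite_eq', Finset.mem_univ, if_true]
    refine Finset.sum_congr rfl fun i _ => ?_
    split_ifs with h1 h2 <;> first | omega | ring
  rw [hRHS, Finset.sum_add_distrib]
  show X * C (Kx r (j, c)) + C (Ky r (j, c)) = _
  rcases Nat.lt_or_ge (j : ℕ) κ₂ with hj | hj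
  · rw [sum_ite_single' _ _ (⟨(j : ℕ), hj⟩ : Fin κ₂)
      (fun i => by simp only [Fin.ext_iff]; omega)]
    have hsucc : (⟨(j : ℕ), hj⟩ : Fin κ₂).castSucc = j := by
      simp only [Fin.ext_iff, Fin.coe_castSucc]
    have e2 := hstep r c ⟨(j : ℕ), hj⟩
    rw [hsucc] at e2
    have eK : Ky r (j, c) = - Kx r ((⟨(j : ℕ), hj⟩ : Fin κ₂).succ, c) := by linarith
    rcases Nat.eq_zero_or_pos (j : ℕ) with hj0 | hj0
    · rw [sum_ite_none' _ _ (fun i => by omega)]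
      have hj' : j = (0 : Fin (κ₂ + 1)) := by simp only [Fin.ext_iff, Fin.val_zero]; exact hj0
      have e1 : Kx r (j, c) = 0 := by rw [hj']; exact h0 r c
      rw [e1, eK, map_neg, map_zero, mul_zero, zero_add, add_zero]
    · rw [sum_ite_single' _ _ (⟨(j : ℕ) - 1, by omega⟩ : Fin κ₂)
        (fun i => by have := i.isLt; simp only [Fin.ext_iff]; omega)]
      have e3 : (⟨(j : ℕ) - 1, by omega⟩ : Fin κ₂).succ = j := by
        simp only [Fin.ext_iff, Fin.val_succ]; omega
      rw [e3, eK, map_neg]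
      ring
  · have hj2 : (j : ℕ) = κ₂ := by have := j.isLt; omega
    rw [sum_ite_none' _ _ (fun i => by have := i.isLt; omega),
      sum_ite_single' _ _ (⟨κ₂ - 1, by omega⟩ : Fin κ₂)
        (fun i => by have := i.isLt; simp only [Fin.ext_iff]; omega)]
    have e3 : (⟨κ₂ - 1, by omega⟩ : Fin κ₂).succ = j := by
      simp only [Fin.ext_iff, Fin.val_succ]; omega
    have hj' : j = (⟨κ₂, by omega⟩ : Fin (κ₂ + 1)) := by simp only [Fin.ext_iff]; omega
    have e1 : Ky r (j, c) = 0 := by rw [hj']; exact hlast r c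
    rw [e3, e1, map_zero, add_zero, zero_add]
end
end

section
/- Let m, n ≥ 1, κ₁ ≥ 1 and κ₂ ≥ 1 be integers and let K(λ) be a (κ₁+1)m × κ₂n matrix pencil over ℝ satisfying (Λ_{κ₁}(λ)^T ⊗ I_m)·K(λ) = 0_{m × κ₂n}. Then there exists a constant matrix C ∈ ℝ^{κ₁m × κ₂n} such that K(λ) = (L_{κ₁}(λ)^T ⊗ I_m)·C. -/
open Matrix Polynomial
open scoped Kronecker

noncomputable section

/-! Fix a block row `a` and a column `q`, and let `xᵢ`, `yᵢ` be the entries of `Kx`, `Ky` in block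
row `i`. The hypothesis says `∑ᵢ λ^(κ-i) (λ xᵢ + yᵢ) = 0`; comparing coefficients gives `x₀ = 0`,
`y_κ = 0` and `x_(j+1) = -y_j`, which says exactly that this column of `K` is `L_κᵀ c` with
`c_j = -y_j`. -/

open Finset

theorem Matrix.kronecker_one_mul_apply {R l m n p : Type*} [NonAssocSemiring R] [Fintype m]
    [Fintype n] [DecidableEq n] (A : Matrix l m R) (B : Matrix (m × n) p R) (i : l) (a : n)
    (q : p) : ((A ⊗ₖ (1 : Matrix n n R)) * B) (i, a) q = ∑ j, A i j * B (j, a) q := by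
  simp [Matrix.mul_apply, Fintype.sum_prod_type, Matrix.one_apply]

theorem Lk_apply (κ : ℕ) (j : Fin κ) (i : Fin (κ + 1)) :
    Lk κ j i = (if i = j.castSucc then -1 else 0) + (if i = j.succ then X else 0) := by
  simp only [Lk, Matrix.of_apply, Fin.ext_iff, Fin.val_castSucc, Fin.val_succ]
  split_ifs <;> first | omega | ring

theorem sum_ite_eq_castSucc {M : Type*} [AddCommMonoid M] {κ : ℕ} (f : Fin (κ + 1) → M)
    (hf : f (Fin.last κ) = 0) (i : Fin (κ + 1)) :
    ∑ j : Fin κ, (if i = j.castSucc then f j.castSucc else 0) = f i := by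
  induction i using Fin.lastCases with
  | last => simp [hf, eq_comm (a := Fin.last κ)]
  | cast i => simp [Fin.castSucc_inj]

theorem sum_ite_eq_succ {M : Type*} [AddCommMonoid M] {κ : ℕ} (f : Fin (κ + 1) → M)
    (hf : f 0 = 0) (i : Fin (κ + 1)) :
    ∑ j : Fin κ, (if i = j.succ then f j.succ else 0) = f i := by
  induction i using Fin.cases with
  | zero => simp [hf, eq_comm (a := (0 : Fin (κ + 1)))]
  | succ i => simp [Fin.succ_inj]

section CoeffComparison

variable {R : Type*} [CommRing R] {κ : ℕ}

theorem coeff_sum_X_pow_mul_pencil (x y : Fin (κ + 1) → R) (d : ℕ) :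
    (∑ i : Fin (κ + 1), X ^ (κ - (i : ℕ)) * (X * C (x i) + C (y i))).coeff d =
      ∑ i : Fin (κ + 1), ((if d = κ - i + 1 then x i else 0) + if d = κ - i then y i else 0) := by
  simp only [finsetSum_coeff, mul_add, ← mul_assoc, ← pow_succ, coeff_add, coeff_X_pow_mul',
    coeff_C]
  refine Finset.sum_congr rfl fun i _ => ?_
  split_ifs <;> first | rfl | omega

variable {x y : Fin (κ + 1) → R}

theorem head_eq_zero_of_sum_X_pow_mul_pencil_eq_zero
    (h : ∑ i : Fin (κ + 1), X ^ (κ - (i : ℕ)) * (X * C (x i) + C (y i)) = 0) : x 0 = 0 := by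
  have := coeff_sum_X_pow_mul_pencil x y (κ + 1)
  rw [h, coeff_zero, Fintype.sum_eq_single 0] at this
  · simpa using this.symm
  · intro i hi
    have : (i : ℕ) ≠ 0 := fun h0 => hi (Fin.ext h0)
    rw [if_neg (by omega), if_neg (by omega), add_zero]

theorem last_eq_zero_of_sum_X_pow_mul_pencil_eq_zero
    (h : ∑ i : Fin (κ + 1), X ^ (κ - (i : ℕ)) * (X * C (x i) + C (y i)) = 0) :
    y (Fin.last κ) = 0 := by
  have := coeff_sum_X_pow_mul_pencil x y 0
  rw [h, coeff_zero, Fintype.sum_eq_single (Fin.last κ)] at this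
  · simpa using this.symm
  · intro i hi
    have : (i : ℕ) < κ := Fin.val_lt_last hi
    rw [if_neg (by omega), if_neg (by omega), add_zero]

theorem succ_add_castSucc_eq_zero_of_sum_X_pow_mul_pencil_eq_zero
    (h : ∑ i : Fin (κ + 1), X ^ (κ - (i : ℕ)) * (X * C (x i) + C (y i)) = 0) (j : Fin κ) :
    x j.succ + y j.castSucc = 0 := by
  have := coeff_sum_X_pow_mul_pencil x y (κ - j)
  rw [h, coeff_zero, Finset.sum_add_distrib, Fintype.sum_eq_single j.succ,
    Fintype.sum_eq_single j.castSucc] at this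
  · rwa [Fin.val_succ, Fin.val_castSucc, if_pos (by omega), if_pos rfl, eq_comm] at this
  all_goals
    intro i hi
    have : (i : ℕ) ≠ _ := Fin.val_ne_iff.mpr hi
    simp only [Fin.val_succ, Fin.val_castSucc] at this
    rw [if_neg (by omega)]

end CoeffComparison

theorem pencil_eq_sum_Lk_mul {κ : ℕ} {x y : Fin (κ + 1) → ℝ}
    (h : ∑ i : Fin (κ + 1), X ^ (κ - (i : ℕ)) * (X * C (x i) + C (y i)) = 0) (i : Fin (κ + 1)) :
    X * C (x i) + C (y i) = ∑ j : Fin κ, Lk κ j i * C (-y j.castSucc) := by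
  have hx (j : Fin κ) : x j.succ = -y j.castSucc :=
    eq_neg_of_add_eq_zero_left (succ_add_castSucc_eq_zero_of_sum_X_pow_mul_pencil_eq_zero h j)
  calc X * C (x i) + C (y i) = C (y i) + X * C (x i) := add_comm _ _
    _ = ∑ j : Fin κ, ((if i = j.castSucc then C (y j.castSucc) else 0) +
          (if i = j.succ then X * C (x j.succ) else 0)) := by
      rw [sum_add_distrib, sum_ite_eq_castSucc (fun k => C (y k))
        (by simp [last_eq_zero_of_sum_X_pow_mul_pencil_eq_zero h]),
        sum_ite_eq_succ (fun k => X * C (x k))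
        (by simp [head_eq_zero_of_sum_X_pow_mul_pencil_eq_zero h])]
    _ = ∑ j : Fin κ, Lk κ j i * C (-y j.castSucc) := by
      refine sum_congr rfl fun j _ => ?_
      rw [Lk_apply, hx, map_neg]
      split_ifs <;> ring

theorem stmt1_general (m n κ₁ κ₂ : ℕ)
    (Kx Ky : Matrix (Fin (κ₁ + 1) × Fin m) (Fin κ₂ × Fin n) ℝ)
    (hK : ((Lam κ₁)ᵀ ⊗ₖ (1 : Matrix (Fin m) (Fin m) (Polynomial ℝ))) * pencilM Kx Ky = 0) :
    ∃ M : Matrix (Fin κ₁ × Fin m) (Fin κ₂ × Fin n) ℝ,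
      pencilM Kx Ky = ((Lk κ₁)ᵀ ⊗ₖ (1 : Matrix (Fin m) (Fin m) (Polynomial ℝ))) * M.map C := by
  refine ⟨Matrix.of fun p q => -Ky (p.1.castSucc, p.2) q, ?_⟩
  refine Matrix.ext fun ⟨i, a⟩ q => ?_
  have hcol : ∑ i : Fin (κ₁ + 1),
      X ^ (κ₁ - (i : ℕ)) * (X * C (Kx (i, a) q) + C (Ky (i, a) q)) = 0 := by
    simpa [Matrix.kronecker_one_mul_apply, Lam, pencilM] using congrFun (congrFun hK (0, a)) q
  rw [Matrix.kronecker_one_mul_apply]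
  exact pencil_eq_sum_Lk_mul hcol i

theorem stmt1 (m n κ₁ κ₂ : ℕ) (hm : 1 ≤ m) (hn : 1 ≤ n) (hκ₁ : 1 ≤ κ₁) (hκ₂ : 1 ≤ κ₂)
    (Kx Ky : Matrix (Fin (κ₁ + 1) × Fin m) (Fin κ₂ × Fin n) ℝ)
    (hK : ((Lam κ₁)ᵀ ⊗ₖ (1 : Matrix (Fin m) (Fin m) (Polynomial ℝ))) * pencilM Kx Ky = 0) :
    ∃ M : Matrix (Fin κ₁ × Fin m) (Fin κ₂ × Fin n) ℝ,
      pencilM Kx Ky = ((Lk κ₁)ᵀ ⊗ₖ (1 : Matrix (Fin m) (Fin m) (Polynomial ℝ))) * M.map C :=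
  stmt1_general m n κ₁ κ₂ Kx Ky hK
end
end

section
/- Let m, n ≥ 1 and ε, η ≥ 1 be integers and let M(λ) be an (η+1)m × (ε+1)n matrix pencil over ℝ. Then (Λ_η(λ)^T ⊗ I_m)·M(λ)·(Λ_ε(λ) ⊗ I_n) = 0 holds identically if and only if there exist matrices B₁ ∈ ℝ^{(η+1)m × εn} and B₂ ∈ ℝ^{ηm × (ε+1)n} with M(λ) = B₁·(L_ε(λ) ⊗ I_n) + (L_η(λ)^T ⊗ I_m)·B₂; moreover, in this case the pair (B₁, B₂) is uniquely determined by M(λ). -/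
open Matrix Polynomial
open scoped Kronecker

noncomputable section

/-!
Block by block, and with every matrix extended by zero to `ℤ × ℤ`, the identity
`M = B₁ (L_ε ⊗ I) + (L_ηᵀ ⊗ I) B₂` for `M = λ Mx + My` reads
`Mx i j = B₁ i (j - 1) + B₂ (i - 1) j` and `My i j = -(B₁ i j + B₂ i j)`.
Then `f i j := Mx i j + My i (j - 1)` equals `B₂ (i - 1) j - B₂ i (j - 1)`, so summing `f` along
an anti-diagonal telescopes to `B₂ i j = -∑_{a ≤ i} f a (i + j + 1 - a)`; with `B₁ = -My - B₂`
this proves uniqueness. The complete anti-diagonal sums of `f` are the coefficients of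
`(Λ_ηᵀ ⊗ I) M (Λ_ε ⊗ I)`, and when they vanish the same formulas give matrices of the right
shapes, which proves existence. The converse direction is `L_κ Λ_κ = 0`.
-/

namespace KroneckerPencil

open Finset

section ZeroExtension

variable {R : Type*} [Zero R] {r c : ℕ} {α β : Type*}

def zext (v : Fin r → R) (t : ℤ) : R :=
  if h : 0 ≤ t ∧ t < r then v ⟨t.toNat, by omega⟩ else 0

lemma exists_fin_coe_eq {t : ℤ} (ht : 0 ≤ t ∧ t < r) : ∃ k : Fin r, (k : ℤ) = t :=
  ⟨⟨t.toNat, by omega⟩, by simp; omega⟩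

@[simp]
lemma zext_coe (v : Fin r → R) (k : Fin r) : zext v k = v k := by
  simp [zext]

lemma zext_eq_zero (v : Fin r → R) {t : ℤ} (ht : ¬(0 ≤ t ∧ t < r)) : zext v t = 0 :=
  dif_neg ht

lemma zext_comp {S : Type*} [Zero S] (φ : R → S) (hφ : φ 0 = 0) (v : Fin r → R) (t : ℤ) :
    zext (fun k => φ (v k)) t = φ (zext v t) := by
  unfold zext
  split_ifs <;> simp [hφ]

lemma sum_ite_coe_eq_zext {M : Type*} [AddCommMonoid M] (v : Fin r → M) (t : ℤ) :
    ∑ k : Fin r, (if (k : ℤ) = t then v k else 0) = zext v t := by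
  by_cases ht : 0 ≤ t ∧ t < r
  · obtain ⟨k, rfl⟩ := exists_fin_coe_eq ht
    simp [Fin.val_inj]
  · rw [zext_eq_zero v ht]
    exact sum_eq_zero fun k _ => if_neg fun hk => ht (by omega)

/-- The `(p, q)` block of `A` as a function on `ℤ × ℤ`, extended by zero. -/
def blockExt (A : Matrix (Fin r × α) (Fin c × β) R) (p : α) (q : β) (i j : ℤ) : R :=
  zext (fun i' => zext (fun j' => A (i', p) (j', q)) j) i

lemma blockExt_coe_left (A : Matrix (Fin r × α) (Fin c × β) R) (p : α) (q : β) (i : Fin r)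
    (j : ℤ) : blockExt A p q i j = zext (fun j' => A (i, p) (j', q)) j :=
  zext_coe _ i

lemma blockExt_coe_right (A : Matrix (Fin r × α) (Fin c × β) R) (p : α) (q : β) (i : ℤ)
    (j : Fin c) : blockExt A p q i j = zext (fun i' => A (i', p) (j, q)) i := by
  simp [blockExt]

@[simp]
lemma blockExt_coe (A : Matrix (Fin r × α) (Fin c × β) R) (p : α) (q : β) (i : Fin r)
    (j : Fin c) : blockExt A p q i j = A (i, p) (j, q) := by
  simp [blockExt]

def SupportedIn (g : ℤ → ℤ → R) (r c : ℕ) : Prop :=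
  ∀ i j : ℤ, ¬(0 ≤ i ∧ i < r ∧ 0 ≤ j ∧ j < c) → g i j = 0

lemma supportedIn_blockExt (A : Matrix (Fin r × α) (Fin c × β) R) (p : α) (q : β) :
    SupportedIn (blockExt A p q) r c := by
  intro i j h
  by_cases hi : 0 ≤ i ∧ i < r
  · obtain ⟨i, rfl⟩ := exists_fin_coe_eq hi
    rw [blockExt_coe_left]
    exact zext_eq_zero _ (by omega)
  · exact zext_eq_zero _ hi

def ofBlockFun (g : α → β → ℤ → ℤ → R) : Matrix (Fin r × α) (Fin c × β) R :=
  Matrix.of fun x y => g x.2 y.2 x.1 y.1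

lemma blockExt_ofBlockFun {g : α → β → ℤ → ℤ → R} {p : α} {q : β}
    (hg : SupportedIn (g p q) r c) : blockExt (ofBlockFun (r := r) (c := c) g) p q = g p q := by
  ext i j
  by_cases h : 0 ≤ i ∧ i < r ∧ 0 ≤ j ∧ j < c
  · obtain ⟨i, rfl⟩ := exists_fin_coe_eq ⟨h.1, h.2.1⟩
    obtain ⟨j, rfl⟩ := exists_fin_coe_eq h.2.2
    simp [ofBlockFun]
  · rw [supportedIn_blockExt _ p q i j h, hg i j h]

end ZeroExtension

section Scalar

variable {G : Type*} [AddCommGroup G]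

def diagSum (f : ℤ → ℤ → G) (n : ℕ) (d : ℤ) : G :=
  ∑ a ∈ range n, f a (d - a)

lemma diagSum_succ (f : ℤ → ℤ → G) (n : ℕ) (d : ℤ) :
    diagSum f (n + 1) d = diagSum f n d + f n (d - n) :=
  sum_range_succ _ n

lemma diagSum_eq_of_le {f : ℤ → ℤ → G} {n n' : ℕ} {d : ℤ} (hn : n ≤ n')
    (hf : ∀ a : ℕ, n ≤ a → a < n' → f a (d - a) = 0) : diagSum f n d = diagSum f n' d :=
  sum_subset (range_subset_range.2 hn) fun a ha ha' => by
    simp only [mem_range, not_lt] at ha ha'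
    exact hf a ha' ha

/-- Coefficients of `mx + y·my`; its complete anti-diagonal sums are the coefficients of
`Λ_ηᵀ M Λ_ε`. -/
def symbol (mx my : ℤ → ℤ → G) (i j : ℤ) : G :=
  mx i j + my i (j - 1)

/-- Entrywise form of `λ·mx + my = B₁ (L_ε ⊗ I) + (L_ηᵀ ⊗ I) B₂` on one block, all four
extended by zero. -/
structure IsDecomposition (mx my b₁ b₂ : ℤ → ℤ → G) : Prop where
  coeff_X : ∀ i j, mx i j = b₁ i (j - 1) + b₂ (i - 1) j
  coeff_one : ∀ i j, my i j = -(b₁ i j + b₂ i j)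

def decompB₂ (mx my : ℤ → ℤ → G) (i j : ℤ) : G :=
  -diagSum (symbol mx my) (i + 1).toNat (i + j + 1)

def decompB₁ (mx my : ℤ → ℤ → G) (i j : ℤ) : G :=
  -my i j - decompB₂ mx my i j

variable {mx my b₁ b₂ : ℤ → ℤ → G}

lemma decompB₂_of_neg {i : ℤ} (hi : i < 0) (j : ℤ) : decompB₂ mx my i j = 0 := by
  simp [decompB₂, Int.toNat_eq_zero.2 (by omega : i + 1 ≤ 0), diagSum]

lemma IsDecomposition.symbol_eq (h : IsDecomposition mx my b₁ b₂) (i j : ℤ) :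
    symbol mx my i j = b₂ (i - 1) j - b₂ i (j - 1) := by
  rw [symbol, h.coeff_X, h.coeff_one]
  abel

lemma IsDecomposition.diagSum_eq (h : IsDecomposition mx my b₁ b₂) (hb : ∀ j, b₂ (-1) j = 0)
    (n : ℕ) (d : ℤ) : diagSum (symbol mx my) n d = -b₂ (n - 1) (d - n) := by
  induction n with
  | zero => simp [diagSum, hb]
  | succ n ih =>
    rw [diagSum_succ, ih, h.symbol_eq]
    push_cast
    rw [show d - n - 1 = d - (n + 1) by ring, show (n : ℤ) + 1 - 1 = n by ring]
    abel

lemma IsDecomposition.eq_decomp (h : IsDecomposition mx my b₁ b₂) (hb : ∀ j, b₂ (-1) j = 0)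
    {i : ℤ} (hi : 0 ≤ i) (j : ℤ) : b₁ i j = decompB₁ mx my i j ∧ b₂ i j = decompB₂ mx my i j := by
  have h₂ : b₂ i j = decompB₂ mx my i j := by
    rw [decompB₂, h.diagSum_eq hb, Int.toNat_of_nonneg (by omega), neg_neg,
      add_sub_cancel_right, show i + j + 1 - (i + 1) = j by ring]
  refine ⟨?_, h₂⟩
  rw [decompB₁, ← h₂, h.coeff_one]
  abel

lemma isDecomposition_decomp {η ε : ℕ} (hx : SupportedIn mx (η + 1) (ε + 1))
    (hy : SupportedIn my (η + 1) (ε + 1)) :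
    IsDecomposition mx my (decompB₁ mx my) (decompB₂ mx my) := by
  refine ⟨fun i j => ?_, fun i j => by rw [decompB₁]; abel⟩
  rw [decompB₁]
  rcases lt_or_ge i 0 with hi | hi
  · rw [hx i j (by omega), hy i (j - 1) (by omega), decompB₂_of_neg hi,
      decompB₂_of_neg (by omega)]
    simp
  · obtain ⟨n, rfl⟩ := Int.eq_ofNat_of_zero_le hi
    have hs := diagSum_succ (symbol mx my) n (n + j)
    simp only [decompB₂, symbol] at hs ⊢
    rw [show ((n : ℤ) - 1 + 1).toNat = n by simp, show ((n : ℤ) + 1).toNat = n + 1 by omega,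
      show (n : ℤ) - 1 + j + 1 = n + j by ring, show (n : ℤ) + (j - 1) + 1 = n + j by ring, hs,
      show (n : ℤ) + j - n = j by ring]
    abel

variable {η ε : ℕ}

lemma SupportedIn.symbol (hx : SupportedIn mx (η + 1) (ε + 1))
    (hy : SupportedIn my (η + 1) (ε + 1)) : SupportedIn (symbol mx my) (η + 1) (ε + 2) :=
  fun i j h => by
  rw [KroneckerPencil.symbol, hx i j (by omega), hy i (j - 1) (by omega), add_zero]

lemma isDecomposition_iff_forall_fin (hx : SupportedIn mx (η + 1) (ε + 1))
    (hy : SupportedIn my (η + 1) (ε + 1)) (h₁ : SupportedIn b₁ (η + 1) ε)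
    (h₂ : SupportedIn b₂ η (ε + 1)) :
    IsDecomposition mx my b₁ b₂ ↔ ∀ (i : Fin (η + 1)) (j : Fin (ε + 1)),
      mx i j = b₁ i (j - 1) + b₂ (i - 1) j ∧ my i j = -(b₁ i j + b₂ i j) := by
  refine ⟨fun h i j => ⟨h.coeff_X i j, h.coeff_one i j⟩, fun h => ?_⟩
  suffices ∀ i j, mx i j = b₁ i (j - 1) + b₂ (i - 1) j ∧ my i j = -(b₁ i j + b₂ i j) from
    ⟨fun i j => (this i j).1, fun i j => (this i j).2⟩
  intro i j
  by_cases hbox : 0 ≤ i ∧ i < η + 1 ∧ 0 ≤ j ∧ j < ε + 1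
  · obtain ⟨i, rfl⟩ := exists_fin_coe_eq (r := η + 1) ⟨hbox.1, by exact_mod_cast hbox.2.1⟩
    obtain ⟨j, rfl⟩ := exists_fin_coe_eq (r := ε + 1) ⟨hbox.2.2.1, by exact_mod_cast hbox.2.2.2⟩
    exact h i j
  · rw [hx i j (by omega), hy i j (by omega), h₁ i j (by omega), h₁ i (j - 1) (by omega),
      h₂ i j (by omega), h₂ (i - 1) j (by omega)]
    simp

lemma supportedIn_decompB₂ (hx : SupportedIn mx (η + 1) (ε + 1))
    (hy : SupportedIn my (η + 1) (ε + 1)) (hd : ∀ d, diagSum (symbol mx my) (η + 1) d = 0) :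
    SupportedIn (decompB₂ mx my) η (ε + 1) := by
  intro i j hij
  have hf := hx.symbol hy
  rcases lt_or_ge i 0 with hi | hi
  · exact decompB₂_of_neg hi j
  rw [decompB₂, neg_eq_zero]
  obtain ⟨n, rfl⟩ := Int.eq_ofNat_of_zero_le hi
  rw [show ((n : ℤ) + 1).toNat = n + 1 by omega]
  rcases le_or_gt η n with hn | hn
  · rw [← hd (n + j + 1)]
    exact (diagSum_eq_of_le (by omega) fun a ha _ => hf _ _ (by omega)).symm
  rcases lt_or_ge j 0 with hj | hj
  · rw [← hd (n + j + 1)]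
    exact diagSum_eq_of_le (by omega) fun a ha _ => hf _ _ (by omega)
  · exact sum_eq_zero fun a ha => hf _ _ (by simp only [mem_range] at ha; omega)

lemma supportedIn_decompB₁ (hx : SupportedIn mx (η + 1) (ε + 1))
    (hy : SupportedIn my (η + 1) (ε + 1)) (hd : ∀ d, diagSum (symbol mx my) (η + 1) d = 0) :
    SupportedIn (decompB₁ mx my) (η + 1) ε := by
  intro i j hij
  rw [decompB₁]
  by_cases hbox : 0 ≤ i ∧ i < η + 1 ∧ 0 ≤ j ∧ j < ε + 1
  · obtain ⟨n, rfl⟩ := Int.eq_ofNat_of_zero_le hbox.1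
    have hj : j = ε := by omega
    subst hj
    have h₀ : diagSum (symbol mx my) n (n + ε + 1) = 0 := sum_eq_zero fun a ha =>
      hx.symbol hy _ _ (by simp only [mem_range] at ha; omega)
    rw [decompB₂, show ((n : ℤ) + 1).toNat = n + 1 by omega, diagSum_succ, h₀, symbol,
      hx _ _ (by omega), show (n : ℤ) + ε + 1 - n - 1 = ε by ring]
    simp
  · rw [hy i j hbox, supportedIn_decompB₂ hx hy hd i j (by omega)]
    simp

end Scalar

section Entries

variable {α β : Type*}

lemma Lk_apply (κ : ℕ) (k : Fin κ) (j : Fin (κ + 1)) :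
    Lk κ k j = (if (k : ℤ) = j - 1 then X else 0) - (if (k : ℤ) = j then 1 else 0) := by
  simp only [Lk, of_apply]
  split_ifs <;> first | omega | simp

lemma sum_C_mul_Lk {κ : ℕ} (g : Fin κ → ℝ) (j : Fin (κ + 1)) :
    ∑ k, C (g k) * Lk κ k j = X * C (zext g (j - 1)) - C (zext g j) := by
  simp only [Lk_apply, mul_sub, mul_ite, mul_one, mul_zero, sum_sub_distrib,
    sum_ite_coe_eq_zext]
  rw [zext_comp (fun a => C a * X) (by simp), zext_comp C C_0, mul_comm]

lemma map_C_mul_Lk_kronecker_apply [Fintype β] [DecidableEq β] {r κ : ℕ}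
    (B : Matrix (Fin r × α) (Fin κ × β) ℝ) (i : Fin r) (p : α) (j : Fin (κ + 1)) (q : β) :
    (B.map C * (Lk κ ⊗ₖ (1 : Matrix β β ℝ[X]))) (i, p) (j, q) =
      X * C (blockExt B p q i (j - 1)) - C (blockExt B p q i j) := by
  simp only [mul_apply, Fintype.sum_prod_type, kroneckerMap_apply, map_apply, one_apply,
    mul_ite, mul_one, mul_zero, sum_ite_eq', mem_univ, if_true, blockExt_coe_left]
  exact sum_C_mul_Lk _ j

lemma Lk_transpose_kronecker_mul_map_C_apply [Fintype α] [DecidableEq α] {κ c : ℕ}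
    (B : Matrix (Fin κ × α) (Fin c × β) ℝ) (i : Fin (κ + 1)) (p : α) (j : Fin c) (q : β) :
    (((Lk κ)ᵀ ⊗ₖ (1 : Matrix α α ℝ[X])) * B.map C) (i, p) (j, q) =
      X * C (blockExt B p q (i - 1) j) - C (blockExt B p q i j) := by
  simp only [mul_apply, Fintype.sum_prod_type, kroneckerMap_apply, map_apply, one_apply,
    transpose_apply, ite_mul, mul_ite, zero_mul, mul_one, mul_zero, sum_ite_eq,
    mem_univ, if_true, blockExt_coe_right]
  simp_rw [mul_comm (Lk κ _ _)]
  exact sum_C_mul_Lk _ i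

end Entries

section Decomposition

variable {α β : Type*} [Fintype α] [DecidableEq α] [Fintype β] [DecidableEq β] {η ε : ℕ}

lemma X_mul_C_add_C_inj {a b a' b' : ℝ} :
    X * C a + C b = X * C a' + C b' ↔ a = a' ∧ b = b' := by
  refine ⟨fun h => ⟨?_, ?_⟩, by rintro ⟨rfl, rfl⟩; rfl⟩
  · simpa using congrArg (coeff · 1) h
  · simpa using congrArg (coeff · 0) h

lemma decomposition_apply (B₁ : Matrix (Fin (η + 1) × α) (Fin ε × β) ℝ)
    (B₂ : Matrix (Fin η × α) (Fin (ε + 1) × β) ℝ) (i : Fin (η + 1)) (p : α) (j : Fin (ε + 1))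
    (q : β) :
    (B₁.map C * (Lk ε ⊗ₖ (1 : Matrix β β ℝ[X])) + ((Lk η)ᵀ ⊗ₖ (1 : Matrix α α ℝ[X])) * B₂.map C)
        (i, p) (j, q) =
      X * C (blockExt B₁ p q i (j - 1) + blockExt B₂ p q (i - 1) j) +
        C (-(blockExt B₁ p q i j + blockExt B₂ p q i j)) := by
  rw [Matrix.add_apply, map_C_mul_Lk_kronecker_apply, Lk_transpose_kronecker_mul_map_C_apply]
  simp only [map_add, map_neg]
  ring

lemma pencilM_eq_iff_isDecomposition (Mx My : Matrix (Fin (η + 1) × α) (Fin (ε + 1) × β) ℝ)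
    (B₁ : Matrix (Fin (η + 1) × α) (Fin ε × β) ℝ) (B₂ : Matrix (Fin η × α) (Fin (ε + 1) × β) ℝ) :
    pencilM Mx My =
        B₁.map C * (Lk ε ⊗ₖ (1 : Matrix β β ℝ[X])) + ((Lk η)ᵀ ⊗ₖ (1 : Matrix α α ℝ[X])) * B₂.map C ↔
      ∀ p q, IsDecomposition (blockExt Mx p q) (blockExt My p q) (blockExt B₁ p q)
        (blockExt B₂ p q) := by
  simp only [← Matrix.ext_iff, Prod.forall, decomposition_apply, pencilM, of_apply,
    X_mul_C_add_C_inj]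
  simp only [isDecomposition_iff_forall_fin (supportedIn_blockExt _ _ _)
    (supportedIn_blockExt _ _ _) (supportedIn_blockExt _ _ _) (supportedIn_blockExt _ _ _),
    blockExt_coe]
  exact ⟨fun h p q i j => h i p j q, fun h i p j q => h p q i j⟩

end Decomposition

section Sandwich

variable {α β : Type*} [Fintype α] [DecidableEq α] [Fintype β] [DecidableEq β] {η ε : ℕ}

lemma Lk_mul_Lam (κ : ℕ) : Lk κ * Lam κ = 0 := by
  ext i z
  have hterm : ∀ j, Lk κ i j * Lam κ j z =
      (if j = i.succ then X ^ (κ - i) else 0) - (if j = i.castSucc then X ^ (κ - i) else 0) := by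
    intro j
    have hi := i.isLt
    simp only [Lk, Lam, of_apply, Fin.ext_iff, Fin.val_succ, Fin.val_castSucc]
    split_ifs <;> first | omega | simp_all
    rw [← pow_succ']
    congr 1
    omega
  simp [mul_apply, hterm, sum_sub_distrib]

lemma sandwich_decomposition_eq_zero (B₁ : Matrix (Fin (η + 1) × α) (Fin ε × β) ℝ)
    (B₂ : Matrix (Fin η × α) (Fin (ε + 1) × β) ℝ) :
    ((Lam η)ᵀ ⊗ₖ (1 : Matrix α α ℝ[X])) *
        (B₁.map C * (Lk ε ⊗ₖ (1 : Matrix β β ℝ[X])) +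
          ((Lk η)ᵀ ⊗ₖ (1 : Matrix α α ℝ[X])) * B₂.map C) *
        (Lam ε ⊗ₖ (1 : Matrix β β ℝ[X])) = 0 := by
  have h₁ : (Lk ε ⊗ₖ (1 : Matrix β β ℝ[X])) * (Lam ε ⊗ₖ (1 : Matrix β β ℝ[X])) = 0 := by
    rw [← mul_kronecker_mul, Lk_mul_Lam, Matrix.one_mul, zero_kronecker]
  have h₂ : ((Lam η)ᵀ ⊗ₖ (1 : Matrix α α ℝ[X])) * ((Lk η)ᵀ ⊗ₖ (1 : Matrix α α ℝ[X])) = 0 := by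
    rw [← mul_kronecker_mul, ← transpose_mul, Lk_mul_Lam, transpose_zero, Matrix.one_mul,
      zero_kronecker]
  simp only [Matrix.mul_add, Matrix.add_mul, Matrix.mul_assoc, h₁, Matrix.mul_zero, zero_add]
  simp only [← Matrix.mul_assoc, h₂, Matrix.zero_mul]

lemma sandwich_apply (Mx My : Matrix (Fin (η + 1) × α) (Fin (ε + 1) × β) ℝ) (z z' : Fin 1)
    (p : α) (q : β) :
    (((Lam η)ᵀ ⊗ₖ (1 : Matrix α α ℝ[X])) * pencilM Mx My * (Lam ε ⊗ₖ (1 : Matrix β β ℝ[X])))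
        (z, p) (z', q) =
      ∑ i : Fin (η + 1), ∑ j : Fin (ε + 1),
        X ^ (η - i) * (X * C (Mx (i, p) (j, q)) + C (My (i, p) (j, q))) * X ^ (ε - j) := by
  simp only [mul_apply, Fintype.sum_prod_type, kroneckerMap_apply, transpose_apply, one_apply,
    Lam, of_apply, pencilM, mul_ite, ite_mul, mul_one, mul_zero, zero_mul, sum_ite_eq, sum_ite_eq',
    mem_univ, if_true, sum_mul]
  exact sum_comm

lemma coeff_X_pow_mul_pencil_mul_X_pow (a b k : ℕ) (c d : ℝ) :
    (X ^ a * (X * C c + C d) * X ^ b).coeff k =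
      (if a + b + 1 = k then c else 0) + (if a + b = k then d else 0) := by
  rw [show X ^ a * (X * C c + C d) * X ^ b = C c * X ^ (a + b + 1) + C d * X ^ (a + b) by ring,
    coeff_add, coeff_C_mul_X_pow, coeff_C_mul_X_pow]
  simp only [eq_comm]

lemma diagSum_eq_zero_of_sandwich_eq_zero {Mx My : Matrix (Fin (η + 1) × α) (Fin (ε + 1) × β) ℝ}
    (h : ((Lam η)ᵀ ⊗ₖ (1 : Matrix α α ℝ[X])) * pencilM Mx My *
      (Lam ε ⊗ₖ (1 : Matrix β β ℝ[X])) = 0) (p : α) (q : β) (d : ℤ) :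
    diagSum (symbol (blockExt Mx p q) (blockExt My p q)) (η + 1) d = 0 := by
  have hf := (supportedIn_blockExt Mx p q).symbol (supportedIn_blockExt My p q)
  rcases lt_or_ge (η + ε + 1 : ℤ) d with hd | hd
  · exact sum_eq_zero fun a ha => hf _ _ (by omega)
  obtain ⟨k, hk⟩ := Int.eq_ofNat_of_zero_le (by omega : 0 ≤ (η + ε + 1 : ℤ) - d)
  have hc := congrArg (coeff · k) (congrFun (congrFun h (0, p)) (0, q))
  simp only [sandwich_apply, finsetSum_coeff, coeff_X_pow_mul_pencil_mul_X_pow, Matrix.zero_apply,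
    coeff_zero] at hc
  rw [← hc, diagSum, ← Fin.sum_univ_eq_sum_range (fun a => symbol _ _ a (d - a))]
  refine sum_congr rfl fun i _ => ?_
  rw [symbol, blockExt_coe_left, blockExt_coe_left, ← sum_ite_coe_eq_zext,
    ← sum_ite_coe_eq_zext, ← sum_add_distrib]
  refine sum_congr rfl fun j _ => ?_
  have := i.isLt
  have := j.isLt
  congr 1 <;> refine if_congr ?_ rfl rfl <;> omega

end Sandwich

section Solution

variable {α β : Type*} [Fintype α] [DecidableEq α] [Fintype β] [DecidableEq β] {η ε : ℕ}

def decompPair (Mx My : Matrix (Fin (η + 1) × α) (Fin (ε + 1) × β) ℝ) :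
    Matrix (Fin (η + 1) × α) (Fin ε × β) ℝ × Matrix (Fin η × α) (Fin (ε + 1) × β) ℝ :=
  (ofBlockFun fun p q => decompB₁ (blockExt Mx p q) (blockExt My p q),
    ofBlockFun fun p q => decompB₂ (blockExt Mx p q) (blockExt My p q))

lemma pencilM_eq_decompPair {Mx My : Matrix (Fin (η + 1) × α) (Fin (ε + 1) × β) ℝ}
    (hd : ∀ p q d, diagSum (symbol (blockExt Mx p q) (blockExt My p q)) (η + 1) d = 0) :
    pencilM Mx My = (decompPair Mx My).1.map C * (Lk ε ⊗ₖ (1 : Matrix β β ℝ[X])) +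
      ((Lk η)ᵀ ⊗ₖ (1 : Matrix α α ℝ[X])) * (decompPair Mx My).2.map C := by
  rw [pencilM_eq_iff_isDecomposition]
  intro p q
  have hx := supportedIn_blockExt Mx p q
  have hy := supportedIn_blockExt My p q
  convert isDecomposition_decomp hx hy using 1
  · exact blockExt_ofBlockFun (supportedIn_decompB₁ hx hy (hd p q))
  · exact blockExt_ofBlockFun (supportedIn_decompB₂ hx hy (hd p q))

lemma eq_decompPair_of_pencilM_eq {Mx My : Matrix (Fin (η + 1) × α) (Fin (ε + 1) × β) ℝ}
    {B : Matrix (Fin (η + 1) × α) (Fin ε × β) ℝ × Matrix (Fin η × α) (Fin (ε + 1) × β) ℝ}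
    (h : pencilM Mx My = B.1.map C * (Lk ε ⊗ₖ (1 : Matrix β β ℝ[X])) +
      ((Lk η)ᵀ ⊗ₖ (1 : Matrix α α ℝ[X])) * B.2.map C) :
    B = decompPair Mx My := by
  rw [pencilM_eq_iff_isDecomposition] at h
  have key (p : α) (q : β) (i : ℕ) (j : ℤ) :=
    (h p q).eq_decomp (fun j => supportedIn_blockExt B.2 p q (-1) j (by omega))
      (Int.natCast_nonneg i) j
  refine Prod.ext (ext fun ⟨i, p⟩ ⟨j, q⟩ => ?_) (ext fun ⟨i, p⟩ ⟨j, q⟩ => ?_)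
  · simpa [decompPair, ofBlockFun] using (key p q i j).1
  · simpa [decompPair, ofBlockFun] using (key p q i j).2

end Solution

end KroneckerPencil

open KroneckerPencil in
theorem stmt2_general (m n ε η : ℕ)
    (Mx My : Matrix (Fin (η + 1) × Fin m) (Fin (ε + 1) × Fin n) ℝ) :
    ((Lam η)ᵀ ⊗ₖ (1 : Matrix (Fin m) (Fin m) (Polynomial ℝ))) * pencilM Mx My *
        (Lam ε ⊗ₖ (1 : Matrix (Fin n) (Fin n) (Polynomial ℝ))) = 0 ↔
    ∃! B : Matrix (Fin (η + 1) × Fin m) (Fin ε × Fin n) ℝ ×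
           Matrix (Fin η × Fin m) (Fin (ε + 1) × Fin n) ℝ,
      pencilM Mx My =
        B.1.map C * (Lk ε ⊗ₖ (1 : Matrix (Fin n) (Fin n) (Polynomial ℝ))) +
          ((Lk η)ᵀ ⊗ₖ (1 : Matrix (Fin m) (Fin m) (Polynomial ℝ))) * B.2.map C := by
  constructor
  · intro h
    exact ⟨decompPair Mx My, pencilM_eq_decompPair (diagSum_eq_zero_of_sandwich_eq_zero h),
      fun B hB => eq_decompPair_of_pencilM_eq hB⟩
  · rintro ⟨B, hB, -⟩
    rw [hB]
    exact sandwich_decomposition_eq_zero B.1 B.2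

theorem stmt2 (m n ε η : ℕ) (hm : 1 ≤ m) (hn : 1 ≤ n) (hε : 1 ≤ ε) (hη : 1 ≤ η)
    (Mx My : Matrix (Fin (η + 1) × Fin m) (Fin (ε + 1) × Fin n) ℝ) :
    ((Lam η)ᵀ ⊗ₖ (1 : Matrix (Fin m) (Fin m) (Polynomial ℝ))) * pencilM Mx My *
        (Lam ε ⊗ₖ (1 : Matrix (Fin n) (Fin n) (Polynomial ℝ))) = 0 ↔
    ∃! B : Matrix (Fin (η + 1) × Fin m) (Fin ε × Fin n) ℝ ×
           Matrix (Fin η × Fin m) (Fin (ε + 1) × Fin n) ℝ,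
      pencilM Mx My =
        B.1.map C * (Lk ε ⊗ₖ (1 : Matrix (Fin n) (Fin n) (Polynomial ℝ))) +
          ((Lk η)ᵀ ⊗ₖ (1 : Matrix (Fin m) (Fin m) (Polynomial ℝ))) * B.2.map C :=
  stmt2_general m n ε η Mx My
end
end

section
/- Let P(λ) = Σ_{i=0}^k P_i λ^i with P_i ∈ ℝ^{m×n} be a matrix polynomial of degree k = ε + η + 1 (ε, η ≥ 0). A matrix pencil L(λ) of size ((η+1)m+εn) × ((ε+1)n+ηm) belongs to G_{η+1}(P) if and only if there exist α ∈ ℝ and matrices B₁ ∈ ℝ^{(η+1)m × εn}, B₂ ∈ ℝ^{ηm × (ε+1)n}, C₁ ∈ ℝ^{εn × εn}, C₂ ∈ ℝ^{ηm × ηm} such that L(λ) equals the 2×2 block matrix with (1,1)-block α·Σ_{η,P}(λ) + B₁·(L_ε(λ) ⊗ I_n) + (L_η(λ)^T ⊗ I_m)·B₂, (1,2)-block (L_η(λ)^T ⊗ I_m)·C₂, (2,1)-block C₁·(L_ε(λ) ⊗ I_n) and (2,2)-block 0_{εn × ηm}. -/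
open Matrix Polynomial
open scoped Kronecker

noncomputable section

/-- The block Kronecker ansatz equation for a rectangular `m × n` matrix polynomial `P` of
degree `k = ε + η + 1` with ansatz scalar `α`:
`((Λ_η(λ)ᵀ ⊗ I_m) ⊕ I_{εn}) · L(λ) · ((Λ_ε(λ) ⊗ I_n) ⊕ I_{ηm}) = (α·P(λ)) ⊕ 0`. -/
def GRect (m n ε η : ℕ) (Pc : ℕ → Matrix (Fin m) (Fin n) ℝ)
    (Lx Ly : Matrix ((Fin (η + 1) × Fin m) ⊕ (Fin ε × Fin n))
      ((Fin (ε + 1) × Fin n) ⊕ (Fin η × Fin m)) ℝ) (α : ℝ) : Prop :=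
  Matrix.fromBlocks ((Lam η)ᵀ ⊗ₖ (1 : Matrix (Fin m) (Fin m) (Polynomial ℝ)))
      (0 : Matrix (Fin 1 × Fin m) (Fin ε × Fin n) (Polynomial ℝ))
      (0 : Matrix (Fin ε × Fin n) (Fin (η + 1) × Fin m) (Polynomial ℝ))
      (1 : Matrix (Fin ε × Fin n) (Fin ε × Fin n) (Polynomial ℝ))
    * pencilM Lx Ly *
    Matrix.fromBlocks (Lam ε ⊗ₖ (1 : Matrix (Fin n) (Fin n) (Polynomial ℝ)))
      (0 : Matrix (Fin (ε + 1) × Fin n) (Fin η × Fin m) (Polynomial ℝ))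
      (0 : Matrix (Fin η × Fin m) (Fin 1 × Fin n) (Polynomial ℝ))
      (1 : Matrix (Fin η × Fin m) (Fin η × Fin m) (Polynomial ℝ))
    = Matrix.fromBlocks
        (Matrix.of fun p q => C α * polyOf m n (ε + η + 1) Pc p.2 q.2)
        (0 : Matrix (Fin 1 × Fin m) (Fin η × Fin m) (Polynomial ℝ))
        (0 : Matrix (Fin ε × Fin n) (Fin 1 × Fin n) (Polynomial ℝ))
        (0 : Matrix (Fin ε × Fin n) (Fin η × Fin m) (Polynomial ℝ))

/-- The pencil `Σ_{η,P}(λ)`: first block row `[λP_k + P_{k-1}, P_{k-2}, …, P_η]`, last block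
column `(P_{η-1}, …, P_0)ᵀ` in block rows `2, …, η+1`, and zero elsewhere (`k = ε + η + 1`). -/
def SigmaP (m n ε η : ℕ) (Pc : ℕ → Matrix (Fin m) (Fin n) ℝ) :
    Matrix (Fin (η + 1) × Fin m) (Fin (ε + 1) × Fin n) (Polynomial ℝ) :=
  Matrix.of fun p q =>
    if (p.1 : ℕ) = 0 ∧ (q.1 : ℕ) = 0 then
      X * C (Pc (ε + η + 1) p.2 q.2) + C (Pc (ε + η) p.2 q.2)
    else if (p.1 : ℕ) = 0 then C (Pc (ε + η - (q.1 : ℕ)) p.2 q.2)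
    else if (q.1 : ℕ) = ε then C (Pc (η - (p.1 : ℕ)) p.2 q.2)
    else 0

/-!
Multiplying out the block products, `GRect` says that `(Λ_ηᵀ ⊗ I_m) L₁₁ (Λ_ε ⊗ I_n) = α P`,
`(Λ_ηᵀ ⊗ I_m) L₁₂ = 0`, `L₂₁ (Λ_ε ⊗ I_n) = 0` and `L₂₂ = 0`. Since `L_κ Λ_κ = 0` and
`(Λ_ηᵀ ⊗ I_m) Σ_{η,P} (Λ_ε ⊗ I_n) = P`, the block form satisfies these equations. Conversely,
`L₁₁ - α Σ_{η,P}`, `L₁₂` and `L₂₁` are pencils `D` annihilated by the Kronecker factors (on one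
side only for the off-diagonal blocks, which is the case `ε = 0` or `η = 0`). Entrywise in the
`I_m`, `I_n` factors this is the scalar equation `Λ_ηᵀ (λ A + B) Λ_ε = 0`, i.e. the vanishing of
all antidiagonal sums `∑_{i+j=s+1} A i j + ∑_{i+j=s} B i j`. Such a pencil is `B₁ L_ε + L_ηᵀ B₂`
for the partial antidiagonal sums `B₂ p q = -∑_{i ≤ p} (B i (p+q-i) + A i (p+q+1-i))` and
`B₁ = -B - B₂`: the `λ`-coefficients match by telescoping, and the boundary conditions
`B₂ η q = 0`, `B₂ p 0 = A (p+1) 0`, `A 0 0 = 0` are the vanishing of the full antidiagonal sums.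
-/

namespace BlockKronecker

open Finset

/-- For `A`, `B` supported in `[0, η] × [0, ε]`, this is the vanishing of the coefficient of
`λ ^ (η + ε - s)` in `Λ_ηᵀ (λ A + B) Λ_ε`. -/
def AntidiagonalSumsVanish {M : Type*} [AddCommMonoid M] (A B : ℕ → ℕ → M) : Prop :=
  ∀ s, ∑ i ∈ range (s + 2), A i (s + 1 - i) + ∑ i ∈ range (s + 1), B i (s - i) = 0

section Antidiagonal

variable {M : Type*} [AddCommGroup M] (A B : ℕ → ℕ → M)

def kernelB₂ (p q : ℕ) : M :=
  -∑ i ∈ range (p + 1), (B i (p + q - i) + A i (p + q + 1 - i))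

def kernelB₁ (p q : ℕ) : M := -B p q - kernelB₂ A B p q

lemma kernelB₂_succ (p q : ℕ) :
    kernelB₂ A B (p + 1) q = kernelB₂ A B p (q + 1) - (B (p + 1) q + A (p + 1) (q + 1)) := by
  rw [kernelB₂, kernelB₂, sum_range_succ, show p + 1 + q = p + (q + 1) by omega,
    show p + (q + 1) - (p + 1) = q by omega, show p + (q + 1) + 1 - (p + 1) = q + 1 by omega]
  abel

variable {A B}

lemma kernelB₂_zero_right (hsum : AntidiagonalSumsVanish A B) (p : ℕ) :
    kernelB₂ A B p 0 = A (p + 1) 0 := by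
  have h := hsum p
  rw [sum_range_succ, Nat.sub_self] at h
  rw [kernelB₂, neg_eq_iff_add_eq_zero, ← h]
  simp only [add_zero, sum_add_distrib]
  abel

lemma kernelB₂_eq_zero {η : ℕ} (hA : ∀ i j, η < i → A i j = 0) (hB : ∀ i j, η < i → B i j = 0)
    (hsum : AntidiagonalSumsVanish A B) (q : ℕ) : kernelB₂ A B η q = 0 := by
  rw [kernelB₂, sum_add_distrib, neg_eq_zero, add_comm,
    ← eventually_constant_sum (fun i hi => hA i _ hi) (show η + 1 ≤ η + q + 2 by omega),
    ← eventually_constant_sum (fun i hi => hB i _ hi) (show η + 1 ≤ η + q + 1 by omega)]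
  exact hsum (η + q)

lemma kernelB₁_eq_zero {ε : ℕ} (hA : ∀ i j, ε < j → A i j = 0) (hB : ∀ i j, ε < j → B i j = 0)
    (p : ℕ) : kernelB₁ A B p ε = 0 := by
  have hlow : ∑ i ∈ range p, (B i (p + ε - i) + A i (p + ε + 1 - i)) = 0 :=
    sum_eq_zero fun i hi => by
      rw [hB _ _ (by simp at hi; omega), hA _ _ (by simp at hi; omega), add_zero]
  rw [kernelB₁, kernelB₂, sum_range_succ, hlow, Nat.add_sub_cancel_left,
    show p + ε + 1 - p = ε + 1 by omega, hA _ _ (Nat.lt_succ_self ε)]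
  abel

lemma eq_kernelB₁_add_kernelB₂ (h00 : A 0 0 = 0) (hsum : AntidiagonalSumsVanish A B) (p q : ℕ) :
    A p q = (if 0 < q then kernelB₁ A B p (q - 1) else 0)
      + (if 0 < p then kernelB₂ A B (p - 1) q else 0) := by
  rcases p with _ | p <;> rcases q with _ | q
  · simpa using h00
  · simp [kernelB₁, kernelB₂]
  · simpa using (kernelB₂_zero_right hsum p).symm
  · rw [if_pos q.succ_pos, if_pos p.succ_pos, Nat.add_sub_cancel, Nat.add_sub_cancel, kernelB₁,
      kernelB₂_succ]
    abel

lemma eq_neg_kernelB₁_sub_kernelB₂ {η ε : ℕ}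
    (hAη : ∀ i j, η < i → A i j = 0) (hBη : ∀ i j, η < i → B i j = 0)
    (hAε : ∀ i j, ε < j → A i j = 0) (hBε : ∀ i j, ε < j → B i j = 0)
    (hsum : AntidiagonalSumsVanish A B) {p q : ℕ} (hp : p ≤ η) (hq : q ≤ ε) :
    B p q = -(if q < ε then kernelB₁ A B p q else 0) - (if p < η then kernelB₂ A B p q else 0) := by
  have h₁ : ¬q < ε → kernelB₁ A B p q = 0 := fun h => by
    rw [show q = ε by omega, kernelB₁_eq_zero hAε hBε]
  have h₂ : ¬p < η → kernelB₂ A B p q = 0 := fun h => by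
    rw [show p = η by omega, kernelB₂_eq_zero hAη hBη hsum]
  have hB : B p q = -kernelB₁ A B p q - kernelB₂ A B p q := by
    rw [kernelB₁]
    abel
  split_ifs with hqε hpη <;> simp_all

end Antidiagonal

section Coefficients

lemma sum_range_sum_range_ite_add_eq {M : Type*} [AddCommMonoid M] {η ε : ℕ} {F : ℕ → ℕ → M}
    (hη : ∀ i j, η < i → F i j = 0) (hε : ∀ i j, ε < j → F i j = 0) (t : ℕ) :
    ∑ i ∈ range (η + 1), ∑ j ∈ range (ε + 1), (if i + j = t then F i j else 0)
      = ∑ i ∈ range (t + 1), F i (t - i) := by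
  have inner (i : ℕ) : ∑ j ∈ range (ε + 1), (if i + j = t then F i j else 0)
      = if i ≤ t then F i (t - i) else 0 := by
    split_ifs with hi
    · simp_rw [show ∀ j, i + j = t ↔ t - i = j by omega]
      rw [sum_ite_eq]
      split_ifs with hmem
      · rfl
      · exact (hε _ _ (by simp at hmem; omega)).symm
    · exact sum_eq_zero fun j _ => if_neg (by omega)
  rw [sum_congr rfl fun i _ => inner i,
    ← eventually_constant_sum (fun i hi => by simp [hη i _ hi]) (show η + 1 ≤ η + t + 2 by omega),
    eventually_constant_sum (fun i hi => if_neg (by omega)) (show t + 1 ≤ η + t + 2 by omega)]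
  exact sum_congr rfl fun i hi => if_pos (by simp at hi; omega)

variable {R : Type*} [CommSemiring R]

lemma coeff_X_pow_mul_pencil (a b : R) (e u : ℕ) :
    (X ^ e * (X * C a + C b)).coeff u
      = (if u = e + 1 then a else 0) + (if u = e then b else 0) := by
  rw [show (X : R[X]) ^ e * (X * C a + C b) = C a * X ^ (e + 1) + C b * X ^ e by ring, coeff_add,
    coeff_C_mul_X_pow, coeff_C_mul_X_pow]

lemma antidiagonalSumsVanish_of_sum_eq_zero {η ε : ℕ} {a b : ℕ → ℕ → R}
    (haη : ∀ i j, η < i → a i j = 0) (hbη : ∀ i j, η < i → b i j = 0)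
    (haε : ∀ i j, ε < j → a i j = 0) (hbε : ∀ i j, ε < j → b i j = 0)
    (h : ∑ p ∈ range (η + 1), ∑ q ∈ range (ε + 1),
      X ^ ((η - p) + (ε - q)) * (X * C (a p q) + C (b p q)) = 0) :
    a 0 0 = 0 ∧ AntidiagonalSumsVanish a b := by
  have hcoeff (u : ℕ) : ∑ p ∈ range (η + 1), ∑ q ∈ range (ε + 1),
      ((if u = (η - p) + (ε - q) + 1 then a p q else 0)
        + (if u = (η - p) + (ε - q) then b p q else 0)) = 0 := by
    simpa only [finsetSum_coeff, coeff_X_pow_mul_pencil, coeff_zero] using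
      congrArg (coeff · u) h
  refine ⟨?_, fun s => ?_⟩
  · have h0 : ∑ p ∈ range (η + 1), ∑ q ∈ range (ε + 1), (if p + q = 0 then a p q else 0) = 0 := by
      refine .trans ?_ (hcoeff (η + ε + 1))
      refine sum_congr rfl fun p hp => sum_congr rfl fun q hq => ?_
      simp only [mem_range] at hp hq
      rw [if_neg (show ¬η + ε + 1 = η - p + (ε - q) by omega), add_zero]
      exact if_congr (by omega) rfl rfl
    rw [sum_range_sum_range_ite_add_eq haη haε] at h0
    simpa using h0
  · rw [← sum_range_sum_range_ite_add_eq haη haε, ← sum_range_sum_range_ite_add_eq hbη hbε]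
    simp only [← sum_add_distrib]
    by_cases hs : s ≤ η + ε
    · refine .trans ?_ (hcoeff (η + ε - s))
      refine sum_congr rfl fun p hp => sum_congr rfl fun q hq => ?_
      simp only [mem_range] at hp hq
      exact congrArg₂ (· + ·) (if_congr (by omega) rfl rfl) (if_congr (by omega) rfl rfl)
    · refine sum_eq_zero fun p hp => sum_eq_zero fun q hq => ?_
      simp only [mem_range] at hp hq
      rw [if_neg (by omega), if_neg (by omega), add_zero]

end Coefficients

section ExtendByZero

variable {R : Type*} [Zero R] {k l : ℕ} (A : Matrix (Fin k) (Fin l) R)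

def extendByZero (i j : ℕ) : R :=
  if h : i < k ∧ j < l then A ⟨i, h.1⟩ ⟨j, h.2⟩ else 0

@[simp]
lemma extendByZero_val (p : Fin k) (q : Fin l) : extendByZero A p q = A p q := by
  simp [extendByZero]

lemma extendByZero_of_le_left {i : ℕ} (j : ℕ) (hi : k ≤ i) : extendByZero A i j = 0 :=
  dif_neg (by omega)

lemma extendByZero_of_le_right (i : ℕ) {j : ℕ} (hj : l ≤ j) : extendByZero A i j = 0 :=
  dif_neg (by omega)

end ExtendByZero

section Pencils

lemma sum_mul_Lk {ε : ℕ} (f : ℕ → ℝ[X]) (q : Fin (ε + 1)) :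
    ∑ r : Fin ε, f r * Lk ε r q
      = (if (q : ℕ) < ε then -f q else 0) + (if 0 < (q : ℕ) then X * f (q - 1) else 0) := by
  have hterm (r : ℕ) : f r * (if (q : ℕ) = r then -1 else if (q : ℕ) = r + 1 then X else 0)
      = (if r = q then -f r else 0) + (if r + 1 = q then X * f r else 0) := by
    split_ifs <;> first | omega | ring
  simp only [Lk, of_apply]
  rw [sum_congr rfl fun (r : Fin ε) _ => hterm r, sum_add_distrib,
    Fin.sum_univ_eq_sum_range (fun r => if r = (q : ℕ) then -f r else 0),
    Fin.sum_univ_eq_sum_range (fun r => if r + 1 = (q : ℕ) then X * f r else 0),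
    sum_ite_eq']
  simp only [mem_range]
  obtain ⟨_ | j, hj⟩ := q
  · simp
  · simp [show j < ε by omega]

lemma sum_Lk_mul {η : ℕ} (f : ℕ → ℝ[X]) (p : Fin (η + 1)) :
    ∑ s : Fin η, Lk η s p * f s
      = (if (p : ℕ) < η then -f p else 0) + (if 0 < (p : ℕ) then X * f (p - 1) else 0) := by
  simp only [mul_comm (Lk η _ p), sum_mul_Lk]

lemma Lk_mul_Lam (κ : ℕ) : Lk κ * Lam κ = 0 := by
  ext i j : 1
  rw [mul_apply, Matrix.zero_apply, Fintype.sum_eq_add i.castSucc i.succ Fin.castSucc_lt_succ.ne]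
  · simp only [Lk, Lam, of_apply, Fin.val_castSucc, Fin.val_succ, if_true,
      if_neg (Nat.succ_ne_self _)]
    rw [← pow_succ', show κ - (i + 1) + 1 = κ - i by omega]
    ring
  · intro t ht
    have h₁ : (t : ℕ) ≠ i := fun h => ht.1 (Fin.ext h)
    have h₂ : (t : ℕ) ≠ i + 1 := fun h => ht.2 (Fin.ext h)
    simp [Lk, h₁, h₂]

lemma Lam_transpose_mul_mul_Lam_apply {η ε : ℕ} (D : Matrix (Fin (η + 1)) (Fin (ε + 1)) ℝ[X])
    (i j : Fin 1) :
    ((Lam η)ᵀ * D * Lam ε) i j = ∑ p : Fin (η + 1), ∑ q : Fin (ε + 1),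
      X ^ ((η - p) + (ε - q)) * D p q := by
  simp only [mul_apply, transpose_apply, Lam, of_apply, sum_mul]
  rw [sum_comm]
  exact sum_congr rfl fun p _ => sum_congr rfl fun q _ => by ring

lemma Lam_zero : Lam 0 = 1 := by
  ext i j : 1
  fin_cases i; fin_cases j
  simp [Lam]

theorem exists_pencilM_eq_of_Lam_sandwich_eq_zero {η ε : ℕ}
    (A B : Matrix (Fin (η + 1)) (Fin (ε + 1)) ℝ) (h : (Lam η)ᵀ * pencilM A B * Lam ε = 0) :
    ∃ (B₁ : Matrix (Fin (η + 1)) (Fin ε) ℝ) (B₂ : Matrix (Fin η) (Fin (ε + 1)) ℝ),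
      pencilM A B = B₁.map C * Lk ε + (Lk η)ᵀ * B₂.map C := by
  set a := extendByZero A
  set b := extendByZero B
  have hpoly : ∑ p ∈ range (η + 1), ∑ q ∈ range (ε + 1),
      X ^ ((η - p) + (ε - q)) * (X * C (a p q) + C (b p q)) = 0 := by
    have h00 := congrFun (congrFun h 0) 0
    rw [Lam_transpose_mul_mul_Lam_apply, Matrix.zero_apply] at h00
    rw [← Fin.sum_univ_eq_sum_range]
    refine .trans ?_ h00
    refine sum_congr rfl fun p _ => ?_
    rw [← Fin.sum_univ_eq_sum_range]
    simp only [a, b, extendByZero_val, pencilM, of_apply]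
  have haη (i j : ℕ) (hi : η < i) : a i j = 0 := extendByZero_of_le_left A j hi
  have hbη (i j : ℕ) (hi : η < i) : b i j = 0 := extendByZero_of_le_left B j hi
  have haε (i j : ℕ) (hj : ε < j) : a i j = 0 := extendByZero_of_le_right A i hj
  have hbε (i j : ℕ) (hj : ε < j) : b i j = 0 := extendByZero_of_le_right B i hj
  obtain ⟨h00, hsum⟩ := antidiagonalSumsVanish_of_sum_eq_zero haη hbη haε hbε hpoly
  refine ⟨of fun p r => kernelB₁ a b p r, of fun s q => kernelB₂ a b s q, ?_⟩
  ext p q : 1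
  have hA : A p q = a p q := (extendByZero_val A p q).symm
  have hB : B p q = b p q := (extendByZero_val B p q).symm
  rw [pencilM, of_apply, hA, hB, eq_kernelB₁_add_kernelB₂ h00 hsum,
    eq_neg_kernelB₁_sub_kernelB₂ haη hbη haε hbε hsum p.is_le q.is_le]
  simp only [Matrix.add_apply, mul_apply, map_apply, of_apply, transpose_apply]
  rw [sum_mul_Lk (fun r => C (kernelB₁ a b p r)) q, sum_Lk_mul (fun s => C (kernelB₂ a b s q)) p]
  simp only [apply_ite C, map_add, map_neg, map_sub, map_zero]
  split_ifs <;> ring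

end Pencils

section KroneckerOne

lemma ext_submatrix_prod {ι κ α β R : Type*} {M N : Matrix (ι × α) (κ × β) R}
    (h : ∀ a b, M.submatrix (·, a) (·, b) = N.submatrix (·, a) (·, b)) : M = N := by
  ext ⟨p, a⟩ ⟨q, b⟩ : 1
  exact congrFun (congrFun (h a b) p) q

variable {R : Type*} [CommSemiring R] {ι ι' κ κ' ρ ρ' γ γ' α β : Type*}
  [Fintype ι] [Fintype κ] [Fintype α] [Fintype β] [DecidableEq α] [DecidableEq β]

lemma submatrix_kronecker_one_mul (K : Matrix ι' ι R) (M : Matrix (ι × α) γ R) (a : α)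
    (g : γ' → γ) :
    ((K ⊗ₖ (1 : Matrix α α R)) * M).submatrix (·, a) g = K * M.submatrix (·, a) g := by
  ext i y
  simp [mul_apply, Fintype.sum_prod_type, one_apply]

lemma submatrix_mul_kronecker_one (M : Matrix ρ (κ × β) R) (K : Matrix κ κ' R) (f : ρ' → ρ)
    (b : β) :
    (M * (K ⊗ₖ (1 : Matrix β β R))).submatrix f (·, b) = M.submatrix f (·, b) * K := by
  ext x j
  simp [mul_apply, Fintype.sum_prod_type, one_apply]

end KroneckerOne

section Lifting

lemma submatrix_pencilM {ρ γ ρ' γ' : Type*} (A B : Matrix ρ γ ℝ) (f : ρ' → ρ) (g : γ' → γ) :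
    (pencilM A B).submatrix f g = pencilM (A.submatrix f g) (B.submatrix f g) := rfl

theorem exists_pencilM_eq_of_kronecker_sandwich_eq_zero {m n η ε : ℕ}
    (A B : Matrix (Fin (η + 1) × Fin m) (Fin (ε + 1) × Fin n) ℝ)
    (h : ((Lam η)ᵀ ⊗ₖ (1 : Matrix (Fin m) (Fin m) ℝ[X])) * pencilM A B
      * (Lam ε ⊗ₖ (1 : Matrix (Fin n) (Fin n) ℝ[X])) = 0) :
    ∃ (B₁ : Matrix (Fin (η + 1) × Fin m) (Fin ε × Fin n) ℝ)
      (B₂ : Matrix (Fin η × Fin m) (Fin (ε + 1) × Fin n) ℝ),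
      pencilM A B = B₁.map C * (Lk ε ⊗ₖ (1 : Matrix (Fin n) (Fin n) ℝ[X]))
        + ((Lk η)ᵀ ⊗ₖ (1 : Matrix (Fin m) (Fin m) ℝ[X])) * B₂.map C := by
  have hblock (a : Fin m) (b : Fin n) := exists_pencilM_eq_of_Lam_sandwich_eq_zero
    (A.submatrix (·, a) (·, b)) (B.submatrix (·, a) (·, b)) (by
      simpa [submatrix_mul_kronecker_one, submatrix_kronecker_one_mul, submatrix_pencilM] using
        congrArg (submatrix · (·, a) (·, b)) h)
  choose B₁ B₂ hB using hblock
  refine ⟨of fun x y => B₁ x.2 y.2 x.1 y.1, of fun x y => B₂ x.2 y.2 x.1 y.1, ?_⟩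
  refine ext_submatrix_prod fun a b => ?_
  simp only [submatrix_pencilM, hB, submatrix_add, Pi.add_apply, submatrix_mul_kronecker_one,
    submatrix_kronecker_one_mul]
  rfl

theorem exists_pencilM_eq_of_kronecker_Lam_mul_eq_zero {m η : ℕ} {γ : Type*}
    (A B : Matrix (Fin (η + 1) × Fin m) γ ℝ)
    (h : ((Lam η)ᵀ ⊗ₖ (1 : Matrix (Fin m) (Fin m) ℝ[X])) * pencilM A B = 0) :
    ∃ C₂ : Matrix (Fin η × Fin m) γ ℝ,
      pencilM A B = ((Lk η)ᵀ ⊗ₖ (1 : Matrix (Fin m) (Fin m) ℝ[X])) * C₂.map C := by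
  have hcol (a : Fin m) (y : γ) := exists_pencilM_eq_of_Lam_sandwich_eq_zero (ε := 0)
    (A.submatrix (·, a) fun _ => y) (B.submatrix (·, a) fun _ => y) (by
      rw [Lam_zero, Matrix.mul_one, ← submatrix_pencilM, ← submatrix_kronecker_one_mul, h,
        submatrix_zero]
      rfl)
  choose B₁ B₂ hB using hcol
  refine ⟨of fun x y => B₂ x.2 y x.1 0, ?_⟩
  ext ⟨p, a⟩ y : 1
  have hsub : ((of fun x y => B₂ x.2 y x.1 0 : Matrix (Fin η × Fin m) γ ℝ).map C).submatrix
      (·, a) (fun _ : Fin 1 => y) = (B₂ a y).map C := by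
    ext s j : 1
    rw [Fin.fin_one_eq_zero j]
    rfl
  have hempty : (B₁ a y).map C * Lk 0 = 0 := by
    ext i j : 1
    simp [mul_apply]
  have := congrFun (congrFun (hB a y) p) 0
  rwa [hempty, zero_add ((Lk η)ᵀ * (B₂ a y).map C), ← hsub, ← submatrix_kronecker_one_mul] at this

lemma transpose_pencilM {ρ γ : Type*} (A B : Matrix ρ γ ℝ) :
    (pencilM A B)ᵀ = pencilM Aᵀ Bᵀ := rfl

theorem exists_pencilM_eq_of_mul_kronecker_Lam_eq_zero {n ε : ℕ} {ρ : Type*}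
    (A B : Matrix ρ (Fin (ε + 1) × Fin n) ℝ)
    (h : pencilM A B * (Lam ε ⊗ₖ (1 : Matrix (Fin n) (Fin n) ℝ[X])) = 0) :
    ∃ C₁ : Matrix ρ (Fin ε × Fin n) ℝ,
      pencilM A B = C₁.map C * (Lk ε ⊗ₖ (1 : Matrix (Fin n) (Fin n) ℝ[X])) := by
  obtain ⟨C₁, hC⟩ := exists_pencilM_eq_of_kronecker_Lam_mul_eq_zero Aᵀ Bᵀ (by
    rw [← transpose_one, kroneckerMap_transpose, ← transpose_pencilM, ← transpose_mul, h,
      transpose_zero])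
  refine ⟨C₁ᵀ, ?_⟩
  rw [← transpose_transpose (pencilM A B), transpose_pencilM, hC, transpose_mul,
    ← kroneckerMap_transpose, transpose_transpose, transpose_one, transpose_map]

end Lifting

section SigmaP

variable (m n ε η : ℕ) (Pc : ℕ → Matrix (Fin m) (Fin n) ℝ)

lemma natDegree_SigmaP_le (i : Fin (η + 1) × Fin m) (j : Fin (ε + 1) × Fin n) :
    (SigmaP m n ε η Pc i j).natDegree ≤ 1 := by
  simp only [SigmaP, of_apply]
  split_ifs <;> compute_degree!

lemma Lam_mul_SigmaP_submatrix_mul_Lam (a : Fin m) (b : Fin n) (i j : Fin 1) :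
    ((Lam η)ᵀ * (SigmaP m n ε η Pc).submatrix (·, a) (·, b) * Lam ε) i j
      = ∑ t ∈ range (ε + η + 1 + 1), X ^ t * C (Pc t a b) := by
  set f : ℕ → ℝ[X] := fun t => X ^ t * C (Pc t a b)
  have hlast (q : Fin (ε + 1)) : (q : ℕ) = ε ↔ q = Fin.last ε := by rw [Fin.ext_iff, Fin.val_last]
  rw [Lam_transpose_mul_mul_Lam_apply, Fin.sum_univ_succ, Fin.sum_univ_succ]
  simp only [submatrix_apply, SigmaP, of_apply, Fin.val_zero, Fin.val_succ, true_and, if_true,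
    Nat.succ_ne_zero, false_and, if_false, hlast, mul_ite, mul_zero, Fintype.sum_ite_eq',
    Fin.val_last, Nat.sub_self, Nat.sub_zero, add_zero]
  have hlow : ∑ i : Fin η, X ^ (η - (i + 1)) * C (Pc (η - (i + 1)) a b) = ∑ t ∈ range η, f t := by
    rw [← sum_range_reflect, Fin.sum_univ_eq_sum_range (fun i => f (η - (i + 1)))]
    exact sum_congr rfl fun i _ => by rw [Nat.sub_sub, add_comm 1 i]
  have hmid : ∑ j : Fin ε, X ^ (η + (ε - (j + 1))) * C (Pc (ε + η - (j + 1)) a b)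
      = ∑ j ∈ range ε, f (η + j) := by
    rw [← sum_range_reflect, ← Fin.sum_univ_eq_sum_range (fun j => f (η + (ε - 1 - j)))]
    refine sum_congr rfl fun j _ => ?_
    rw [show ε + η - (j + 1) = η + (ε - 1 - j) by omega, show ε - (j + 1) = ε - 1 - j by omega]
  rw [hlow, hmid, show ε + η + 1 + 1 = η + (ε + 1 + 1) by omega, sum_range_add, sum_range_succ,
    sum_range_succ]
  simp only [f, show η + ε = ε + η by omega, show η + (ε + 1) = ε + η + 1 by omega, pow_succ]
  ring

lemma kronecker_Lam_sandwich_SigmaP :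
    ((Lam η)ᵀ ⊗ₖ (1 : Matrix (Fin m) (Fin m) ℝ[X])) * SigmaP m n ε η Pc
      * (Lam ε ⊗ₖ (1 : Matrix (Fin n) (Fin n) ℝ[X]))
      = of fun p q => polyOf m n (ε + η + 1) Pc p.2 q.2 := by
  refine ext_submatrix_prod fun a b => ?_
  rw [submatrix_mul_kronecker_one, submatrix_kronecker_one_mul]
  ext i j : 1
  rw [Lam_mul_SigmaP_submatrix_mul_Lam]
  simp [polyOf]

end SigmaP

section Blocks

lemma pencilM_eq_fromBlocks {ρ₁ ρ₂ γ₁ γ₂ : Type*} (A B : Matrix (ρ₁ ⊕ ρ₂) (γ₁ ⊕ γ₂) ℝ) :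
    pencilM A B = fromBlocks (pencilM A.toBlocks₁₁ B.toBlocks₁₁) (pencilM A.toBlocks₁₂ B.toBlocks₁₂)
      (pencilM A.toBlocks₂₁ B.toBlocks₂₁) (pencilM A.toBlocks₂₂ B.toBlocks₂₂) :=
  (fromBlocks_toBlocks _).symm

lemma pencilM_coeff_eq {ρ γ : Type*} (D : Matrix ρ γ ℝ[X]) (hD : ∀ i j, (D i j).natDegree ≤ 1) :
    pencilM (D.map (coeff · 1)) (D.map (coeff · 0)) = D := by
  ext i j : 1
  simp only [pencilM, of_apply, map_apply]
  rw [mul_comm]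
  exact (eq_X_add_C_of_natDegree_le_one (hD i j)).symm

lemma kronecker_Lk_mul_kronecker_Lam (κ n : ℕ) :
    (Lk κ ⊗ₖ (1 : Matrix (Fin n) (Fin n) ℝ[X])) * (Lam κ ⊗ₖ (1 : Matrix (Fin n) (Fin n) ℝ[X]))
      = 0 := by
  rw [← mul_kronecker_mul, Lk_mul_Lam, zero_kronecker]

lemma kronecker_Lam_transpose_mul_kronecker_Lk_transpose (κ m : ℕ) :
    ((Lam κ)ᵀ ⊗ₖ (1 : Matrix (Fin m) (Fin m) ℝ[X]))
      * ((Lk κ)ᵀ ⊗ₖ (1 : Matrix (Fin m) (Fin m) ℝ[X])) = 0 := by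
  rw [← mul_kronecker_mul, ← transpose_mul, Lk_mul_Lam, transpose_zero, zero_kronecker]

variable {m n ε η : ℕ} (Pc : ℕ → Matrix (Fin m) (Fin n) ℝ) (α : ℝ)

theorem kronecker_Lam_sandwich_eq_iff (A B : Matrix (Fin (η + 1) × Fin m) (Fin (ε + 1) × Fin n) ℝ) :
    ((Lam η)ᵀ ⊗ₖ (1 : Matrix (Fin m) (Fin m) ℝ[X])) * pencilM A B
        * (Lam ε ⊗ₖ (1 : Matrix (Fin n) (Fin n) ℝ[X]))
        = (of fun p q => C α * polyOf m n (ε + η + 1) Pc p.2 q.2) ↔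
      ∃ (B₁ : Matrix (Fin (η + 1) × Fin m) (Fin ε × Fin n) ℝ)
        (B₂ : Matrix (Fin η × Fin m) (Fin (ε + 1) × Fin n) ℝ),
        pencilM A B = C α • SigmaP m n ε η Pc
          + B₁.map C * (Lk ε ⊗ₖ (1 : Matrix (Fin n) (Fin n) ℝ[X]))
          + ((Lk η)ᵀ ⊗ₖ (1 : Matrix (Fin m) (Fin m) ℝ[X])) * B₂.map C := by
  have hSigma : ((Lam η)ᵀ ⊗ₖ (1 : Matrix (Fin m) (Fin m) ℝ[X])) * (C α • SigmaP m n ε η Pc)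
      * (Lam ε ⊗ₖ (1 : Matrix (Fin n) (Fin n) ℝ[X]))
      = of fun p q => C α * polyOf m n (ε + η + 1) Pc p.2 q.2 := by
    conv_lhs => rw [Matrix.mul_smul, Matrix.smul_mul, kronecker_Lam_sandwich_SigmaP]
    rfl
  constructor
  · intro h
    set D := pencilM A B - C α • SigmaP m n ε η Pc
    have hD : ∀ i j, (D i j).natDegree ≤ 1 := fun i j => by
      simp only [D, Matrix.sub_apply, Matrix.smul_apply, smul_eq_mul]
      refine (natDegree_sub_le _ _).trans (max_le ?_ ((natDegree_C_mul_le _ _).trans ?_))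
      · simp only [pencilM, of_apply]
        compute_degree!
      · exact natDegree_SigmaP_le m n ε η Pc i j
    obtain ⟨B₁, B₂, hB⟩ := exists_pencilM_eq_of_kronecker_sandwich_eq_zero _ _ (by
      rw [pencilM_coeff_eq D hD, Matrix.mul_sub, Matrix.sub_mul, h, hSigma, sub_self])
    refine ⟨B₁, B₂, ?_⟩
    rw [add_assoc, ← hB, pencilM_coeff_eq D hD, add_sub_cancel]
  · rintro ⟨B₁, B₂, hB⟩
    conv_lhs => rw [hB, Matrix.mul_add, Matrix.mul_add, Matrix.add_mul, Matrix.add_mul, hSigma,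
      ← Matrix.mul_assoc _ _ (B₂.map C), kronecker_Lam_transpose_mul_kronecker_Lk_transpose,
      Matrix.mul_assoc _ _ (Lam ε ⊗ₖ _), Matrix.mul_assoc _ (Lk ε ⊗ₖ _),
      kronecker_Lk_mul_kronecker_Lam]
    simp

theorem GRect_iff_blocks (Lx Ly : Matrix ((Fin (η + 1) × Fin m) ⊕ (Fin ε × Fin n))
      ((Fin (ε + 1) × Fin n) ⊕ (Fin η × Fin m)) ℝ) :
    GRect m n ε η Pc Lx Ly α ↔
      ((Lam η)ᵀ ⊗ₖ (1 : Matrix (Fin m) (Fin m) ℝ[X])) * pencilM Lx.toBlocks₁₁ Ly.toBlocks₁₁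
          * (Lam ε ⊗ₖ (1 : Matrix (Fin n) (Fin n) ℝ[X]))
          = (of fun p q => C α * polyOf m n (ε + η + 1) Pc p.2 q.2) ∧
        ((Lam η)ᵀ ⊗ₖ (1 : Matrix (Fin m) (Fin m) ℝ[X])) * pencilM Lx.toBlocks₁₂ Ly.toBlocks₁₂
          = 0 ∧
        pencilM Lx.toBlocks₂₁ Ly.toBlocks₂₁ * (Lam ε ⊗ₖ (1 : Matrix (Fin n) (Fin n) ℝ[X])) = 0 ∧
        pencilM Lx.toBlocks₂₂ Ly.toBlocks₂₂ = 0 := by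
  rw [GRect, pencilM_eq_fromBlocks, fromBlocks_multiply, fromBlocks_multiply, fromBlocks_inj]
  simp

end Blocks

end BlockKronecker

open BlockKronecker

theorem stmt3_general (m n ε η : ℕ) (Pc : ℕ → Matrix (Fin m) (Fin n) ℝ)
    (Lx Ly : Matrix ((Fin (η + 1) × Fin m) ⊕ (Fin ε × Fin n))
      ((Fin (ε + 1) × Fin n) ⊕ (Fin η × Fin m)) ℝ) :
    (∃ α : ℝ, GRect m n ε η Pc Lx Ly α) ↔
    ∃ (α : ℝ) (B₁ : Matrix (Fin (η + 1) × Fin m) (Fin ε × Fin n) ℝ)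
      (B₂ : Matrix (Fin η × Fin m) (Fin (ε + 1) × Fin n) ℝ)
      (C₁ : Matrix (Fin ε × Fin n) (Fin ε × Fin n) ℝ)
      (C₂ : Matrix (Fin η × Fin m) (Fin η × Fin m) ℝ),
      pencilM Lx Ly = Matrix.fromBlocks
        (C α • SigmaP m n ε η Pc
          + B₁.map C * (Lk ε ⊗ₖ (1 : Matrix (Fin n) (Fin n) (Polynomial ℝ)))
          + ((Lk η)ᵀ ⊗ₖ (1 : Matrix (Fin m) (Fin m) (Polynomial ℝ))) * B₂.map C)
        (((Lk η)ᵀ ⊗ₖ (1 : Matrix (Fin m) (Fin m) (Polynomial ℝ))) * C₂.map C)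
        (C₁.map C * (Lk ε ⊗ₖ (1 : Matrix (Fin n) (Fin n) (Polynomial ℝ))))
        (0 : Matrix (Fin ε × Fin n) (Fin η × Fin m) (Polynomial ℝ)) := by
  constructor
  · rintro ⟨α, hG⟩
    obtain ⟨h₁₁, h₁₂, h₂₁, h₂₂⟩ := (GRect_iff_blocks Pc α Lx Ly).1 hG
    obtain ⟨B₁, B₂, hB⟩ := (kronecker_Lam_sandwich_eq_iff Pc α _ _).1 h₁₁
    obtain ⟨C₂, hC₂⟩ := exists_pencilM_eq_of_kronecker_Lam_mul_eq_zero _ _ h₁₂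
    obtain ⟨C₁, hC₁⟩ := exists_pencilM_eq_of_mul_kronecker_Lam_eq_zero _ _ h₂₁
    exact ⟨α, B₁, B₂, C₁, C₂, by rw [pencilM_eq_fromBlocks, hB, hC₂, hC₁, h₂₂]⟩
  · rintro ⟨α, B₁, B₂, C₁, C₂, hL⟩
    rw [pencilM_eq_fromBlocks, fromBlocks_inj] at hL
    obtain ⟨h₁₁, h₁₂, h₂₁, h₂₂⟩ := hL
    refine ⟨α, (GRect_iff_blocks Pc α Lx Ly).2
      ⟨(kronecker_Lam_sandwich_eq_iff Pc α _ _).2 ⟨B₁, B₂, h₁₁⟩, ?_, ?_, h₂₂⟩⟩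
    · rw [h₁₂, ← Matrix.mul_assoc, kronecker_Lam_transpose_mul_kronecker_Lk_transpose,
        Matrix.zero_mul]
    · rw [h₂₁, Matrix.mul_assoc, kronecker_Lk_mul_kronecker_Lam, Matrix.mul_zero]

theorem stmt3 (m n ε η : ℕ) (Pc : ℕ → Matrix (Fin m) (Fin n) ℝ)
    (hdeg : Pc (ε + η + 1) ≠ 0)
    (Lx Ly : Matrix ((Fin (η + 1) × Fin m) ⊕ (Fin ε × Fin n))
      ((Fin (ε + 1) × Fin n) ⊕ (Fin η × Fin m)) ℝ) :
    (∃ α : ℝ, GRect m n ε η Pc Lx Ly α) ↔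
    ∃ (α : ℝ) (B₁ : Matrix (Fin (η + 1) × Fin m) (Fin ε × Fin n) ℝ)
      (B₂ : Matrix (Fin η × Fin m) (Fin (ε + 1) × Fin n) ℝ)
      (C₁ : Matrix (Fin ε × Fin n) (Fin ε × Fin n) ℝ)
      (C₂ : Matrix (Fin η × Fin m) (Fin η × Fin m) ℝ),
      pencilM Lx Ly = Matrix.fromBlocks
        (C α • SigmaP m n ε η Pc
          + B₁.map C * (Lk ε ⊗ₖ (1 : Matrix (Fin n) (Fin n) (Polynomial ℝ)))
          + ((Lk η)ᵀ ⊗ₖ (1 : Matrix (Fin m) (Fin m) (Polynomial ℝ))) * B₂.map C)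
        (((Lk η)ᵀ ⊗ₖ (1 : Matrix (Fin m) (Fin m) (Polynomial ℝ))) * C₂.map C)
        (C₁.map C * (Lk ε ⊗ₖ (1 : Matrix (Fin n) (Fin n) (Polynomial ℝ))))
        (0 : Matrix (Fin ε × Fin n) (Fin η × Fin m) (Polynomial ℝ)) :=
  stmt3_general m n ε η Pc Lx Ly
end
end

section
/- Let P(λ) = Σ_{i=0}^k P_i λ^i with P_i ∈ ℝ^{m×n} be a matrix polynomial of degree k = ε + η + 1 (ε, η ≥ 0). Then G_{η+1}(P) is an ℝ-linear subspace of the real vector space of all ((η+1)m+εn) × ((ε+1)n+ηm) matrix pencils, and its dimension equals (εn + ηm)² + (ε + η)mn + 1. -/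
open Matrix Polynomial
open scoped Kronecker

noncomputable section

/-! ### Auxiliary development -/

abbrev BKRows (m n ε η : ℕ) := (Fin (η + 1) × Fin m) ⊕ (Fin ε × Fin n)
abbrev BKCols (m n ε η : ℕ) := (Fin (ε + 1) × Fin n) ⊕ (Fin η × Fin m)
abbrev BKPair (m n ε η : ℕ) :=
  Matrix (BKRows m n ε η) (BKCols m n ε η) ℝ × Matrix (BKRows m n ε η) (BKCols m n ε η) ℝ
abbrev BKJ (m n ε η : ℕ) :=
  (Fin (ε + η + 2) × Fin m × Fin n) ⊕
    ((Fin (η + 2) × Fin m × (Fin η × Fin m)) ⊕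
      ((Fin (ε + 2) × (Fin ε × Fin n) × Fin n) ⊕
        (Fin 2 × (Fin ε × Fin n) × (Fin η × Fin m))))

def Umat (m n ε η : ℕ) :=
  Matrix.fromBlocks ((Lam η)ᵀ ⊗ₖ (1 : Matrix (Fin m) (Fin m) (Polynomial ℝ)))
    (0 : Matrix (Fin 1 × Fin m) (Fin ε × Fin n) (Polynomial ℝ))
    (0 : Matrix (Fin ε × Fin n) (Fin (η + 1) × Fin m) (Polynomial ℝ))
    (1 : Matrix (Fin ε × Fin n) (Fin ε × Fin n) (Polynomial ℝ))

def Vmat (m n ε η : ℕ) :=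
  Matrix.fromBlocks (Lam ε ⊗ₖ (1 : Matrix (Fin n) (Fin n) (Polynomial ℝ)))
    (0 : Matrix (Fin (ε + 1) × Fin n) (Fin η × Fin m) (Polynomial ℝ))
    (0 : Matrix (Fin η × Fin m) (Fin 1 × Fin n) (Polynomial ℝ))
    (1 : Matrix (Fin η × Fin m) (Fin η × Fin m) (Polynomial ℝ))

def RHSmat (m n ε η : ℕ) (Pc : ℕ → Matrix (Fin m) (Fin n) ℝ) (α : ℝ) :=
  Matrix.fromBlocks
    (Matrix.of fun (p : Fin 1 × Fin m) (q : Fin 1 × Fin n) =>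
      C α * polyOf m n (ε + η + 1) Pc p.2 q.2)
    (0 : Matrix (Fin 1 × Fin m) (Fin η × Fin m) (Polynomial ℝ))
    (0 : Matrix (Fin ε × Fin n) (Fin 1 × Fin n) (Polynomial ℝ))
    (0 : Matrix (Fin ε × Fin n) (Fin η × Fin m) (Polynomial ℝ))

section S

variable (m n ε η : ℕ)

def bkS1 (v : BKPair m n ε η) (t : ℕ) (p : Fin m) (q : Fin n) : ℝ :=
  ∑ i : Fin (η + 1), ∑ j : Fin (ε + 1),
    ((if t = η - (i : ℕ) + (ε - (j : ℕ)) + 1 then v.1 (.inl (i, p)) (.inl (j, q)) else 0)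
      + (if t = η - (i : ℕ) + (ε - (j : ℕ)) then v.2 (.inl (i, p)) (.inl (j, q)) else 0))

def bkS2 (v : BKPair m n ε η) (t : ℕ) (p : Fin m) (c : Fin η × Fin m) : ℝ :=
  ∑ i : Fin (η + 1),
    ((if t = η - (i : ℕ) + 1 then v.1 (.inl (i, p)) (.inr c) else 0)
      + (if t = η - (i : ℕ) then v.2 (.inl (i, p)) (.inr c) else 0))

def bkS3 (v : BKPair m n ε η) (t : ℕ) (r : Fin ε × Fin n) (q : Fin n) : ℝ :=
  ∑ j : Fin (ε + 1),
    ((if t = ε - (j : ℕ) + 1 then v.1 (.inr r) (.inl (j, q)) else 0)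
      + (if t = ε - (j : ℕ) then v.2 (.inr r) (.inl (j, q)) else 0))

def bkS4 (v : BKPair m n ε η) (t : ℕ) (r : Fin ε × Fin n) (c : Fin η × Fin m) : ℝ :=
  (if t = 1 then v.1 (.inr r) (.inr c) else 0) + (if t = 0 then v.2 (.inr r) (.inr c) else 0)

def bkPhiFun (v : BKPair m n ε η) : BKJ m n ε η → ℝ
  | .inl (t, p, q) => bkS1 m n ε η v t p q
  | .inr (.inl (t, p, c)) => bkS2 m n ε η v t p c
  | .inr (.inr (.inl (t, r, q))) => bkS3 m n ε η v t r q
  | .inr (.inr (.inr (t, r, c))) => bkS4 m n ε η v t r c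

def bkQ (Pc : ℕ → Matrix (Fin m) (Fin n) ℝ) : BKJ m n ε η → ℝ
  | .inl (t, p, q) => Pc t p q
  | .inr _ => 0

def bkPhi : BKPair m n ε η →ₗ[ℝ] (BKJ m n ε η → ℝ) where
  toFun := bkPhiFun m n ε η
  map_add' u v := by
    funext j
    rcases j with ⟨t, p, q⟩ | ⟨t, p, c⟩ | ⟨t, r, q⟩ | ⟨t, r, c⟩ <;>
      simp only [bkPhiFun, bkS1, bkS2, bkS3, bkS4, Pi.add_apply] <;>
      rw [show (u + v).1 = u.1 + v.1 from rfl, show (u + v).2 = u.2 + v.2 from rfl]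
    · rw [← Finset.sum_add_distrib]
      refine Finset.sum_congr rfl fun i _ => ?_
      rw [← Finset.sum_add_distrib]
      refine Finset.sum_congr rfl fun j _ => ?_
      simp only [Matrix.add_apply]
      split_ifs <;> ring
    · rw [← Finset.sum_add_distrib]
      refine Finset.sum_congr rfl fun i _ => ?_
      simp only [Matrix.add_apply]
      split_ifs <;> ring
    · rw [← Finset.sum_add_distrib]
      refine Finset.sum_congr rfl fun j _ => ?_
      simp only [Matrix.add_apply]
      split_ifs <;> ring
    · simp only [Matrix.add_apply]
      split_ifs <;> ring
  map_smul' a v := by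
    funext j
    rcases j with ⟨t, p, q⟩ | ⟨t, p, c⟩ | ⟨t, r, q⟩ | ⟨t, r, c⟩ <;>
      simp only [bkPhiFun, bkS1, bkS2, bkS3, bkS4, Pi.smul_apply, RingHom.id_apply,
        smul_eq_mul] <;>
      rw [show (a • v).1 = a • v.1 from rfl, show (a • v).2 = a • v.2 from rfl]
    · rw [Finset.mul_sum]
      refine Finset.sum_congr rfl fun i _ => ?_
      rw [Finset.mul_sum]
      refine Finset.sum_congr rfl fun j _ => ?_
      simp only [Matrix.smul_apply, smul_eq_mul]
      split_ifs <;> ring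
    · rw [Finset.mul_sum]
      refine Finset.sum_congr rfl fun i _ => ?_
      simp only [Matrix.smul_apply, smul_eq_mul]
      split_ifs <;> ring
    · rw [Finset.mul_sum]
      refine Finset.sum_congr rfl fun j _ => ?_
      simp only [Matrix.smul_apply, smul_eq_mul]
      split_ifs <;> ring
    · simp only [Matrix.smul_apply, smul_eq_mul]
      split_ifs <;> ring

/-! vanishing lemmas -/

lemma bkS1_vanish (v : BKPair m n ε η) {t : ℕ} (ht : ε + η + 1 < t) (p : Fin m) (q : Fin n) :
    bkS1 m n ε η v t p q = 0 := by
  refine Finset.sum_eq_zero fun i _ => Finset.sum_eq_zero fun j _ => ?_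
  have hi := i.isLt; have hj := j.isLt
  rw [if_neg (by omega), if_neg (by omega), add_zero]

lemma bkS2_vanish (v : BKPair m n ε η) {t : ℕ} (ht : η + 1 < t) (p : Fin m) (c : Fin η × Fin m) :
    bkS2 m n ε η v t p c = 0 := by
  refine Finset.sum_eq_zero fun i _ => ?_
  have hi := i.isLt
  rw [if_neg (by omega), if_neg (by omega), add_zero]

lemma bkS3_vanish (v : BKPair m n ε η) {t : ℕ} (ht : ε + 1 < t) (r : Fin ε × Fin n) (q : Fin n) :
    bkS3 m n ε η v t r q = 0 := by
  refine Finset.sum_eq_zero fun j _ => ?_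
  have hj := j.isLt
  rw [if_neg (by omega), if_neg (by omega), add_zero]

lemma bkS4_vanish (v : BKPair m n ε η) {t : ℕ} (ht : 1 < t) (r : Fin ε × Fin n)
    (c : Fin η × Fin m) : bkS4 m n ε η v t r c = 0 := by
  rw [bkS4, if_neg (by omega), if_neg (by omega), add_zero]

end S

section Entries

variable (m n ε η : ℕ)
  (Lx Ly : Matrix (BKRows m n ε η) (BKCols m n ε η) ℝ)

lemma entry11 (o : Fin 1) (p : Fin m) (o' : Fin 1) (q : Fin n) :
    (Umat m n ε η * pencilM Lx Ly * Vmat m n ε η) (Sum.inl (o, p)) (Sum.inl (o', q))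
      = ∑ i : Fin (η + 1), ∑ j : Fin (ε + 1),
          (C (Lx (Sum.inl (i, p)) (Sum.inl (j, q))) * X ^ (η - (i : ℕ) + (ε - (j : ℕ)) + 1)
            + C (Ly (Sum.inl (i, p)) (Sum.inl (j, q))) * X ^ (η - (i : ℕ) + (ε - (j : ℕ)))) := by
  simp only [Umat, Vmat, Matrix.mul_apply, Fintype.sum_sum_type, Fintype.sum_prod_type,
    Matrix.fromBlocks_apply₁₁, Matrix.fromBlocks_apply₁₂, Matrix.fromBlocks_apply₂₁,
    Matrix.fromBlocks_apply₂₂, Matrix.kroneckerMap_apply, Matrix.transpose_apply, Lam,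
    Matrix.of_apply, Matrix.one_apply, Matrix.zero_apply, pencilM, mul_ite, ite_mul,
    mul_zero, zero_mul, mul_one, one_mul, Finset.sum_ite_eq, Finset.sum_ite_eq',
    Finset.mem_univ, if_true, zero_add, add_zero, Finset.sum_mul, Finset.mul_sum,
    Finset.sum_const_zero]
  simp only [Finset.sum_ite_irrel, Finset.sum_const_zero, Finset.sum_ite_eq',
    Finset.mem_univ, if_true]
  rw [Finset.sum_comm]
  refine Finset.sum_congr rfl fun i _ => Finset.sum_congr rfl fun j _ => ?_
  ring

lemma entry12 (o : Fin 1) (p : Fin m) (c : Fin η × Fin m) :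
    (Umat m n ε η * pencilM Lx Ly * Vmat m n ε η) (Sum.inl (o, p)) (Sum.inr c)
      = ∑ i : Fin (η + 1),
          (C (Lx (Sum.inl (i, p)) (Sum.inr c)) * X ^ (η - (i : ℕ) + 1)
            + C (Ly (Sum.inl (i, p)) (Sum.inr c)) * X ^ (η - (i : ℕ))) := by
  obtain ⟨c1, c2⟩ := c
  simp only [Umat, Vmat, Matrix.mul_apply, Fintype.sum_sum_type, Fintype.sum_prod_type,
    Matrix.fromBlocks_apply₁₁, Matrix.fromBlocks_apply₁₂, Matrix.fromBlocks_apply₂₁,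
    Matrix.fromBlocks_apply₂₂, Matrix.kroneckerMap_apply, Matrix.transpose_apply, Lam,
    Matrix.of_apply, Matrix.one_apply, Matrix.zero_apply, pencilM, mul_ite, ite_mul,
    mul_zero, zero_mul, mul_one, one_mul, Finset.sum_ite_eq, Finset.sum_ite_eq',
    Finset.mem_univ, if_true, zero_add, add_zero, Finset.sum_mul, Finset.mul_sum,
    Finset.sum_const_zero]
  simp only [Prod.mk.injEq, ite_and, Finset.sum_ite_irrel, Finset.sum_const_zero,
    Finset.sum_ite_eq', Finset.sum_ite_eq, Finset.mem_univ, if_true]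
  refine Finset.sum_congr rfl fun i _ => ?_
  ring

lemma entry21 (r : Fin ε × Fin n) (o' : Fin 1) (q : Fin n) :
    (Umat m n ε η * pencilM Lx Ly * Vmat m n ε η) (Sum.inr r) (Sum.inl (o', q))
      = ∑ j : Fin (ε + 1),
          (C (Lx (Sum.inr r) (Sum.inl (j, q))) * X ^ (ε - (j : ℕ) + 1)
            + C (Ly (Sum.inr r) (Sum.inl (j, q))) * X ^ (ε - (j : ℕ))) := by
  obtain ⟨r1, r2⟩ := r
  simp only [Umat, Vmat, Matrix.mul_apply, Fintype.sum_sum_type, Fintype.sum_prod_type,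
    Matrix.fromBlocks_apply₁₁, Matrix.fromBlocks_apply₁₂, Matrix.fromBlocks_apply₂₁,
    Matrix.fromBlocks_apply₂₂, Matrix.kroneckerMap_apply, Matrix.transpose_apply, Lam,
    Matrix.of_apply, Matrix.one_apply, Matrix.zero_apply, pencilM, mul_ite, ite_mul,
    mul_zero, zero_mul, mul_one, one_mul, Finset.sum_ite_eq, Finset.sum_ite_eq',
    Finset.mem_univ, if_true, zero_add, add_zero, Finset.sum_mul, Finset.mul_sum,
    Finset.sum_const_zero]
  refine Finset.sum_congr rfl fun j _ => ?_
  ring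

lemma entry22 (r : Fin ε × Fin n) (c : Fin η × Fin m) :
    (Umat m n ε η * pencilM Lx Ly * Vmat m n ε η) (Sum.inr r) (Sum.inr c)
      = X * C (Lx (Sum.inr r) (Sum.inr c)) + C (Ly (Sum.inr r) (Sum.inr c)) := by
  simp only [Umat, Vmat, Matrix.mul_apply, Fintype.sum_sum_type, Fintype.sum_prod_type,
    Matrix.fromBlocks_apply₁₁, Matrix.fromBlocks_apply₁₂, Matrix.fromBlocks_apply₂₁,
    Matrix.fromBlocks_apply₂₂, Matrix.kroneckerMap_apply, Matrix.transpose_apply, Lam,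
    Matrix.of_apply, Matrix.one_apply, Matrix.zero_apply, pencilM, mul_ite, ite_mul,
    mul_zero, zero_mul, mul_one, one_mul, Finset.sum_ite_eq, Finset.sum_ite_eq',
    Finset.mem_univ, if_true, zero_add, add_zero, Finset.sum_mul, Finset.mul_sum,
    Finset.sum_const_zero]

/-! coefficient lemmas -/

lemma coeff_entry11 (p : Fin m) (q : Fin n) (t : ℕ) :
    (∑ i : Fin (η + 1), ∑ j : Fin (ε + 1),
        (C (Lx (Sum.inl (i, p)) (Sum.inl (j, q))) * X ^ (η - (i : ℕ) + (ε - (j : ℕ)) + 1)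
            + C (Ly (Sum.inl (i, p)) (Sum.inl (j, q)))
              * X ^ (η - (i : ℕ) + (ε - (j : ℕ))))).coeff t
      = bkS1 m n ε η (Lx, Ly) t p q := by
  simp only [bkS1, finset_sum_coeff, coeff_add, coeff_C_mul, coeff_X_pow, mul_ite, mul_one,
    mul_zero]

lemma coeff_entry12 (p : Fin m) (c : Fin η × Fin m) (t : ℕ) :
    (∑ i : Fin (η + 1),
        (C (Lx (Sum.inl (i, p)) (Sum.inr c)) * X ^ (η - (i : ℕ) + 1)
          + C (Ly (Sum.inl (i, p)) (Sum.inr c)) * X ^ (η - (i : ℕ)))).coeff t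
      = bkS2 m n ε η (Lx, Ly) t p c := by
  simp only [bkS2, finset_sum_coeff, coeff_add, coeff_C_mul, coeff_X_pow, mul_ite, mul_one,
    mul_zero]

lemma coeff_entry21 (r : Fin ε × Fin n) (q : Fin n) (t : ℕ) :
    (∑ j : Fin (ε + 1),
        (C (Lx (Sum.inr r) (Sum.inl (j, q))) * X ^ (ε - (j : ℕ) + 1)
          + C (Ly (Sum.inr r) (Sum.inl (j, q))) * X ^ (ε - (j : ℕ)))).coeff t
      = bkS3 m n ε η (Lx, Ly) t r q := by
  simp only [bkS3, finset_sum_coeff, coeff_add, coeff_C_mul, coeff_X_pow, mul_ite, mul_one,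
    mul_zero]

lemma coeff_entry22 (r : Fin ε × Fin n) (c : Fin η × Fin m) (t : ℕ) :
    (X * C (Lx (Sum.inr r) (Sum.inr c)) + C (Ly (Sum.inr r) (Sum.inr c))).coeff t
      = bkS4 m n ε η (Lx, Ly) t r c := by
  have h : X * C (Lx (Sum.inr r) (Sum.inr c)) = C (Lx (Sum.inr r) (Sum.inr c)) * X ^ 1 := by
    ring
  rw [h, bkS4]
  simp only [coeff_add, coeff_C_mul, coeff_X_pow, coeff_C, mul_ite, mul_one, mul_zero]

lemma coeff_rhs (Pc : ℕ → Matrix (Fin m) (Fin n) ℝ) (α : ℝ) (p : Fin m) (q : Fin n) (t : ℕ) :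
    (C α * polyOf m n (ε + η + 1) Pc p q).coeff t
      = if t < ε + η + 2 then α * Pc t p q else 0 := by
  simp only [polyOf, Matrix.of_apply, coeff_C_mul, finset_sum_coeff, coeff_mul_C,
    coeff_X_pow, ite_mul, one_mul, zero_mul, Finset.sum_ite_eq, Finset.mem_range,
    mul_ite, mul_zero]

end Entries

section Iff

variable (m n ε η : ℕ) (Pc : ℕ → Matrix (Fin m) (Fin n) ℝ)

lemma grect_iff (Lx Ly : Matrix (BKRows m n ε η) (BKCols m n ε η) ℝ) (α : ℝ) :
    GRect m n ε η Pc Lx Ly α ↔ bkPhi m n ε η (Lx, Ly) = α • bkQ m n ε η Pc := by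
  have hG : GRect m n ε η Pc Lx Ly α ↔
      Umat m n ε η * pencilM Lx Ly * Vmat m n ε η = RHSmat m n ε η Pc α := Iff.rfl
  rw [hG]
  constructor
  · intro h
    have hij : ∀ i j, (Umat m n ε η * pencilM Lx Ly * Vmat m n ε η) i j
        = RHSmat m n ε η Pc α i j := fun i j => by rw [h]
    funext j
    rcases j with ⟨t, p, q⟩ | ⟨t, p, c⟩ | ⟨t, r, q⟩ | ⟨t, r, c⟩
    · show bkS1 m n ε η (Lx, Ly) ↑t p q = α * Pc ↑t p q
      rw [← coeff_entry11 m n ε η Lx Ly p q ↑t, ← entry11 m n ε η Lx Ly 0 p 0 q,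
        hij (Sum.inl (0, p)) (Sum.inl (0, q))]
      show (RHSmat m n ε η Pc α (Sum.inl (0, p)) (Sum.inl (0, q))).coeff ↑t = _
      rw [show RHSmat m n ε η Pc α (Sum.inl (0, p)) (Sum.inl (0, q))
          = C α * polyOf m n (ε + η + 1) Pc p q from rfl, coeff_rhs, if_pos t.isLt]
    · show bkS2 m n ε η (Lx, Ly) ↑t p c = α * 0
      rw [← coeff_entry12 m n ε η Lx Ly p c ↑t, ← entry12 m n ε η Lx Ly 0 p c,
        hij (Sum.inl (0, p)) (Sum.inr c)]
      show (0 : Polynomial ℝ).coeff ↑t = _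
      simp
    · show bkS3 m n ε η (Lx, Ly) ↑t r q = α * 0
      rw [← coeff_entry21 m n ε η Lx Ly r q ↑t, ← entry21 m n ε η Lx Ly r 0 q,
        hij (Sum.inr r) (Sum.inl (0, q))]
      show (0 : Polynomial ℝ).coeff ↑t = _
      simp
    · show bkS4 m n ε η (Lx, Ly) ↑t r c = α * 0
      rw [← coeff_entry22 m n ε η Lx Ly r c ↑t, ← entry22 m n ε η Lx Ly r c,
        hij (Sum.inr r) (Sum.inr c)]
      show (0 : Polynomial ℝ).coeff ↑t = _
      simp
  · intro h
    have hj := congrFun h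
    refine Matrix.ext fun i j => ?_
    rcases i with ⟨o, p⟩ | r <;> rcases j with ⟨o', q⟩ | c
    · refine Polynomial.ext fun t => ?_
      rw [entry11 m n ε η Lx Ly o p o' q, coeff_entry11,
        show RHSmat m n ε η Pc α (Sum.inl (o, p)) (Sum.inl (o', q))
          = C α * polyOf m n (ε + η + 1) Pc p q from rfl, coeff_rhs]
      by_cases ht : t < ε + η + 2
      · rw [if_pos ht]
        exact hj (Sum.inl (⟨t, ht⟩, p, q))
      · rw [if_neg ht]
        exact bkS1_vanish m n ε η (Lx, Ly) (by omega) p q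
    · refine Polynomial.ext fun t => ?_
      rw [entry12 m n ε η Lx Ly o p c, coeff_entry12,
        show RHSmat m n ε η Pc α (Sum.inl (o, p)) (Sum.inr c) = 0 from rfl]
      rw [Polynomial.coeff_zero]
      by_cases ht : t < η + 2
      · have := hj (Sum.inr (Sum.inl (⟨t, ht⟩, p, c)))
        simpa [bkPhi, bkPhiFun, bkQ] using this
      · exact bkS2_vanish m n ε η (Lx, Ly) (by omega) p c
    · refine Polynomial.ext fun t => ?_
      rw [entry21 m n ε η Lx Ly r o' q, coeff_entry21,
        show RHSmat m n ε η Pc α (Sum.inr r) (Sum.inl (o', q)) = 0 from rfl]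
      rw [Polynomial.coeff_zero]
      by_cases ht : t < ε + 2
      · have := hj (Sum.inr (Sum.inr (Sum.inl (⟨t, ht⟩, r, q))))
        simpa [bkPhi, bkPhiFun, bkQ] using this
      · exact bkS3_vanish m n ε η (Lx, Ly) (by omega) r q
    · refine Polynomial.ext fun t => ?_
      rw [entry22 m n ε η Lx Ly r c, coeff_entry22,
        show RHSmat m n ε η Pc α (Sum.inr r) (Sum.inr c) = 0 from rfl]
      rw [Polynomial.coeff_zero]
      by_cases ht : t < 2
      · have := hj (Sum.inr (Sum.inr (Sum.inr (⟨t, ht⟩, r, c))))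
        simpa [bkPhi, bkPhiFun, bkQ] using this
      · exact bkS4_vanish m n ε η (Lx, Ly) (by omega) r c

end Iff

section Surj

variable (m n ε η : ℕ)

def wX (w : BKJ m n ε η → ℝ) : Matrix (BKRows m n ε η) (BKCols m n ε η) ℝ :=
  Matrix.of fun r c => match r, c with
    | .inl (i, p), .inl (j, q) =>
        if (j : ℕ) = 0 then w (.inl (⟨η - (i : ℕ) + ε + 1, by omega⟩, p, q)) else 0
    | .inl (i, p), .inr c => if (i : ℕ) = 0 then w (.inr (.inl (⟨η + 1, by omega⟩, p, c))) else 0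
    | .inr r, .inl (j, q) =>
        if (j : ℕ) = 0 then w (.inr (.inr (.inl (⟨ε + 1, by omega⟩, r, q)))) else 0
    | .inr r, .inr c => w (.inr (.inr (.inr (1, r, c))))

def wY (w : BKJ m n ε η → ℝ) : Matrix (BKRows m n ε η) (BKCols m n ε η) ℝ :=
  Matrix.of fun r c => match r, c with
    | .inl (i, p), .inl (j, q) =>
        if (i : ℕ) = η then w (.inl (⟨ε - (j : ℕ), by omega⟩, p, q)) else 0
    | .inl (i, p), .inr c => w (.inr (.inl (⟨η - (i : ℕ), by omega⟩, p, c)))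
    | .inr r, .inl (j, q) => w (.inr (.inr (.inl (⟨ε - (j : ℕ), by omega⟩, r, q))))
    | .inr r, .inr c => w (.inr (.inr (.inr (0, r, c))))

lemma wX_11 (w : BKJ m n ε η → ℝ) (i p j q) : wX m n ε η w (.inl (i, p)) (.inl (j, q))
    = if (j : ℕ) = 0 then w (.inl (⟨η - (i : ℕ) + ε + 1, by omega⟩, p, q)) else 0 := rfl
lemma wX_12 (w : BKJ m n ε η → ℝ) (i p c) : wX m n ε η w (.inl (i, p)) (.inr c)
    = if (i : ℕ) = 0 then w (.inr (.inl (⟨η + 1, by omega⟩, p, c))) else 0 := rfl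
lemma wX_21 (w : BKJ m n ε η → ℝ) (r j q) : wX m n ε η w (.inr r) (.inl (j, q))
    = if (j : ℕ) = 0 then w (.inr (.inr (.inl (⟨ε + 1, by omega⟩, r, q)))) else 0 := rfl
lemma wX_22 (w : BKJ m n ε η → ℝ) (r c) : wX m n ε η w (.inr r) (.inr c)
    = w (.inr (.inr (.inr (1, r, c)))) := rfl
lemma wY_11 (w : BKJ m n ε η → ℝ) (i p j q) : wY m n ε η w (.inl (i, p)) (.inl (j, q))
    = if (i : ℕ) = η then w (.inl (⟨ε - (j : ℕ), by omega⟩, p, q)) else 0 := rfl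
lemma wY_12 (w : BKJ m n ε η → ℝ) (i p c) : wY m n ε η w (.inl (i, p)) (.inr c)
    = w (.inr (.inl (⟨η - (i : ℕ), by omega⟩, p, c))) := rfl
lemma wY_21 (w : BKJ m n ε η → ℝ) (r j q) : wY m n ε η w (.inr r) (.inl (j, q))
    = w (.inr (.inr (.inl (⟨ε - (j : ℕ), by omega⟩, r, q)))) := rfl
lemma wY_22 (w : BKJ m n ε η → ℝ) (r c) : wY m n ε η w (.inr r) (.inr c)
    = w (.inr (.inr (.inr (0, r, c)))) := rfl

private lemma sum_single_val {N : ℕ} (f : Fin N → ℝ) (i₀ : Fin N)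
    (h : ∀ i, i ≠ i₀ → f i = 0) : ∑ i, f i = f i₀ :=
  Finset.sum_eq_single_of_mem i₀ (Finset.mem_univ _) fun i _ hi => h i hi

lemma bkPhi_surjective : Function.Surjective (bkPhi m n ε η) := by
  intro w
  refine ⟨(wX m n ε η w, wY m n ε η w), ?_⟩
  funext j
  rcases j with ⟨t, p, q⟩ | ⟨t, p, c⟩ | ⟨t, r, q⟩ | ⟨t, r, c⟩
  · show bkS1 m n ε η (wX m n ε η w, wY m n ε η w) ↑t p q = w (.inl (t, p, q))
    unfold bkS1
    simp only [Finset.sum_add_distrib]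
    have htlt := t.isLt
    by_cases hc : (t : ℕ) ≤ ε
    · have hA : (∑ i : Fin (η + 1), ∑ j : Fin (ε + 1),
          if (t : ℕ) = η - (i : ℕ) + (ε - (j : ℕ)) + 1 then
            wX m n ε η w (.inl (i, p)) (.inl (j, q)) else 0) = 0 := by
        refine Finset.sum_eq_zero fun i _ => Finset.sum_eq_zero fun j _ => ?_
        have hi := i.isLt; have hj := j.isLt
        rw [wX_11]
        split_ifs <;> first | rfl | (exfalso; omega) | (exfalso; simp only [Fin.val_mk] at *; omega)
      rw [hA, zero_add,
        sum_single_val _ (⟨η, by omega⟩ : Fin (η + 1)) ?_]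
      · rw [sum_single_val _ (⟨ε - (t : ℕ), by omega⟩ : Fin (ε + 1)) ?_]
        · rw [wY_11, if_pos (by first | omega | (simp only [Fin.val_mk] <;> omega)), if_pos (by first | omega | (simp only [Fin.val_mk] <;> omega))]
          congr 1
          simp only [Sum.inl.injEq, Prod.mk.injEq, Fin.ext_iff, Fin.val_mk, and_true]
          omega
        · intro j hj
          have hjv : (j : ℕ) ≠ ε - (t : ℕ) := fun hh => hj (Fin.ext hh)
          have hjl := j.isLt
          rw [wY_11]
          split_ifs <;> first | rfl | (exfalso; omega) | (exfalso; simp only [Fin.val_mk] at *; omega) | (exfalso; simp only [Fin.val_mk] at *; omega)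
      · intro i hi
        have hiv : (i : ℕ) ≠ η := fun hh => hi (Fin.ext hh)
        refine Finset.sum_eq_zero fun j _ => ?_
        rw [wY_11]
        split_ifs <;> first | rfl | (exfalso; omega) | (exfalso; simp only [Fin.val_mk] at *; omega)
    · have hB : (∑ i : Fin (η + 1), ∑ j : Fin (ε + 1),
          if (t : ℕ) = η - (i : ℕ) + (ε - (j : ℕ)) then
            wY m n ε η w (.inl (i, p)) (.inl (j, q)) else 0) = 0 := by
        refine Finset.sum_eq_zero fun i _ => Finset.sum_eq_zero fun j _ => ?_
        have hi := i.isLt; have hj := j.isLt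
        rw [wY_11]
        split_ifs <;> first | rfl | (exfalso; omega) | (exfalso; simp only [Fin.val_mk] at *; omega)
      rw [hB, add_zero,
        sum_single_val _ (⟨η + ε + 1 - (t : ℕ), by omega⟩ : Fin (η + 1)) ?_]
      · rw [sum_single_val _ (⟨0, by omega⟩ : Fin (ε + 1)) ?_]
        · rw [wX_11, if_pos (by first | omega | (simp only [Fin.val_mk] <;> omega)), if_pos (by first | omega | (simp only [Fin.val_mk] <;> omega))]
          congr 1
          simp only [Sum.inl.injEq, Prod.mk.injEq, Fin.ext_iff, Fin.val_mk, and_true]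
          omega
        · intro j hj
          have hjv : (j : ℕ) ≠ 0 := fun hh => hj (Fin.ext hh)
          rw [wX_11]
          split_ifs <;> first | rfl | (exfalso; omega) | (exfalso; simp only [Fin.val_mk] at *; omega)
      · intro i hi
        have hiv : (i : ℕ) ≠ η + ε + 1 - (t : ℕ) := fun hh => hi (Fin.ext hh)
        refine Finset.sum_eq_zero fun j _ => ?_
        have hjl := j.isLt; have hil := i.isLt
        rw [wX_11]
        split_ifs <;> first | rfl | (exfalso; omega) | (exfalso; simp only [Fin.val_mk] at *; omega) | (exfalso; simp only [Fin.val_mk] at *; omega)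
  · show bkS2 m n ε η (wX m n ε η w, wY m n ε η w) ↑t p c = w (.inr (.inl (t, p, c)))
    unfold bkS2
    simp only [Finset.sum_add_distrib]
    have htlt := t.isLt
    by_cases hc : (t : ℕ) ≤ η
    · have hA : (∑ i : Fin (η + 1), if (t : ℕ) = η - (i : ℕ) + 1 then
          wX m n ε η w (.inl (i, p)) (.inr c) else 0) = 0 := by
        refine Finset.sum_eq_zero fun i _ => ?_
        have hi := i.isLt
        rw [wX_12]
        split_ifs <;> first | rfl | (exfalso; omega) | (exfalso; simp only [Fin.val_mk] at *; omega)
      rw [hA, zero_add, sum_single_val _ (⟨η - (t : ℕ), by omega⟩ : Fin (η + 1)) ?_]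
      · rw [wY_12, if_pos (by first | omega | (simp only [Fin.val_mk] <;> omega))]
        congr 1
        simp only [Sum.inr.injEq, Sum.inl.injEq, Prod.mk.injEq, Fin.ext_iff, Fin.val_mk,
          and_true]
        omega
      · intro i hi
        have hiv : (i : ℕ) ≠ η - (t : ℕ) := fun hh => hi (Fin.ext hh)
        have hil := i.isLt
        rw [wY_12, if_neg (by omega)]
    · have hB : (∑ i : Fin (η + 1), if (t : ℕ) = η - (i : ℕ) then
          wY m n ε η w (.inl (i, p)) (.inr c) else 0) = 0 := by
        refine Finset.sum_eq_zero fun i _ => ?_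
        have hi := i.isLt
        rw [wY_12, if_neg (by omega)]
      rw [hB, add_zero, sum_single_val _ (⟨0, by omega⟩ : Fin (η + 1)) ?_]
      · rw [wX_12, if_pos (by first | omega | (simp only [Fin.val_mk] <;> omega)), if_pos (by first | omega | (simp only [Fin.val_mk] <;> omega))]
        congr 1
        simp only [Sum.inr.injEq, Sum.inl.injEq, Prod.mk.injEq, Fin.ext_iff, Fin.val_mk,
          and_true]
        omega
      · intro i hi
        have hiv : (i : ℕ) ≠ 0 := fun hh => hi (Fin.ext hh)
        have hil := i.isLt
        rw [wX_12]
        split_ifs <;> first | rfl | (exfalso; omega) | (exfalso; simp only [Fin.val_mk] at *; omega)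
  · show bkS3 m n ε η (wX m n ε η w, wY m n ε η w) ↑t r q = w (.inr (.inr (.inl (t, r, q))))
    unfold bkS3
    simp only [Finset.sum_add_distrib]
    have htlt := t.isLt
    by_cases hc : (t : ℕ) ≤ ε
    · have hA : (∑ j : Fin (ε + 1), if (t : ℕ) = ε - (j : ℕ) + 1 then
          wX m n ε η w (.inr r) (.inl (j, q)) else 0) = 0 := by
        refine Finset.sum_eq_zero fun j _ => ?_
        have hjl := j.isLt
        rw [wX_21]
        split_ifs <;> first | rfl | (exfalso; omega) | (exfalso; simp only [Fin.val_mk] at *; omega)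
      rw [hA, zero_add, sum_single_val _ (⟨ε - (t : ℕ), by omega⟩ : Fin (ε + 1)) ?_]
      · rw [wY_21, if_pos (by first | omega | (simp only [Fin.val_mk] <;> omega))]
        congr 1
        simp only [Sum.inr.injEq, Sum.inl.injEq, Prod.mk.injEq, Fin.ext_iff, Fin.val_mk,
          and_true]
        omega
      · intro j hj
        have hjv : (j : ℕ) ≠ ε - (t : ℕ) := fun hh => hj (Fin.ext hh)
        have hjl := j.isLt
        rw [wY_21, if_neg (by omega)]
    · have hB : (∑ j : Fin (ε + 1), if (t : ℕ) = ε - (j : ℕ) then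
          wY m n ε η w (.inr r) (.inl (j, q)) else 0) = 0 := by
        refine Finset.sum_eq_zero fun j _ => ?_
        have hjl := j.isLt
        rw [wY_21, if_neg (by omega)]
      rw [hB, add_zero, sum_single_val _ (⟨0, by omega⟩ : Fin (ε + 1)) ?_]
      · rw [wX_21, if_pos (by first | omega | (simp only [Fin.val_mk] <;> omega)), if_pos (by first | omega | (simp only [Fin.val_mk] <;> omega))]
        congr 1
        simp only [Sum.inr.injEq, Sum.inl.injEq, Prod.mk.injEq, Fin.ext_iff, Fin.val_mk,
          and_true]
        omega
      · intro j hj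
        have hjv : (j : ℕ) ≠ 0 := fun hh => hj (Fin.ext hh)
        have hjl := j.isLt
        rw [wX_21]
        split_ifs <;> first | rfl | (exfalso; omega) | (exfalso; simp only [Fin.val_mk] at *; omega)
  · show bkS4 m n ε η (wX m n ε η w, wY m n ε η w) ↑t r c = w (.inr (.inr (.inr (t, r, c))))
    unfold bkS4
    have htlt := t.isLt
    by_cases hc : (t : ℕ) = 1
    · rw [if_pos hc, if_neg (by omega), add_zero]
      show w (.inr (.inr (.inr (1, r, c)))) = w (.inr (.inr (.inr (t, r, c))))
      congr 1
      simp only [Sum.inr.injEq, Prod.mk.injEq, Fin.ext_iff, Fin.val_one, Fin.val_zero,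
        and_true]
      omega
    · rw [if_neg hc, if_pos (by omega), zero_add]
      show w (.inr (.inr (.inr (0, r, c)))) = w (.inr (.inr (.inr (t, r, c))))
      congr 1
      simp only [Sum.inr.injEq, Prod.mk.injEq, Fin.ext_iff, Fin.val_one, Fin.val_zero,
        and_true]
      omega

end Surj

set_option maxHeartbeats 1000000 in
set_option synthInstance.maxHeartbeats 400000 in
theorem stmt4 (m n ε η : ℕ) (Pc : ℕ → Matrix (Fin m) (Fin n) ℝ)
    (hdeg : Pc (ε + η + 1) ≠ 0) :
    ∃ W : Submodule ℝ
      (Matrix ((Fin (η + 1) × Fin m) ⊕ (Fin ε × Fin n))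
          ((Fin (ε + 1) × Fin n) ⊕ (Fin η × Fin m)) ℝ ×
        Matrix ((Fin (η + 1) × Fin m) ⊕ (Fin ε × Fin n))
          ((Fin (ε + 1) × Fin n) ⊕ (Fin η × Fin m)) ℝ),
      (W : Set (Matrix ((Fin (η + 1) × Fin m) ⊕ (Fin ε × Fin n))
          ((Fin (ε + 1) × Fin n) ⊕ (Fin η × Fin m)) ℝ ×
        Matrix ((Fin (η + 1) × Fin m) ⊕ (Fin ε × Fin n))
          ((Fin (ε + 1) × Fin n) ⊕ (Fin η × Fin m)) ℝ))
        = {p | ∃ α : ℝ, GRect m n ε η Pc p.1 p.2 α} ∧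
      Module.finrank ℝ W = (ε * n + η * m) ^ 2 + (ε + η) * m * n + 1 := by

  refine ⟨(Submodule.span ℝ {bkQ m n ε η Pc}).comap (bkPhi m n ε η), ?_, ?_⟩
  · ext v
    simp only [Submodule.mem_comap, SetLike.mem_coe, Submodule.mem_span_singleton,
      Set.mem_setOf_eq]
    constructor
    · rintro ⟨a, ha⟩
      exact ⟨a, (grect_iff m n ε η Pc v.1 v.2 a).mpr ha.symm⟩
    · rintro ⟨a, ha⟩
      exact ⟨a, ((grect_iff m n ε η Pc v.1 v.2 a).mp ha).symm⟩
  · have hq : bkQ m n ε η Pc ≠ 0 := by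
      obtain ⟨p0, q0, hpq⟩ : ∃ p0 q0, Pc (ε + η + 1) p0 q0 ≠ 0 := by
        by_contra hcon
        push_neg at hcon
        exact hdeg (by ext i j; simpa using hcon i j)
      intro h0
      apply hpq
      have h1 := congrFun h0 (Sum.inl (⟨ε + η + 1, by omega⟩, p0, q0))
      simpa [bkQ] using h1
    have hsurj := bkPhi_surjective m n ε η
    obtain ⟨v0, hv0⟩ := hsurj (bkQ m n ε η Pc)
    set W := (Submodule.span ℝ {bkQ m n ε η Pc}).comap (bkPhi m n ε η) with hWdef
    have hle : LinearMap.ker (bkPhi m n ε η) ≤ W := by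
      intro x hx
      rw [LinearMap.mem_ker] at hx
      show bkPhi m n ε η x ∈ Submodule.span ℝ {bkQ m n ε η Pc}
      rw [hx]
      exact Submodule.zero_mem _
    have hmem : ∀ x ∈ W, bkPhi m n ε η x ∈ Submodule.span ℝ {bkQ m n ε η Pc} := fun x hx => hx
    set g := (bkPhi m n ε η).restrict hmem with hgdef
    have hgsurj : Function.Surjective g := by
      rintro ⟨u, hu⟩
      rw [Submodule.mem_span_singleton] at hu
      obtain ⟨a, ha⟩ := hu
      have hmemW : a • v0 ∈ W := by
        show bkPhi m n ε η (a • v0) ∈ Submodule.span ℝ {bkQ m n ε η Pc}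
        rw [_root_.map_smul, hv0]
        exact Submodule.smul_mem _ a (Submodule.mem_span_singleton_self _)
      refine ⟨⟨a • v0, hmemW⟩, Subtype.ext ?_⟩
      show bkPhi m n ε η (a • v0) = u
      rw [_root_.map_smul, hv0, ha]
    have h1 := (LinearMap.finrank_range_add_finrank_ker g).symm
    have h2 : Module.finrank ℝ (LinearMap.range g) = 1 := by
      rw [LinearMap.range_eq_top.mpr hgsurj, finrank_top]
      exact finrank_span_singleton hq
    have h3 : Module.finrank ℝ (LinearMap.ker g) =
        Module.finrank ℝ (LinearMap.ker (bkPhi m n ε η)) := by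
      rw [hgdef, LinearMap.ker_restrict]
      exact LinearEquiv.finrank_eq (Submodule.comapSubtypeEquivOfLe hle)
    have h4 := LinearMap.finrank_range_add_finrank_ker (bkPhi m n ε η)
    have h5 : Module.finrank ℝ (LinearMap.range (bkPhi m n ε η))
        = (ε + η + 2) * (m * n) + ((η + 2) * (m * (η * m))
            + ((ε + 2) * ((ε * n) * n) + 2 * ((ε * n) * (η * m)))) := by
      rw [LinearMap.range_eq_top.mpr hsurj, finrank_top]
      simp [Module.finrank_fintype_fun_eq_card, Fintype.card_sum, Fintype.card_prod,
        Fintype.card_fin]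
    have hV : Module.finrank ℝ (BKPair m n ε η)
        = (((η + 1) * m + ε * n) * ((ε + 1) * n + η * m)) * 2 := by
      simp [Module.finrank_prod, Module.finrank_matrix, Fintype.card_sum, Fintype.card_prod,
        Fintype.card_fin]
      ring
    have hident : (((η + 1) * m + ε * n) * ((ε + 1) * n + η * m)) * 2
        = ((ε + η + 2) * (m * n) + ((η + 2) * (m * (η * m))
            + ((ε + 2) * ((ε * n) * n) + 2 * ((ε * n) * (η * m)))))
          + ((ε * n + η * m) ^ 2 + (ε + η) * m * n) := by ring
    have hker : Module.finrank ℝ (LinearMap.ker (bkPhi m n ε η))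
        = (ε * n + η * m) ^ 2 + (ε + η) * m * n := by
      apply Nat.add_left_cancel (n := (ε + η + 2) * (m * n) + ((η + 2) * (m * (η * m))
            + ((ε + 2) * ((ε * n) * n) + 2 * ((ε * n) * (η * m)))))
      rw [← h5, h4, hV, hident, h5]
    rw [h1, h2, h3, hker, add_comm]
end
end

section
/- Let P(λ) = Σ_{i=0}^k P_i λ^i with P_i ∈ ℝ^{n×n} be a matrix polynomial of degree k = ε + η + 1 with η ≤ ε. Then there exists a kn × kn matrix pencil L(λ) satisfying both ((Λ_η(λ)^T ⊗ I_n) ⊕ I_{εn})·L(λ)·((Λ_ε(λ) ⊗ I_n) ⊕ I_{ηn}) = P(λ) ⊕ 0_{εn×ηn} and ((Λ_ε(λ)^T ⊗ I_n) ⊕ I_{ηn})·L(λ)·((Λ_η(λ) ⊗ I_n) ⊕ I_{εn}) = P(λ) ⊕ 0_{ηn×εn}; in particular the double block Kronecker ansatz space DG_{η+1}(P) = G_{η+1}(P) ∩ G_{k−η}(P) contains a pencil with ansatz scalar α = 1. -/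
open Matrix Polynomial
open scoped Kronecker

noncomputable section

/-- The flat `(n + ε'n) × kn` matrix `(Λ_{η'}(λ)ᵀ ⊗ I_n) ⊕ I_{ε'n}` (with `ε' = k - 1 - η'`),
acting on the left in the block Kronecker ansatz equation. -/
def Eleft (n k η' : ℕ) : Matrix (Fin (k - η') × Fin n) (Fin k × Fin n) (Polynomial ℝ) :=
  Matrix.of fun p q =>
    if p.2 = q.2 ∧ (p.1 : ℕ) = 0 ∧ (q.1 : ℕ) ≤ η' then X ^ (η' - (q.1 : ℕ))
    else if p.2 = q.2 ∧ (q.1 : ℕ) = η' + (p.1 : ℕ) then 1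
    else 0

/-- The flat `kn × (n + η'n)` matrix `(Λ_{ε'}(λ) ⊗ I_n) ⊕ I_{η'n}` (with `ε' = k - 1 - η'`),
acting on the right in the block Kronecker ansatz equation. -/
def Eright (n k η' : ℕ) : Matrix (Fin k × Fin n) (Fin (η' + 1) × Fin n) (Polynomial ℝ) :=
  Matrix.of fun p q =>
    if p.2 = q.2 ∧ (q.1 : ℕ) = 0 ∧ (p.1 : ℕ) ≤ k - 1 - η' then X ^ (k - 1 - η' - (p.1 : ℕ))
    else if p.2 = q.2 ∧ (p.1 : ℕ) = (k - 1 - η') + (q.1 : ℕ) then 1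
    else 0

/-- The right-hand side `(α · P(λ)) ⊕ 0` of the block Kronecker ansatz equation. -/
def GRHS (n k η' : ℕ) (α : ℝ) (Pm : Matrix (Fin n) (Fin n) (Polynomial ℝ)) :
    Matrix (Fin (k - η') × Fin n) (Fin (η' + 1) × Fin n) (Polynomial ℝ) :=
  Matrix.of fun p q =>
    if (p.1 : ℕ) = 0 ∧ (q.1 : ℕ) = 0 then C α * Pm p.2 q.2 else 0

/-- Membership of the pencil `λ·p.1 + p.2` in the block Kronecker ansatz space
`G_{η'+1}(P)` for the `n × n` matrix polynomial with coefficients `Pc` of degree `k`. -/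
def memG (n k η' : ℕ) (Pc : ℕ → Matrix (Fin n) (Fin n) ℝ)
    (p : Matrix (Fin k × Fin n) (Fin k × Fin n) ℝ ×
         Matrix (Fin k × Fin n) (Fin k × Fin n) ℝ) : Prop :=
  ∃ α : ℝ,
    Eleft n k η' * pencilM p.1 p.2 * Eright n k η' = GRHS n k η' α (polyOf n n k Pc)

/-!
Take the pencil `λA + B` block-symmetric: block-diagonal with blocks `λP_{k-2a} + P_{k-1-2a}`
for `a ≤ η`, and block-Hankel beyond that, `A_{ab} = -P_{k-a-b}` for `a, b > η` and
`B_{ab} = P_{k-1-a-b}` for `a, b ≥ η`, `a + b > 2η` (zero once the index leaves `[0, k]`). Then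
`A_{a,b+1} = -B_{ab}` along every block row `a > η`, so multiplying such a row by `Λ_ε(λ)`
telescopes to zero; the block columns past `ε` vanish; and contracting the leading
`(η+1) × (ε+1)` corner against `Λ_η(λ)` and `Λ_ε(λ)` collects the diagonal blocks and the tail of
block row `η` into `Σ_t λ^t P_t`. By block symmetry the second ansatz equation is the first one
with rows and columns exchanged.
-/

open Finset

namespace BlockKroneckerAnsatz

lemma sum_X_pow_mul_eq_zero_of_telescope {e : ℕ} {f g : ℕ → ℝ} (hf : f 0 = 0)
    (hfg : ∀ b < e, f (b + 1) = -g b) (hg : g e = 0) :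
    ∑ b ∈ range (e + 1), X ^ (e - b) * (X * C (f b) + C (g b)) = 0 := by
  simp only [mul_add, sum_add_distrib]
  rw [sum_range_succ', sum_range_succ, hf, hg]
  simp only [C_0, mul_zero, add_zero, ← sum_add_distrib]
  refine sum_eq_zero fun b hb => ?_
  rw [hfg b (mem_range.1 hb), C_neg, show e - b = e - (b + 1) + 1 by grind, pow_succ]
  ring

lemma sum_range_succ_ite_lt_reflect {M : Type*} [AddCommMonoid M] {m e : ℕ} (f : ℕ → M) :
    ∑ b ∈ range (e + 1), (if m < b then f (e - b) else 0) = ∑ t ∈ range (e - m), f t := by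
  rw [← sum_range_reflect, ← sum_filter]
  refine sum_congr (by ext t; simp only [mem_filter, mem_range]; omega) fun t ht => ?_
  rw [mem_range] at ht
  congr 1
  omega

lemma sum_range_two_mul {M : Type*} [AddCommMonoid M] (f : ℕ → M) (m : ℕ) :
    ∑ j ∈ range (2 * m), f j = ∑ i ∈ range m, (f (2 * i) + f (2 * i + 1)) := by
  induction m with
  | zero => simp
  | succ m ih =>
    rw [mul_add, mul_one, sum_range_succ, sum_range_succ, sum_range_succ, ih, add_assoc]

/-- The `(u, a)` entry of `Λ_h(λ)ᵀ ⊕ I`. -/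
def ansatzEntry (h u a : ℕ) : ℝ[X] :=
  if u = 0 ∧ a ≤ h then X ^ (h - a) else if a = h + u then 1 else 0

lemma Eleft_apply (n k h : ℕ) (p : Fin (k - h) × Fin n) (q : Fin k × Fin n) :
    Eleft n k h p q = if p.2 = q.2 then ansatzEntry h p.1 q.1 else 0 := by
  unfold Eleft ansatzEntry
  by_cases hpq : p.2 = q.2 <;> simp [hpq]

lemma Eright_apply (n k h : ℕ) (p : Fin k × Fin n) (q : Fin (h + 1) × Fin n) :
    Eright n k h p q = if p.2 = q.2 then ansatzEntry (k - 1 - h) q.1 p.1 else 0 := by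
  unfold Eright ansatzEntry
  by_cases hpq : p.2 = q.2 <;> simp [hpq]

def ansatzForm (h k : ℕ) (L : ℕ → ℕ → ℝ[X]) (u v : ℕ) : ℝ[X] :=
  ∑ a ∈ range k, ansatzEntry h u a * ∑ b ∈ range k, ansatzEntry (k - 1 - h) v b * L a b

lemma Eleft_mul_pencilM_mul_Eright_apply (n k h : ℕ) (A B : Fin n → Fin n → ℕ → ℕ → ℝ)
    (p : Fin (k - h) × Fin n) (q : Fin (h + 1) × Fin n) :
    (Eleft n k h * pencilM (of fun (p q : Fin k × Fin n) => A p.2 q.2 p.1 q.1)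
        (of fun (p q : Fin k × Fin n) => B p.2 q.2 p.1 q.1) * Eright n k h) p q
      = ansatzForm h k (fun a b => X * C (A p.2 q.2 a b) + C (B p.2 q.2 a b)) p.1 q.1 := by
  simp only [mul_apply, Eleft_apply, Eright_apply, pencilM, of_apply, Fintype.sum_prod_type,
    ite_mul, mul_ite, zero_mul, mul_zero, sum_ite_eq, sum_ite_eq', mem_univ, if_true, sum_mul]
  simp only [ansatzForm, ← Fin.sum_univ_eq_sum_range, mul_sum]
  rw [sum_comm]
  exact sum_congr rfl fun _ _ => sum_congr rfl fun _ _ => by ring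

lemma ansatzForm_swap {h k : ℕ} (hh : h < k) {L : ℕ → ℕ → ℝ[X]} (hL : ∀ a b, L a b = L b a)
    (u v : ℕ) : ansatzForm (k - 1 - h) k L u v = ansatzForm h k L v u := by
  unfold ansatzForm
  rw [Nat.sub_sub_self (by omega : h ≤ k - 1)]
  simp only [mul_sum]
  rw [sum_comm]
  refine sum_congr rfl fun a _ => sum_congr rfl fun b _ => ?_
  rw [hL]
  ring

lemma sum_ansatzEntry_zero_mul {h k : ℕ} (hh : h < k) (f : ℕ → ℝ[X]) :
    ∑ a ∈ range k, ansatzEntry h 0 a * f a = ∑ a ∈ range (h + 1), X ^ (h - a) * f a := by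
  rw [← sum_subset (range_subset_range.2 hh) fun a _ ha => by
    rw [mem_range, not_lt] at ha
    simp [ansatzEntry, show ¬a ≤ h by omega, show a ≠ h by omega]]
  refine sum_congr rfl fun a ha => ?_
  simp [ansatzEntry, Nat.lt_succ_iff.1 (mem_range.1 ha)]

lemma sum_ansatzEntry_mul {h u k : ℕ} (hu : u ≠ 0) (huk : h + u < k) (f : ℕ → ℝ[X]) :
    ∑ a ∈ range k, ansatzEntry h u a * f a = f (h + u) := by
  simp [ansatzEntry, hu, huk]

def pencilA (η k : ℕ) (P : ℕ → ℝ) (a b : ℕ) : ℝ :=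
  if a = b ∧ a ≤ η then P (k - 2 * a)
  else if η < a ∧ η < b ∧ a + b ≤ k then -P (k - a - b) else 0

def pencilB (η k : ℕ) (P : ℕ → ℝ) (a b : ℕ) : ℝ :=
  if a = b ∧ a ≤ η then P (k - 1 - 2 * a)
  else if η ≤ a ∧ η ≤ b ∧ 2 * η < a + b ∧ a + b < k then P (k - 1 - a - b) else 0

def pencilPoly (η k : ℕ) (P : ℕ → ℝ) (a b : ℕ) : ℝ[X] :=
  X * C (pencilA η k P a b) + C (pencilB η k P a b)

lemma pencilPoly_comm (η k : ℕ) (P : ℕ → ℝ) (a b : ℕ) :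
    pencilPoly η k P a b = pencilPoly η k P b a := by
  have hA : pencilA η k P a b = pencilA η k P b a := by
    unfold pencilA
    split_ifs <;> first | rfl | (exfalso; omega) | (congr 1; omega) | (congr 2; omega)
  have hB : pencilB η k P a b = pencilB η k P b a := by
    unfold pencilB
    split_ifs <;> first | rfl | (exfalso; omega) | (congr 1; omega)
  rw [pencilPoly, hA, hB, pencilPoly]

section
variable {η ε k : ℕ} (hk : k = ε + η + 1) (P : ℕ → ℝ)
include hk

lemma sum_X_pow_mul_pencilPoly_eq_zero_of_lt {a : ℕ} (ha : η < a) :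
    ∑ b ∈ range (ε + 1), X ^ (ε - b) * pencilPoly η k P a b = 0 := by
  refine sum_X_pow_mul_eq_zero_of_telescope ?_ (fun b hb => ?_) ?_
  · rw [pencilA, if_neg (by omega), if_neg (by omega)]
  · unfold pencilA pencilB
    split_ifs <;> first | (exfalso; omega) | simp
    congr 1
    omega
  · rw [pencilB, if_neg (by omega), if_neg (by omega)]

lemma pencilPoly_of_le {a b : ℕ} (ha : a ≤ η) (hb : b ≤ ε) :
    pencilPoly η k P a b
      = (if a = b then X * C (P (k - 2 * a)) + C (P (k - 1 - 2 * a)) else 0)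
        + if a = η then (if η < b then C (P (ε - b)) else 0) else 0 := by
  unfold pencilPoly pencilA pencilB
  by_cases hab : a = b
  · subst hab
    simp [ha, show ¬η < a by omega]
  · by_cases hoff : a = η ∧ η < b
    · rw [if_neg (by omega), if_neg (by omega), if_neg (by omega), if_pos (by omega),
        if_neg hab, if_pos hoff.1, if_pos hoff.2, show k - 1 - a - b = ε - b by omega]
      simp
    · rw [if_neg (by omega), if_neg (by omega), if_neg (by omega), if_neg (by omega), if_neg hab]
      split_ifs <;> simp_all

variable (hεη : η ≤ ε)
include hεη

lemma pencilPoly_eq_zero_of_lt {a b : ℕ} (hb : ε < b) : pencilPoly η k P a b = 0 := by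
  unfold pencilPoly pencilA pencilB
  rw [if_neg (by omega), if_neg (by omega), if_neg (by omega), if_neg (by omega)]
  simp

lemma sum_X_pow_mul_sum_X_pow_mul_pencilPoly :
    ∑ a ∈ range (η + 1), X ^ (η - a) * ∑ b ∈ range (ε + 1), X ^ (ε - b) * pencilPoly η k P a b
      = ∑ t ∈ range (k + 1), X ^ t * C (P t) := by
  have row : ∀ a ∈ range (η + 1), ∑ b ∈ range (ε + 1), X ^ (ε - b) * pencilPoly η k P a b
      = X ^ (ε - a) * (X * C (P (k - 2 * a)) + C (P (k - 1 - 2 * a)))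
        + if a = η then ∑ t ∈ range (ε - η), X ^ t * C (P t) else 0 := by
    intro a ha
    have ha : a ≤ η := Nat.lt_succ_iff.1 (mem_range.1 ha)
    rw [sum_congr rfl fun b hb => by
      rw [pencilPoly_of_le hk P ha (Nat.lt_succ_iff.1 (mem_range.1 hb))]]
    simp only [mul_add, mul_ite, mul_zero, sum_add_distrib, sum_ite_eq, mem_range,
      show a < ε + 1 by omega, if_true, sum_ite_irrel, sum_const_zero]
    rw [sum_range_succ_ite_lt_reflect fun t => X ^ t * C (P t)]
  have diag : ∑ a ∈ range (η + 1),
      X ^ (η - a) * (X ^ (ε - a) * (X * C (P (k - 2 * a)) + C (P (k - 1 - 2 * a))))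
        = ∑ j ∈ range (2 * (η + 1)), X ^ (ε - η + j) * C (P (ε - η + j)) := by
    rw [← sum_range_reflect, sum_range_two_mul]
    refine sum_congr rfl fun i hi => ?_
    have hi := mem_range.1 hi
    rw [show η - (η + 1 - 1 - i) = i by omega, show ε - (η + 1 - 1 - i) = ε - η + i by omega,
      show k - 2 * (η + 1 - 1 - i) = ε - η + (2 * i + 1) by omega,
      show k - 1 - 2 * (η + 1 - 1 - i) = ε - η + 2 * i by omega]
    ring
  rw [sum_congr rfl fun a ha => by rw [row a ha, mul_add], sum_add_distrib, diag]
  simp only [mul_ite, mul_zero, sum_ite_eq', mem_range, lt_add_one, if_true, Nat.sub_self,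
    pow_zero, one_mul]
  rw [show k + 1 = ε - η + 2 * (η + 1) by omega, sum_range_add, add_comm]

theorem ansatzForm_pencilPoly {u v : ℕ} (hu : u ≤ ε) (hv : v ≤ η) :
    ansatzForm η k (pencilPoly η k P) u v
      = if u = 0 ∧ v = 0 then ∑ t ∈ range (k + 1), X ^ t * C (P t) else 0 := by
  unfold ansatzForm
  rw [show k - 1 - η = ε by omega]
  rcases eq_or_ne v 0 with rfl | hv0
  · rcases eq_or_ne u 0 with rfl | hu0
    · simp only [sum_ansatzEntry_zero_mul (show ε < k by omega),
        sum_ansatzEntry_zero_mul (show η < k by omega), and_self, if_true]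
      exact sum_X_pow_mul_sum_X_pow_mul_pencilPoly hk P hεη
    · rw [sum_ansatzEntry_mul hu0 (by omega), sum_ansatzEntry_zero_mul (by omega),
        if_neg (by tauto)]
      exact sum_X_pow_mul_pencilPoly_eq_zero_of_lt hk P (by omega)
  · rw [if_neg (by tauto)]
    refine sum_eq_zero fun a _ => ?_
    rw [sum_ansatzEntry_mul hv0 (by omega), pencilPoly_eq_zero_of_lt hk P hεη (by omega), mul_zero]

end

end BlockKroneckerAnsatz

open BlockKroneckerAnsatz in
theorem stmt11_general (n k ε η : ℕ) (hk : k = ε + η + 1) (hεη : η ≤ ε)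
    (Pc : ℕ → Matrix (Fin n) (Fin n) ℝ) :
    ∃ Lx Ly : Matrix (Fin k × Fin n) (Fin k × Fin n) ℝ,
      Eleft n k η * pencilM Lx Ly * Eright n k η
        = GRHS n k η 1 (polyOf n n k Pc) ∧
      Eleft n k (k - 1 - η) * pencilM Lx Ly * Eright n k (k - 1 - η)
        = GRHS n k (k - 1 - η) 1 (polyOf n n k Pc) := by
  refine ⟨of fun p q => pencilA η k (fun t => Pc t p.2 q.2) p.1 q.1,
    of fun p q => pencilB η k (fun t => Pc t p.2 q.2) p.1 q.1,
    ext fun ⟨p, r⟩ ⟨q, c⟩ => ?_, ext fun ⟨p, r⟩ ⟨q, c⟩ => ?_⟩ <;>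
    refine (Eleft_mul_pencilM_mul_Eright_apply n k _ (fun r c => pencilA η k fun t => Pc t r c)
      (fun r c => pencilB η k fun t => Pc t r c) (p, r) (q, c)).trans ?_
  · refine (ansatzForm_pencilPoly hk (fun t => Pc t r c) hεη (u := p) (v := q)
      (by omega) (by omega)).trans ?_
    simp [GRHS, polyOf]
  · refine (ansatzForm_swap (by omega) (pencilPoly_comm η k fun t => Pc t r c) p q).trans
      ((ansatzForm_pencilPoly hk (fun t => Pc t r c) hεη (by omega) (by omega)).trans ?_)
    simp [GRHS, polyOf, and_comm]

theorem stmt11 (n k ε η : ℕ) (hk : k = ε + η + 1) (hεη : η ≤ ε)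
    (Pc : ℕ → Matrix (Fin n) (Fin n) ℝ) (hdeg : Pc k ≠ 0) :
    ∃ Lx Ly : Matrix (Fin k × Fin n) (Fin k × Fin n) ℝ,
      Eleft n k η * pencilM Lx Ly * Eright n k η
        = GRHS n k η 1 (polyOf n n k Pc) ∧
      Eleft n k (k - 1 - η) * pencilM Lx Ly * Eright n k (k - 1 - η)
        = GRHS n k (k - 1 - η) 1 (polyOf n n k Pc) :=
  stmt11_general n k ε η hk hεη Pc
end
end

section
/- Let P(λ) = Σ_{i=0}^k P_i λ^i with P_i ∈ ℝ^{n×n} be a matrix polynomial of degree k = ε + η + 1 with η ≤ ε, and let L(λ) be a kn × kn matrix pencil belonging to both G_{η+1}(P) and G_{k−η}(P). Then for every integer i with 1 ≤ i ≤ k − 2η, the pencil L(λ) belongs to G_{η+i}(P); that is, there exists α_i ∈ ℝ with ((Λ_{η+i−1}(λ)^T ⊗ I_n) ⊕ I_{(k−η−i)n})·L(λ)·((Λ_{k−η−i}(λ) ⊗ I_n) ⊕ I_{(η+i−1)n}) = (α_i·P(λ)) ⊕ 0_{(k−η−i)n × (η+i−1)n}. -/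
/-!
Fix a position `(i, j)` inside the `n × n` blocks. Then the pencil becomes a `k × k` array `B` of
polynomials of degree at most one, and membership in `G_{μ+1}` becomes the block equation
`(Λ_μᵀ ⊕ I) B (Λ_ν ⊕ I) = αP_{ij} ⊕ 0` with `μ + ν + 1 = k`.
Membership in `G_{ε+1}` says that `Λ_εᵀ` kills every column `b > η` of `B`. Since the entries are
pencils, comparing coefficients in `Λ_εᵀ B(·, b) = 0` ties the `λ`-coefficient of `B(a, b)` to the
constant term of `B(a - 1, b)`. So once the equation for `G_{m+1}` (`m < ε`) makes the constant
terms of column `k - 1 - m` vanish below row `m`, that column vanishes below row `m + 1`. This is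
exactly what is needed to move from `G_{m+1}` to `G_{m+2}` with the same `α`, after cancelling
powers of `λ`.
-/

open Matrix Polynomial
open scoped Kronecker

noncomputable section

open Finset
open scoped Polynomial

namespace BlockKronecker

section Scalar

variable {R : Type*} [CommSemiring R]

/-- `lamDot μ v = Λ_μ(λ)ᵀ · (v 0, …, v μ)`. -/
def lamDot (μ : ℕ) (v : ℕ → R[X]) : R[X] :=
  ∑ a ∈ range (μ + 1), X ^ (μ - a) * v a

theorem lamDot_zero (v : ℕ → R[X]) : lamDot 0 v = v 0 := by
  simp [lamDot]

theorem lamDot_succ (μ : ℕ) (v : ℕ → R[X]) :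
    lamDot (μ + 1) v = X * lamDot μ v + v (μ + 1) := by
  rw [lamDot, sum_range_succ, Nat.sub_self, pow_zero, one_mul, lamDot, mul_sum]
  congr 1
  refine sum_congr rfl fun a ha => ?_
  rw [show μ + 1 - a = μ - a + 1 by have := mem_range.1 ha; omega, pow_succ', mul_assoc]

theorem lamDot_add (μ : ℕ) (v w : ℕ → R[X]) :
    lamDot μ (fun a => v a + w a) = lamDot μ v + lamDot μ w := by
  simp only [lamDot, mul_add, sum_add_distrib]

theorem lamDot_mul_left (p : R[X]) (μ : ℕ) (v : ℕ → R[X]) :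
    lamDot μ (fun a => p * v a) = p * lamDot μ v := by
  simp only [lamDot, mul_sum, mul_left_comm]

theorem lamDot_eq_X_pow_mul {μ N : ℕ} {v : ℕ → R[X]} (hv : ∀ a, μ < a → v a = 0)
    (h : μ ≤ N) : lamDot N v = X ^ (N - μ) * lamDot μ v := by
  induction N, h using Nat.le_induction with
  | base => simp
  | succ N hN ih =>
    rw [lamDot_succ, ih, hv (N + 1) (by omega), add_zero, ← mul_assoc, ← pow_succ',
      show N + 1 - μ = N - μ + 1 by omega]

theorem coeff_zero_lamDot (μ : ℕ) (v : ℕ → R[X]) : (lamDot μ v).coeff 0 = (v μ).coeff 0 := by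
  cases μ with
  | zero => rw [lamDot_zero]
  | succ μ => simp [lamDot_succ]

theorem coeff_lamDot_of_natDegree_le_one {v : ℕ → R[X]} (hv : ∀ a, (v a).natDegree ≤ 1)
    {a N : ℕ} (h : a + 1 ≤ N) :
    (lamDot N v).coeff (N - a) = (v a).coeff 0 + (v (a + 1)).coeff 1 := by
  induction N, h using Nat.le_induction with
  | base => rw [lamDot_succ, coeff_add, show a + 1 - a = 0 + 1 by omega, coeff_X_mul,
      coeff_zero_lamDot]
  | succ N hN ih =>
    rw [lamDot_succ, coeff_add, show N + 1 - a = N - a + 1 by omega, coeff_X_mul, ih,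
      coeff_eq_zero_of_natDegree_lt ((hv (N + 1)).trans_lt (by omega : 1 < N - a + 1)),
      add_zero]

theorem eq_zero_of_lamDot_eq_zero {v : ℕ → R[X]} (hv : ∀ a, (v a).natDegree ≤ 1) {N m : ℕ}
    (h : lamDot N v = 0) (hconst : ∀ a, m < a → (v a).coeff 0 = 0)
    (hsupp : ∀ a, N < a → v a = 0) {a : ℕ} (ha : m + 1 < a) : v a = 0 := by
  by_cases haN : a ≤ N
  · have hlin : (v a).coeff 1 = 0 := by
      have := coeff_lamDot_of_natDegree_le_one hv (a := a - 1) (N := N) (by omega)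
      rwa [h, coeff_zero, hconst (a - 1) (by omega), zero_add, Nat.sub_add_cancel (by omega),
        eq_comm] at this
    rw [eq_X_add_C_of_natDegree_le_one (hv a), hlin, hconst a (by omega), map_zero, zero_mul,
      add_zero]
  · exact hsupp a (by omega)

/-- The ansatz equation `(Λ_μᵀ ⊕ I) · B · (Λ_ν ⊕ I) = ρ ⊕ 0` for an `ℕ`-indexed matrix `B`,
written block by block. -/
structure AnsatzEqns (μ ν : ℕ) (B : Matrix ℕ ℕ R[X]) (ρ : R[X]) : Prop where
  corner : lamDot ν (fun b => lamDot μ (fun a => B a b)) = ρ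
  topRight : ∀ b, ν < b → lamDot μ (fun a => B a b) = 0
  bottomLeft : ∀ a, μ < a → lamDot ν (B a) = 0
  bottomRight : ∀ a b, μ < a → ν < b → B a b = 0

theorem AnsatzEqns.succ {B : Matrix ℕ ℕ R[X]} (hB : ∀ a b, (B a b).natDegree ≤ 1)
    {η ε m ν : ℕ} {ρ ρ' : R[X]} (hm : m < ε) (hν : η ≤ ν)
    (h : AnsatzEqns m (ν + 1) B ρ) (h' : AnsatzEqns ε η B ρ') : AnsatzEqns (m + 1) ν B ρ := by
  have hcol : ∀ a, m + 1 < a → B a (ν + 1) = 0 := fun a ha =>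
    eq_zero_of_lamDot_eq_zero (fun a => hB a _) (h'.topRight _ (by omega))
      (fun a ha => by rw [← coeff_zero_lamDot, h.bottomLeft a ha, coeff_zero])
      (fun a ha => h'.bottomRight a _ ha (by omega)) ha
  have htop : ∀ b, ν < b → lamDot (m + 1) (fun a => B a b) = 0 := by
    intro b hb
    rcases (Nat.succ_le_of_lt hb).eq_or_lt with rfl | hb
    · have := h'.topRight (ν + 1) (by omega)
      rw [lamDot_eq_X_pow_mul hcol (by omega : m + 1 ≤ ε)] at this
      exact (isRegular_X_pow _).left (this.trans (mul_zero _).symm)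
    · rw [lamDot_succ, h.topRight b hb, h.bottomRight _ _ (by omega) hb, mul_zero, add_zero]
  refine ⟨isRegular_X.left ?_, htop, fun a ha => ?_, fun a b ha hb => ?_⟩
  · have hrow : ∀ b,
        lamDot (m + 1) (fun a => B a b) = X * lamDot m (fun a => B a b) + B (m + 1) b :=
      fun b => lamDot_succ _ _
    calc X * lamDot ν (fun b => lamDot (m + 1) (fun a => B a b))
        = lamDot (ν + 1) (fun b => lamDot (m + 1) (fun a => B a b)) := by
          rw [lamDot_succ, htop (ν + 1) (by omega), add_zero]
      _ = X * ρ := by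
          simp only [hrow]
          rw [lamDot_add, lamDot_mul_left, h.corner, h.bottomLeft (m + 1) (by omega), add_zero]
  · have := h.bottomLeft a (by omega)
    rw [lamDot_succ, hcol a ha, add_zero] at this
    exact isRegular_X.left (this.trans (mul_zero _).symm)
  · rcases (Nat.succ_le_of_lt hb).eq_or_lt with rfl | hb
    · exact hcol a ha
    · exact h.bottomRight a b (by omega) hb

theorem AnsatzEqns.interpolate {B : Matrix ℕ ℕ R[X]} (hB : ∀ a b, (B a b).natDegree ≤ 1)
    {η ε : ℕ} {ρ ρ' : R[X]} (h : AnsatzEqns η ε B ρ) (h' : AnsatzEqns ε η B ρ') {d : ℕ}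
    (hd : η + d ≤ ε) : AnsatzEqns (η + d) (ε - d) B ρ := by
  induction d with
  | zero => simpa using h
  | succ d ih =>
    have := ih (by omega)
    rw [show ε - d = ε - (d + 1) + 1 by omega] at this
    exact this.succ hB (m := η + d) (by omega) (by omega) h'

/-- `lamRowEntry μ r a` is the `(r, a)` entry of `Λ_μ(λ)ᵀ ⊕ I`, and `lamRow μ r v` is row `r` of
that matrix applied to `v`. -/
def lamRowEntry (μ r a : ℕ) : R[X] :=
  if r = 0 ∧ a ≤ μ then X ^ (μ - a) else if a = μ + r then 1 else 0

def lamRow (μ r : ℕ) (v : ℕ → R[X]) : R[X] :=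
  if r = 0 then lamDot μ v else v (μ + r)

theorem lamRow_zero (μ r : ℕ) : lamRow μ r (fun _ => (0 : R[X])) = 0 := by
  simp [lamRow, lamDot]

theorem sum_lamRowEntry_mul {k μ r : ℕ} (h : μ + r < k) (v : ℕ → R[X]) :
    ∑ a : Fin k, lamRowEntry μ r a * v a = lamRow μ r v := by
  rw [Fin.sum_univ_eq_sum_range (fun a => lamRowEntry μ r a * v a), lamRow]
  simp only [lamRowEntry]
  by_cases hr : r = 0
  · subst hr
    rw [if_pos rfl, lamDot, ← sum_subset (range_subset_range.2 (by omega : μ + 1 ≤ k))]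
    · refine sum_congr rfl fun a ha => ?_
      rw [if_pos ⟨rfl, by have := mem_range.1 ha; omega⟩]
    · intro a _ ha
      rw [mem_range] at ha
      rw [if_neg (by omega), if_neg (by omega), zero_mul]
  · simp [hr, h]

theorem ansatzEqns_iff {μ ν : ℕ} {B : Matrix ℕ ℕ R[X]} {ρ : R[X]} :
    AnsatzEqns μ ν B ρ ↔
      ∀ r c,
        lamRow ν c (fun b => lamRow μ r (fun a => B a b)) = if r = 0 ∧ c = 0 then ρ else 0 := by
  constructor
  · intro h r c
    by_cases hr : r = 0 <;> by_cases hc : c = 0 <;> simp only [lamRow, hr, hc, if_true, if_false]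
    · exact h.corner
    · simpa using h.topRight (ν + c) (by omega)
    · simpa using h.bottomLeft (μ + r) (by omega)
    · simpa using h.bottomRight (μ + r) (ν + c) (by omega) (by omega)
  · intro h
    refine ⟨by simpa [lamRow] using h 0 0, fun b hb => ?_, fun a ha => ?_, fun a b ha hb => ?_⟩
    · simpa [lamRow, show b - ν ≠ 0 by omega, Nat.add_sub_cancel' hb.le] using h 0 (b - ν)
    · simpa [lamRow, show a - μ ≠ 0 by omega, Nat.add_sub_cancel' ha.le] using h (a - μ) 0
    · simpa [lamRow, show a - μ ≠ 0 by omega, show b - ν ≠ 0 by omega, Nat.add_sub_cancel' ha.le,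
        Nat.add_sub_cancel' hb.le] using h (a - μ) (b - ν)

end Scalar

section Bridge

variable {n k : ℕ}

/-- The `(i, j)` entries of the `n × n` blocks of `M`, as a `k × k` matrix extended by zero. -/
def blockEntry {α : Type*} [Zero α] (M : Matrix (Fin k × Fin n) (Fin k × Fin n) α) (i j : Fin n) :
    Matrix ℕ ℕ α :=
  Matrix.of fun a b => if h : a < k ∧ b < k then M (⟨a, h.1⟩, i) (⟨b, h.2⟩, j) else 0

@[simp]
theorem blockEntry_coe {α : Type*} [Zero α] (M : Matrix (Fin k × Fin n) (Fin k × Fin n) α)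
    (i j : Fin n) (a b : Fin k) : blockEntry M i j a b = M (a, i) (b, j) := by
  simp [blockEntry]

theorem lamRow_lamRow_blockEntry_eq_zero {μ ν r c : ℕ} (hk : μ + ν + 1 = k)
    (M : Matrix (Fin k × Fin n) (Fin k × Fin n) ℝ[X]) (i j : Fin n) (h : ν < r ∨ μ < c) :
    lamRow ν c (fun b => lamRow μ r (fun a => blockEntry M i j a b)) = 0 := by
  rcases h with hr | hc
  · have hrow : (fun b => lamRow μ r (fun a => blockEntry M i j a b)) = fun _ => 0 := by
      funext b
      simp [lamRow, show r ≠ 0 by omega, blockEntry, show ¬ μ + r < k by omega]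
    rw [hrow, lamRow_zero]
  · simp [lamRow, show c ≠ 0 by omega, blockEntry, show ¬ ν + c < k by omega, lamDot]

theorem Eleft_apply (μ : ℕ) (r : Fin (k - μ)) (i : Fin n) (a : Fin k) (i' : Fin n) :
    Eleft n k μ (r, i) (a, i') = if i = i' then lamRowEntry μ r a else 0 := by
  by_cases h : i = i' <;> simp [Eleft, lamRowEntry, h]

theorem Eright_apply (μ : ℕ) (b : Fin k) (j' : Fin n) (c : Fin (μ + 1)) (j : Fin n) :
    Eright n k μ (b, j') (c, j) = if j' = j then lamRowEntry (k - 1 - μ) c b else 0 := by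
  by_cases h : j' = j <;> simp [Eright, lamRowEntry, h]

theorem Eleft_mul_mul_Eright_apply {μ ν : ℕ} (hk : μ + ν + 1 = k)
    (M : Matrix (Fin k × Fin n) (Fin k × Fin n) ℝ[X]) (r : Fin (k - μ)) (i : Fin n)
    (c : Fin (μ + 1)) (j : Fin n) :
    (Eleft n k μ * M * Eright n k μ) (r, i) (c, j) =
      lamRow ν c (fun b => lamRow μ r (fun a => blockEntry M i j a b)) := by
  simp only [Matrix.mul_apply, Fintype.sum_prod_type, Eleft_apply, Eright_apply, ite_mul,
    mul_ite, zero_mul, mul_zero, sum_ite_eq, sum_ite_eq', mem_univ, if_true,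
    show k - 1 - μ = ν by omega]
  have hrow : ∀ b : Fin k, ∑ a : Fin k, lamRowEntry μ r a * M (a, i) (b, j) =
      lamRow μ r (fun a => blockEntry M i j a b) := fun b => by
    rw [← sum_lamRowEntry_mul (k := k) (by omega)]
    simp only [blockEntry_coe]
  simp only [hrow, mul_comm _ (lamRowEntry ν c _)]
  exact sum_lamRowEntry_mul (by omega) fun b => lamRow μ r fun a => blockEntry M i j a b

theorem Eleft_mul_mul_Eright_eq_GRHS_iff {μ ν : ℕ} (hk : μ + ν + 1 = k)
    (M : Matrix (Fin k × Fin n) (Fin k × Fin n) ℝ[X]) (α : ℝ) (P : Matrix (Fin n) (Fin n) ℝ[X]) :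
    Eleft n k μ * M * Eright n k μ = GRHS n k μ α P ↔
      ∀ i j, AnsatzEqns μ ν (blockEntry M i j) (C α * P i j) := by
  simp only [ansatzEqns_iff]
  constructor
  · intro h i j r c
    by_cases hrc : r < k - μ ∧ c < μ + 1
    · have := congr_fun₂ h (⟨r, hrc.1⟩, i) (⟨c, hrc.2⟩, j)
      rw [Eleft_mul_mul_Eright_apply hk] at this
      simpa [GRHS] using this
    · rw [lamRow_lamRow_blockEntry_eq_zero hk M i j (by omega), if_neg (by omega)]
  · intro h
    ext ⟨r, i⟩ ⟨c, j⟩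
    rw [Eleft_mul_mul_Eright_apply hk, h i j]
    simp [GRHS]

theorem natDegree_blockEntry_pencilM_le (Lx Ly : Matrix (Fin k × Fin n) (Fin k × Fin n) ℝ)
    (i j : Fin n) (a b : ℕ) : (blockEntry (pencilM Lx Ly) i j a b).natDegree ≤ 1 := by
  simp only [blockEntry, pencilM, of_apply]
  split_ifs
  · compute_degree
  · simp

end Bridge

end BlockKronecker

open BlockKronecker

theorem stmt13_general (n k ε η : ℕ) (hk : k = ε + η + 1)
    (Pc : ℕ → Matrix (Fin n) (Fin n) ℝ)
    (Lx Ly : Matrix (Fin k × Fin n) (Fin k × Fin n) ℝ)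
    (h₁ : memG n k η Pc (Lx, Ly)) (h₂ : memG n k (k - 1 - η) Pc (Lx, Ly)) :
    ∀ i : ℕ, 1 ≤ i → i ≤ k - 2 * η →
      ∃ α : ℝ,
        Eleft n k (η + i - 1) * pencilM Lx Ly * Eright n k (η + i - 1)
          = GRHS n k (η + i - 1) α (polyOf n n k Pc) := by
  intro i hi₁ hi₂
  obtain ⟨α, hα⟩ := h₁
  obtain ⟨α', hα'⟩ := h₂
  have h := (Eleft_mul_mul_Eright_eq_GRHS_iff (ν := ε) (by omega) _ _ _).1 hα
  have h' := (Eleft_mul_mul_Eright_eq_GRHS_iff (ν := η) (by omega) _ _ _).1 hα'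
  refine ⟨α, (Eleft_mul_mul_Eright_eq_GRHS_iff (ν := ε - (i - 1)) (by omega) _ _ _).2 fun a b => ?_⟩
  rw [show k - 1 - η = ε by omega] at h'
  rw [show η + i - 1 = η + (i - 1) by omega]
  exact (h a b).interpolate (natDegree_blockEntry_pencilM_le Lx Ly a b) (h' a b) (by omega)

theorem stmt13 (n k ε η : ℕ) (hk : k = ε + η + 1) (hεη : η ≤ ε)
    (Pc : ℕ → Matrix (Fin n) (Fin n) ℝ) (hdeg : Pc k ≠ 0)
    (Lx Ly : Matrix (Fin k × Fin n) (Fin k × Fin n) ℝ)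
    (h₁ : memG n k η Pc (Lx, Ly)) (h₂ : memG n k (k - 1 - η) Pc (Lx, Ly)) :
    ∀ i : ℕ, 1 ≤ i → i ≤ k - 2 * η →
      ∃ α : ℝ,
        Eleft n k (η + i - 1) * pencilM Lx Ly * Eright n k (η + i - 1)
          = GRHS n k (η + i - 1) α (polyOf n n k Pc) :=
  stmt13_general n k ε η hk Pc Lx Ly h₁ h₂

end
end

section
/- Let P(λ) = Σ_{i=0}^k P_i λ^i with P_i ∈ ℝ^{n×n} (n ≥ 1) be a matrix polynomial of degree k ≥ 2, and for 1 ≤ j ≤ ⌈k/2⌉ set DG_j(P) := G_j(P) ∩ G_{k−j+1}(P). Then DG_1(P) ⊊ DG_2(P) ⊊ … ⊊ DG_{⌈k/2⌉}(P), i.e. for every j with 1 ≤ j < ⌈k/2⌉ the inclusion DG_j(P) ⊆ DG_{j+1}(P) holds and is strict. -/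
open Matrix Polynomial
open scoped Kronecker

noncomputable section

open Finset

/-!
Read on a scalar slice `(a, b) ↦ (A, B)_{(a,i),(b,i')}` of the pencil `λA + B`, membership in
`G_{η+1}` says, once the products with `Λ` are telescoped: `A` and `B` vanish on rows `> η` ×
columns `≥ k - η`; `A_{x,0} = 0` and `B_{x,y} = -A_{x,y+1}` on rows `x > η`; `A_{0,y} = 0` and
`B_{x,y} = -A_{x+1,y}` on columns `y ≥ k - η`; and the corner sum
`∑_{a ≤ η, b < k - η} λ^{k-1-a-b} L_{ab}` equals `α P`.

If `L ∈ G_{e₀+1} ∩ G_{e₂+1}` and `e₀ ≤ e₁ ≤ e₂`, the row conditions for `e₁` are those for `e₀`,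
the column conditions those for `e₂`, and the zero block follows by chasing the two recurrences
along anti-diagonals. Moving the corner from `η` to `η + 1` trades a column sum for a row sum,
and both telescope to `-A_{η+1,k-1-η}`, so the corner sum, hence `α`, does not change.

For strictness, `(λ e₁e_{j+1}ᵀ - e₁e_jᵀ) ⊗ E₁₁` satisfies all conditions with `α = 0` exactly
when `η + j < k`.
-/

section Telescoping

variable {R : Type*} [CommRing R]

theorem X_mul_add_C_eq_C_iff {p : R[X]} {c t : R} : X * p + C c = C t ↔ p = 0 ∧ c = t := by
  refine ⟨fun h => ?_, fun ⟨hp, hc⟩ => by simp [hp, hc]⟩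
  obtain rfl : c = t := by simpa using congrArg (coeff · 0) h
  exact ⟨isRegular_X.left (by simpa using h), rfl⟩

theorem sum_X_pow_mul_eq_C_iff (f g : ℕ → R) (m : ℕ) (t : R) :
    ∑ b ∈ range (m + 1), X ^ (m - b) * (X * C (f b) + C (g b)) = C t ↔
      f 0 = 0 ∧ (∀ y < m, g y = -f (y + 1)) ∧ g m = t := by
  induction m generalizing t with
  | zero =>
    rw [zero_add, sum_range_one, Nat.sub_self, pow_zero, one_mul, X_mul_add_C_eq_C_iff, C_eq_zero]
    simp
  | succ m ih =>
    have hsplit : ∑ b ∈ range (m + 2), X ^ (m + 1 - b) * (X * C (f b) + C (g b)) =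
        X * (∑ b ∈ range (m + 1), X ^ (m - b) * (X * C (f b) + C (g b)) + C (f (m + 1)))
          + C (g (m + 1)) := by
      rw [sum_range_succ, Nat.sub_self, pow_zero, one_mul, mul_add X, mul_sum,
        sum_congr rfl fun b hb => by
          rw [Nat.sub_add_comm (Nat.lt_succ_iff.mp (mem_range.mp hb)), pow_succ', mul_assoc]]
      ring
    rw [hsplit, X_mul_add_C_eq_C_iff, add_eq_zero_iff_eq_neg, ← map_neg, ih]
    simp only [Nat.lt_succ_iff_lt_or_eq, or_imp, forall_and, forall_eq]
    tauto

theorem sum_X_pow_mul_eq_neg_C {f g : ℕ → R} (hf : f 0 = 0) (hg : ∀ y, g y = -f (y + 1))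
    (m : ℕ) : ∑ b ∈ range (m + 1), X ^ (m - b) * (X * C (f b) + C (g b)) = -C (f (m + 1)) := by
  rw [← map_neg, sum_X_pow_mul_eq_C_iff]
  exact ⟨hf, fun y _ => hg y, hg m⟩

theorem sum_X_pow_mul_eq_zero_iff {f g : ℕ → R} {m : ℕ} (hz : ∀ y, m < y → f y = 0 ∧ g y = 0) :
    ∑ b ∈ range (m + 1), X ^ (m - b) * (X * C (f b) + C (g b)) = 0 ↔
      f 0 = 0 ∧ ∀ y, g y = -f (y + 1) := by
  rw [← C_0, sum_X_pow_mul_eq_C_iff]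
  refine ⟨fun ⟨hf, hlt, hm⟩ => ⟨hf, fun y => ?_⟩, fun ⟨hf, hg⟩ => ⟨hf, fun y _ => hg y, ?_⟩⟩
  · rcases lt_trichotomy y m with hy | rfl | hy
    · exact hlt y hy
    · rw [hm, (hz _ (by omega)).1, neg_zero]
    · rw [(hz y hy).2, (hz _ (by omega)).1, neg_zero]
  · rw [hg, (hz _ (by omega)).1, neg_zero]

end Telescoping

section Slice

variable {R : Type*} [CommRing R] (k η : ℕ)

def cornerSum (f g : ℕ → ℕ → R) : R[X] :=
  ∑ a ∈ range (η + 1), ∑ b ∈ range (k - η),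
    X ^ (k - 1 - (a + b)) * (X * C (f a b) + C (g a b))

/-- The ansatz equation for `G_{η+1}` on one scalar slice `f`, `g` of `λA + B`, with the
annihilation by `Λ` already telescoped. -/
structure IsAnsatzSlice (f g : ℕ → ℕ → R) (p : R[X]) : Prop where
  zero_block : ∀ x y, η < x → k - η ≤ y → f x y = 0 ∧ g x y = 0
  row : ∀ x, η < x → f x 0 = 0 ∧ ∀ y, g x y = -f x (y + 1)
  col : ∀ y, k - η ≤ y → f 0 y = 0 ∧ ∀ x, g x y = -f (x + 1) y
  corner : cornerSum k η f g = p

variable {k η} {f g : ℕ → ℕ → R}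

theorem cornerSum_succ (hη : η + 2 ≤ k)
    (hrow : f (η + 1) 0 = 0 ∧ ∀ y, g (η + 1) y = -f (η + 1) (y + 1))
    (hcol : f 0 (k - 1 - η) = 0 ∧ ∀ x, g x (k - 1 - η) = -f (x + 1) (k - 1 - η)) :
    cornerSum k (η + 1) f g = cornerSum k η f g := by
  obtain ⟨m, rfl⟩ : ∃ m, k = η + m + 2 := ⟨k - η - 2, by omega⟩
  have hlast_row : ∑ b ∈ range (m + 1),
      X ^ (η + m + 2 - 1 - (η + 1 + b)) * (X * C (f (η + 1) b) + C (g (η + 1) b)) =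
        -C (f (η + 1) (m + 1)) := by
    rw [← sum_X_pow_mul_eq_neg_C hrow.1 hrow.2 m]
    exact sum_congr rfl fun b _ => by congr 2; omega
  have hlast_col : ∑ a ∈ range (η + 1),
      X ^ (η + m + 2 - 1 - (a + (m + 1))) * (X * C (f a (m + 1)) + C (g a (m + 1))) =
        -C (f (η + 1) (m + 1)) := by
    rw [show η + m + 2 - 1 - η = m + 1 by omega] at hcol
    rw [← sum_X_pow_mul_eq_neg_C (f := fun a => f a (m + 1)) (g := fun a => g a (m + 1))
      hcol.1 hcol.2 η]
    exact sum_congr rfl fun a _ => by congr 2; omega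
  unfold cornerSum
  rw [show η + m + 2 - (η + 1) = m + 1 by omega, show η + m + 2 - η = m + 1 + 1 by omega,
    sum_range_succ _ (η + 1), hlast_row]
  simp_rw [sum_range_succ _ (m + 1)]
  rw [sum_add_distrib, hlast_col]

theorem IsAnsatzSlice.eq_zero_of_lt_add {e0 e2 x y : ℕ} {p q : R[X]}
    (h0 : IsAnsatzSlice k e0 f g p) (h2 : IsAnsatzSlice k e2 f g q) (hx : e0 < x)
    (hy : k - e2 ≤ y) (hxy : k < x + y) : f x y = 0 := by
  obtain ⟨d, rfl⟩ : ∃ d, x = e0 + 1 + d := ⟨x - e0 - 1, by omega⟩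
  induction d generalizing y with
  | zero => exact (h0.zero_block _ y hx (by omega)).1
  | succ d ih =>
    rw [← add_assoc, ← neg_eq_zero, ← (h2.col y hy).2, (h0.row _ (by omega)).2,
      ih (by omega) (by omega) (by omega), neg_zero]

theorem IsAnsatzSlice.of_le_of_le {e0 e1 e2 : ℕ} {p q : R[X]} (h0 : IsAnsatzSlice k e0 f g p)
    (h2 : IsAnsatzSlice k e2 f g q) (h01 : e0 ≤ e1) (h12 : e1 ≤ e2) (h2k : e2 < k) :
    IsAnsatzSlice k e1 f g p where
  zero_block x y hx hy := by
    have hf : ∀ y, k - e1 ≤ y → f x y = 0 := fun y hy =>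
      h0.eq_zero_of_lt_add h2 (by omega) (by omega) (by omega)
    exact ⟨hf y hy, by rw [(h0.row x (by omega)).2, hf (y + 1) (by omega), neg_zero]⟩
  row x hx := h0.row x (by omega)
  col y hy := h2.col y (by omega)
  corner := by
    induction e1, h01 using Nat.le_induction with
    | base => exact h0.corner
    | succ η hη ih =>
      rw [cornerSum_succ (by omega) (h0.row _ (by omega)) (h2.col _ (by omega)), ih (by omega)]

theorem isAnsatzSlice_shift {j : ℕ} (c : R) (hj : 0 < j) (h : η + j < k) :
    IsAnsatzSlice k η (fun a b => if a = 0 ∧ b = j then c else 0)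
      (fun a b => if a = 0 ∧ b + 1 = j then -c else 0) 0 where
  zero_block x y hx _ := by simp [show x ≠ 0 by omega]
  row x hx := by simp [show x ≠ 0 by omega]
  col y hy := by simp [show y ≠ j by omega, show y + 1 ≠ j by omega]
  corner := by
    have hrow := sum_X_pow_mul_eq_neg_C (f := fun b => if b = j then c else 0)
      (g := fun b => if b + 1 = j then -c else 0) (by simp [hj.ne]) (fun y => by split_ifs <;> simp)
      (k - 1 - η)
    rw [if_neg (by omega), C_0, neg_zero] at hrow
    rw [cornerSum, sum_eq_single 0 (fun a _ ha => sum_eq_zero fun b _ => by simp [ha]) (by simp),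
      show k - η = k - 1 - η + 1 by omega, ← mul_zero (X ^ η), ← hrow, mul_sum]
    refine sum_congr rfl fun b hb => ?_
    rw [mem_range] at hb
    simp only [true_and, ← mul_assoc, ← pow_add]
    congr 2
    omega

theorem not_isAnsatzSlice_shift {j : ℕ} {c : R} (hc : c ≠ 0) (h : k ≤ η + j) (p : R[X]) :
    ¬ IsAnsatzSlice k η (fun a b => if a = 0 ∧ b = j then c else 0)
      (fun a b => if a = 0 ∧ b + 1 = j then -c else 0) p :=
  fun hs => hc (by simpa using (hs.col j (by omega)).1)

end Slice

section Entries

variable {R : Type*} [CommRing R]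

/-- Entry `(r, a)` of `Λ_d(λ)ᵀ ⊕ I`: the scalar factor of `Eleft` (and, transposed, of `Eright`). -/
def lamCoeff (d r a : ℕ) : R[X] :=
  if r = 0 then (if a ≤ d then X ^ (d - a) else 0) else if a = d + r then 1 else 0

theorem sum_lamCoeff_mul_of_ne_zero {d r K : ℕ} (hr : r ≠ 0) (h : d + r < K) (φ : ℕ → R[X]) :
    ∑ a ∈ range K, lamCoeff d r a * φ a = φ (d + r) := by
  simp [lamCoeff, hr, h]

theorem sum_lamCoeff_zero_mul {d K : ℕ} (h : d < K) (φ : ℕ → R[X]) :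
    ∑ a ∈ range K, lamCoeff d 0 a * φ a = ∑ a ∈ range (d + 1), X ^ (d - a) * φ a := by
  simp only [lamCoeff, if_true, ite_mul, zero_mul]
  rw [← sum_filter]
  congr 1
  ext a
  simp only [mem_filter, mem_range]
  omega

variable (k η : ℕ) (f g : ℕ → ℕ → R)

def ansatzEntry (r c : ℕ) : R[X] :=
  ∑ a ∈ range k, lamCoeff η r a *
    ∑ b ∈ range k, lamCoeff (k - 1 - η) c b * (X * C (f a b) + C (g a b))

variable {k η f g}

theorem ansatzEntry_zero_zero (hη : η < k) : ansatzEntry k η f g 0 0 = cornerSum k η f g := by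
  rw [ansatzEntry, sum_lamCoeff_zero_mul hη, cornerSum, show k - η = k - 1 - η + 1 by omega]
  refine sum_congr rfl fun a ha => ?_
  rw [sum_lamCoeff_zero_mul (d := k - 1 - η) (by omega), mul_sum]
  refine sum_congr rfl fun b hb => ?_
  rw [mem_range] at ha hb
  rw [← mul_assoc, ← pow_add]
  congr 2
  omega

theorem ansatzEntry_zero_col (hη : η < k) {y : ℕ} (hy : k - η ≤ y) (hyk : y < k) :
    ansatzEntry k η f g 0 (y - (k - 1 - η)) =
      ∑ a ∈ range (η + 1), X ^ (η - a) * (X * C (f a y) + C (g a y)) := by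
  rw [ansatzEntry, sum_lamCoeff_zero_mul hη]
  refine sum_congr rfl fun a _ => ?_
  rw [sum_lamCoeff_mul_of_ne_zero (r := y - (k - 1 - η)) (by omega) (by omega),
    show k - 1 - η + (y - (k - 1 - η)) = y by omega]

theorem ansatzEntry_row_zero {x : ℕ} (hx : η < x) (hxk : x < k) :
    ansatzEntry k η f g (x - η) 0 =
      ∑ b ∈ range (k - 1 - η + 1), X ^ (k - 1 - η - b) * (X * C (f x b) + C (g x b)) := by
  rw [ansatzEntry, sum_lamCoeff_mul_of_ne_zero (r := x - η) (by omega) (by omega),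
    show η + (x - η) = x by omega, sum_lamCoeff_zero_mul (d := k - 1 - η) (by omega)]

theorem ansatzEntry_row_col {x y : ℕ} (hx : η < x) (hxk : x < k) (hy : k - η ≤ y) (hyk : y < k) :
    ansatzEntry k η f g (x - η) (y - (k - 1 - η)) = X * C (f x y) + C (g x y) := by
  rw [ansatzEntry, sum_lamCoeff_mul_of_ne_zero (r := x - η) (by omega) (by omega),
    show η + (x - η) = x by omega,
    sum_lamCoeff_mul_of_ne_zero (r := y - (k - 1 - η)) (by omega) (by omega),
    show k - 1 - η + (y - (k - 1 - η)) = y by omega]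

theorem IsAnsatzSlice.ansatzEntry_eq (hη : η < k) {p : R[X]} (h : IsAnsatzSlice k η f g p)
    {r c : ℕ} (hr : r < k - η) (hc : c < η + 1) :
    ansatzEntry k η f g r c = if r = 0 ∧ c = 0 then p else 0 := by
  obtain rfl | hr0 := eq_or_ne r 0 <;> obtain rfl | hc0 := eq_or_ne c 0
  · rw [ansatzEntry_zero_zero hη, h.corner, if_pos ⟨rfl, rfl⟩]
  · have hy := ansatzEntry_zero_col (f := f) (g := g) hη
      (show k - η ≤ k - 1 - η + c by omega) (show k - 1 - η + c < k by omega)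
    rw [Nat.add_sub_cancel_left] at hy
    rw [hy, if_neg (by omega), sum_X_pow_mul_eq_zero_iff (f := fun a => f a _)
      (g := fun a => g a _) fun a ha => h.zero_block a _ ha (by omega)]
    exact h.col _ (by omega)
  · have hx := ansatzEntry_row_zero (f := f) (g := g)
      (show η < η + r by omega) (show η + r < k by omega)
    rw [Nat.add_sub_cancel_left] at hx
    rw [hx, if_neg (by omega), sum_X_pow_mul_eq_zero_iff (m := k - 1 - η)
      fun b hb => h.zero_block _ b (by omega) (by omega)]
    exact h.row _ (by omega)
  · have hxy := ansatzEntry_row_col (f := f) (g := g) (show η < η + r by omega)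
      (show η + r < k by omega) (show k - η ≤ k - 1 - η + c by omega)
      (show k - 1 - η + c < k by omega)
    rw [Nat.add_sub_cancel_left, Nat.add_sub_cancel_left] at hxy
    obtain ⟨hf, hg⟩ := h.zero_block (η + r) (k - 1 - η + c) (by omega) (by omega)
    rw [hxy, hf, hg, if_neg (by omega)]
    simp

theorem isAnsatzSlice_of_ansatzEntry_eq (hη : η < k)
    (hout : ∀ a b, k ≤ a ∨ k ≤ b → f a b = 0 ∧ g a b = 0) {p : R[X]}
    (H : ∀ r < k - η, ∀ c < η + 1, ansatzEntry k η f g r c = if r = 0 ∧ c = 0 then p else 0) :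
    IsAnsatzSlice k η f g p := by
  have hblock : ∀ x y, η < x → k - η ≤ y → f x y = 0 ∧ g x y = 0 := by
    intro x y hx hy
    by_cases hk : x < k ∧ y < k
    · have hxy := H (x - η) (by omega) (y - (k - 1 - η)) (by omega)
      rwa [ansatzEntry_row_col hx hk.1 hy hk.2, if_neg (by omega), ← C_0,
        X_mul_add_C_eq_C_iff, C_eq_zero] at hxy
    · exact hout x y (by omega)
  refine ⟨hblock, fun x hx => ?_, fun y hy => ?_, ?_⟩
  · by_cases hxk : x < k
    · rw [← sum_X_pow_mul_eq_zero_iff (m := k - 1 - η) fun y hy => hblock x y hx (by omega),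
        ← ansatzEntry_row_zero hx hxk]
      simpa [show x - η ≠ 0 by omega] using H (x - η) (by omega) 0 (by omega)
    · refine ⟨(hout x 0 (by omega)).1, fun y => ?_⟩
      rw [(hout x y (by omega)).2, (hout x (y + 1) (by omega)).1, neg_zero]
  · by_cases hyk : y < k
    · rw [← sum_X_pow_mul_eq_zero_iff (f := fun a => f a y) (g := fun a => g a y)
        fun x hx => hblock x y hx hy, ← ansatzEntry_zero_col hη hy hyk]
      simpa [show y - (k - 1 - η) ≠ 0 by omega] using
        H 0 (by omega) (y - (k - 1 - η)) (by omega)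
    · refine ⟨(hout 0 y (by omega)).1, fun x => ?_⟩
      rw [(hout x y (by omega)).2, (hout (x + 1) y (by omega)).1, neg_zero]
  · simpa [ansatzEntry_zero_zero hη] using H 0 (by omega) 0 (by omega)

theorem isAnsatzSlice_iff (hη : η < k)
    (hout : ∀ a b, k ≤ a ∨ k ≤ b → f a b = 0 ∧ g a b = 0) {p : R[X]} :
    IsAnsatzSlice k η f g p ↔
      ∀ r < k - η, ∀ c < η + 1, ansatzEntry k η f g r c = if r = 0 ∧ c = 0 then p else 0 :=
  ⟨fun h _ hr _ hc => h.ansatzEntry_eq hη hr hc, isAnsatzSlice_of_ansatzEntry_eq hη hout⟩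

end Entries

section Ansatz

variable {n k η : ℕ}

def blockEntry {R : Type*} [Zero R] (A : Matrix (Fin k × Fin n) (Fin k × Fin n) R)
    (i i' : Fin n) (a b : ℕ) : R :=
  if h : a < k ∧ b < k then A (⟨a, h.1⟩, i) (⟨b, h.2⟩, i') else 0

theorem blockEntry_eq_zero {R : Type*} [Zero R] (A : Matrix (Fin k × Fin n) (Fin k × Fin n) R)
    (i i' : Fin n) {a b : ℕ} (h : k ≤ a ∨ k ≤ b) : blockEntry A i i' a b = 0 :=
  dif_neg (by omega)

theorem Eleft_apply (p : Fin (k - η) × Fin n) (a : Fin k) (i : Fin n) :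
    Eleft n k η p (a, i) = if p.2 = i then lamCoeff η p.1 a else 0 := by
  unfold Eleft lamCoeff
  by_cases h : p.2 = i <;> simp only [of_apply, h, true_and, false_and, if_false]
  split_ifs <;> first | rfl | omega

theorem Eright_apply (q : Fin (η + 1) × Fin n) (b : Fin k) (i : Fin n) :
    Eright n k η (b, i) q = if i = q.2 then lamCoeff (k - 1 - η) q.1 b else 0 := by
  unfold Eright lamCoeff
  by_cases h : i = q.2 <;> simp only [of_apply, h, true_and, false_and, if_false]
  split_ifs <;> first | rfl | omega

theorem pencilM_apply (A B : Matrix (Fin k × Fin n) (Fin k × Fin n) ℝ) (a b : Fin k)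
    (i i' : Fin n) :
    pencilM A B (a, i) (b, i') = X * C (blockEntry A i i' a b) + C (blockEntry B i i' a b) := by
  simp [pencilM, blockEntry]

theorem Eleft_mul_pencilM_mul_Eright_apply (A B : Matrix (Fin k × Fin n) (Fin k × Fin n) ℝ)
    (p : Fin (k - η) × Fin n) (q : Fin (η + 1) × Fin n) :
    (Eleft n k η * pencilM A B * Eright n k η) p q =
      ansatzEntry k η (blockEntry A p.2 q.2) (blockEntry B p.2 q.2) p.1 q.1 := by
  simp only [mul_apply, Fintype.sum_prod_type, Eleft_apply, Eright_apply, ite_mul, mul_ite,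
    zero_mul, mul_zero, sum_ite_eq, mem_univ, if_true, pencilM_apply, sum_mul]
  rw [sum_congr rfl fun b _ => Fintype.sum_eq_single q.2 fun i hi => by simp [hi], sum_comm]
  simp only [if_true, ansatzEntry, mul_sum, ← Fin.sum_univ_eq_sum_range (fun b => _) k]
  exact sum_congr rfl fun a _ => sum_congr rfl fun b _ => by ring

theorem memG_iff (hη : η < k) (Pc : ℕ → Matrix (Fin n) (Fin n) ℝ)
    (L : Matrix (Fin k × Fin n) (Fin k × Fin n) ℝ × Matrix (Fin k × Fin n) (Fin k × Fin n) ℝ) :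
    memG n k η Pc L ↔ ∃ α : ℝ, ∀ i i', IsAnsatzSlice k η (blockEntry L.1 i i')
      (blockEntry L.2 i i') (C α * polyOf n n k Pc i i') := by
  refine exists_congr fun α => ?_
  simp only [← Matrix.ext_iff, Prod.forall, Eleft_mul_pencilM_mul_Eright_apply, GRHS, of_apply,
    isAnsatzSlice_iff hη fun a b h => ⟨blockEntry_eq_zero _ _ _ h, blockEntry_eq_zero _ _ _ h⟩]
  exact ⟨fun h i i' r hr c hc => h ⟨r, hr⟩ i ⟨c, hc⟩ i', fun h r i c i' => h i i' r r.2 c c.2⟩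

/-- The pencil `(λ e₁e_{j+1}ᵀ - e₁e_jᵀ) ⊗ E_{i₀i₀}` (block indices counted from `0`). -/
def shiftPencil (j : ℕ) (i₀ : Fin n) :
    Matrix (Fin k × Fin n) (Fin k × Fin n) ℝ × Matrix (Fin k × Fin n) (Fin k × Fin n) ℝ :=
  (Matrix.of fun p q => if (p.1 : ℕ) = 0 ∧ (q.1 : ℕ) = j ∧ p.2 = i₀ ∧ q.2 = i₀ then 1 else 0,
    Matrix.of fun p q => if (p.1 : ℕ) = 0 ∧ (q.1 : ℕ) + 1 = j ∧ p.2 = i₀ ∧ q.2 = i₀ then -1 else 0)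

theorem blockEntry_shiftPencil {j : ℕ} (hj : j < k) (i₀ i i' : Fin n) :
    blockEntry (shiftPencil (k := k) j i₀).1 i i' =
        (fun a b => if a = 0 ∧ b = j then (if i = i₀ ∧ i' = i₀ then 1 else 0) else 0) ∧
      blockEntry (shiftPencil (k := k) j i₀).2 i i' =
        (fun a b => if a = 0 ∧ b + 1 = j then -(if i = i₀ ∧ i' = i₀ then 1 else 0) else 0) := by
  constructor <;> funext a b <;> unfold blockEntry shiftPencil <;> split_ifs <;> simp_all
  omega

theorem memG_shiftPencil_iff {η j : ℕ} (Pc : ℕ → Matrix (Fin n) (Fin n) ℝ) (i₀ : Fin n)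
    (hj : 0 < j) (hjk : j < k) (hη : η < k) :
    memG n k η Pc (shiftPencil j i₀) ↔ η + j < k := by
  simp only [memG_iff hη, blockEntry_shiftPencil hjk]
  refine ⟨fun ⟨_, h⟩ => not_le.1 fun hle => ?_, fun h => ⟨0, fun i i' => ?_⟩⟩
  · exact not_isAnsatzSlice_shift one_ne_zero hle _ (by simpa using h i₀ i₀)
  · simpa using isAnsatzSlice_shift _ hj h

theorem memG_of_le_of_le {e0 e1 e2 : ℕ} {Pc : ℕ → Matrix (Fin n) (Fin n) ℝ}
    {L : Matrix (Fin k × Fin n) (Fin k × Fin n) ℝ × Matrix (Fin k × Fin n) (Fin k × Fin n) ℝ}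
    (h0 : memG n k e0 Pc L) (h2 : memG n k e2 Pc L) (h01 : e0 ≤ e1) (h12 : e1 ≤ e2)
    (h2k : e2 < k) : memG n k e1 Pc L := by
  rw [memG_iff (by omega)] at h0 h2 ⊢
  obtain ⟨α, h0⟩ := h0
  obtain ⟨_, h2⟩ := h2
  exact ⟨α, fun i i' => (h0 i i').of_le_of_le (h2 i i') h01 h12 h2k⟩

end Ansatz

theorem stmt14_general (n k : ℕ) (hn : 1 ≤ n)
    (Pc : ℕ → Matrix (Fin n) (Fin n) ℝ) :
    ∀ j : ℕ, 1 ≤ j → j < (k + 1) / 2 →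
      {p : Matrix (Fin k × Fin n) (Fin k × Fin n) ℝ ×
          Matrix (Fin k × Fin n) (Fin k × Fin n) ℝ |
          memG n k (j - 1) Pc p ∧ memG n k (k - j) Pc p} ⊂
        {p | memG n k j Pc p ∧ memG n k (k - (j + 1)) Pc p} := by
  intro j hj hjk
  have hk : 2 * j + 1 ≤ k := by omega
  have hshift (η : ℕ) (hη : η < k) := memG_shiftPencil_iff (η := η) Pc ⟨0, hn⟩ hj (by omega) hη
  refine (Set.ssubset_iff_of_subset ?_).2 ⟨shiftPencil j ⟨0, hn⟩, ?_, ?_⟩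
  · rintro L ⟨h0, h2⟩
    exact ⟨memG_of_le_of_le (e1 := j) h0 h2 (by omega) (by omega) (by omega),
      memG_of_le_of_le (e1 := k - (j + 1)) h0 h2 (by omega) (by omega) (by omega)⟩
  · exact ⟨(hshift j (by omega)).2 (by omega), (hshift (k - (j + 1)) (by omega)).2 (by omega)⟩
  · rintro ⟨-, h⟩
    exact absurd ((hshift (k - j) (by omega)).1 h) (by omega)

theorem stmt14 (n k : ℕ) (hn : 1 ≤ n) (hk : 2 ≤ k)
    (Pc : ℕ → Matrix (Fin n) (Fin n) ℝ) (hdeg : Pc k ≠ 0) :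
    ∀ j : ℕ, 1 ≤ j → j < (k + 1) / 2 →
      {p : Matrix (Fin k × Fin n) (Fin k × Fin n) ℝ ×
          Matrix (Fin k × Fin n) (Fin k × Fin n) ℝ |
          memG n k (j - 1) Pc p ∧ memG n k (k - j) Pc p} ⊂
        {p | memG n k j Pc p ∧ memG n k (k - (j + 1)) Pc p} :=
  stmt14_general n k hn Pc
end
end
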